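/- arXiv:math/0606351 — 8 statements merged into one kernel-verified Lean document; each statement's English description precedes it below -/
import Mathlib

section
/- Let f : I → I be a continuous map on a compact interval. If y is a periodic point of f^n with least period k, then y is a periodic point of f with least period kn/s for some positive integer s that divides n and is relatively prime to k. -/
/-- If y is a periodic point of f^n with least period k, then y is a periodic
point of f with least period k*n/s for some s dividing n and coprime to k. -/
theorem stmt_1 (a b : ℝ) (hab : a ≤ b) (f : ℝ → ℝ)
    (hf : ContinuousOn f (Set.Icc a b))
    (hmaps : Set.MapsTo f (Set.Icc a b) (Set.Icc a b))
    (y : ℝ) (hy : y ∈ Set.Icc a b) (k n : ℕ) (hk : 0 < k) (hn : 0 < n)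
    (hper : (f^[n])^[k] y = y ∧ ∀ i, 0 < i → i < k → (f^[n])^[i] y ≠ y) :
    ∃ s : ℕ, 0 < s ∧ s ∣ n ∧ Nat.Coprime s k ∧
      (f^[k * n / s] y = y ∧ ∀ i, 0 < i → i < k * n / s → f^[i] y ≠ y) := by
  obtain ⟨hper1, hper2⟩ := hper
  have hpt : Function.IsPeriodicPt (f^[n]) k y := hper1
  have hk' : Function.minimalPeriod (f^[n]) y = k := by
    have hd : Function.minimalPeriod (f^[n]) y ∣ k := hpt.minimalPeriod_dvd
    have hpos : 0 < Function.minimalPeriod (f^[n]) y := hpt.minimalPeriod_pos hk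
    rcases lt_or_eq_of_le (Nat.le_of_dvd hk hd) with h | h
    · exact absurd (Function.iterate_minimalPeriod (f := f^[n]) (x := y))
        (hper2 _ hpos h)
    · exact h
  set m := Function.minimalPeriod f y with hm
  have hpf : Function.IsPeriodicPt f (n * k) y := by
    have := hpt
    rwa [Function.IsPeriodicPt, Function.IsFixedPt, ← Function.iterate_mul] at this
  have hmpos : 0 < m := hpf.minimalPeriod_pos (by positivity)
  set d := Nat.gcd m n with hdd
  have heq : k = m / d := by
    rw [← hk', Function.minimalPeriod_iterate_eq_div_gcd hn.ne']
  have hgd : d ∣ m := Nat.gcd_dvd_left _ _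
  have hm_eq : m = k * d := by rw [heq, Nat.div_mul_cancel hgd]
  set s := n / d with hs
  have hdpos : 0 < d := Nat.gcd_pos_of_pos_left _ hmpos
  have hdn : d ∣ n := Nat.gcd_dvd_right _ _
  have hn_eq : n = s * d := (Nat.div_mul_cancel hdn).symm
  have hspos : 0 < s := Nat.div_pos (Nat.le_of_dvd hn hdn) hdpos
  have hsn : s ∣ n := Nat.div_dvd_of_dvd hdn
  have hcop : Nat.Coprime s k := by
    set g := Nat.gcd s k with hg
    have h1 : g * d ∣ d := by
      apply Nat.dvd_gcd
      · rw [hm_eq]; exact Nat.mul_dvd_mul (Nat.gcd_dvd_right _ _) dvd_rfl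
      · rw [hn_eq]; exact Nat.mul_dvd_mul (Nat.gcd_dvd_left _ _) dvd_rfl
    have h2 : g * d ≤ d := Nat.le_of_dvd hdpos h1
    have h3 : g ≤ 1 := by
      by_contra h
      push_neg at h
      nlinarith
    have h4 : 0 < g := Nat.gcd_pos_of_pos_right _ hk
    omega
  have hkns : k * n / s = m := by
    rw [hn_eq, hm_eq]
    rw [show k * (s * d) = k * d * s by ring]
    exact Nat.mul_div_cancel _ hspos
  refine ⟨s, hspos, hsn, hcop, ?_, ?_⟩
  · rw [hkns]; exact Function.iterate_minimalPeriod
  · intro i hi hlt h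
    rw [hkns] at hlt
    exact Function.not_isPeriodicPt_of_pos_of_lt_minimalPeriod hi.ne' hlt h
end

section
/- Let f : I → I be a continuous map on a compact interval, and suppose c, d ∈ I satisfy f(d) ≤ c < d ≤ f(c). Then f has a periodic point of least period 2. -/
/-- If f(d) ≤ c < d ≤ f(c) for c, d in I, then f has a point of least period 2. -/
theorem stmt_2 (a b : ℝ) (hab : a ≤ b) (f : ℝ → ℝ)
    (hf : ContinuousOn f (Set.Icc a b))
    (hmaps : Set.MapsTo f (Set.Icc a b) (Set.Icc a b))
    (c d : ℝ) (hc : c ∈ Set.Icc a b) (hd : d ∈ Set.Icc a b)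
    (h1 : f d ≤ c) (h2 : c < d) (h3 : d ≤ f c) :
    ∃ y ∈ Set.Icc a b, f (f y) = y ∧ f y ≠ y := by
  by_contra hcon
  push_neg at hcon
  -- hcon : ∀ y ∈ Set.Icc a b, f (f y) = y → f y = y
  have hsub : Set.Icc c d ⊆ Set.Icc a b := Set.Icc_subset_Icc hc.1 hd.2
  have hcd : c ≤ d := h2.le
  -- continuity of f ∘ f on [a,b]
  have hg : ContinuousOn (fun x => f (f x)) (Set.Icc a b) := hf.comp hf hmaps
  -- find p ∈ [c,d] with f p = d
  have hdmem : d ∈ Set.Icc (f d) (f c) := ⟨h1.trans hcd, h3⟩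
  obtain ⟨p, hpcd, hfp⟩ := intermediate_value_Icc' hcd (hf.mono hsub) hdmem
  have hpab : p ∈ Set.Icc a b := hsub hpcd
  have hpd : p < d := by
    rcases lt_or_eq_of_le hpcd.2 with h | h
    · exact h
    · rw [h] at hfp; linarith
  have hfpp : f (f p) ≤ p := by rw [hfp]; linarith [hpcd.1]
  have hgp : f (f p) < p := by
    rcases lt_or_eq_of_le hfpp with h | h
    · exact h
    · have := hcon p hpab h
      rw [hfp] at this; linarith
  have hap : a ≤ p := hc.1.trans hpcd.1
  have hIap : Set.Icc a p ⊆ Set.Icc a b := Set.Icc_subset_Icc le_rfl (hpab.2)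
  -- the set of fixed points of f∘f in [a,p]
  set S : Set ℝ := Set.Icc a p ∩ (fun x => f (f x) - x) ⁻¹' {0} with hS
  have hgcont : ContinuousOn (fun x => f (f x) - x) (Set.Icc a p) :=
    (hg.mono hIap).sub continuousOn_id
  have hSclosed : IsClosed S :=
    hgcont.preimage_isClosed_of_isClosed isClosed_Icc isClosed_singleton
  have hScompact : IsCompact S :=
    IsCompact.of_isClosed_subset isCompact_Icc hSclosed
      (Set.inter_subset_left.trans hIap)
  -- S is nonempty by IVT : (f∘f - id)(a) ≥ 0 > (f∘f - id)(p)
  have haab : a ∈ Set.Icc a b := ⟨le_rfl, hab⟩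
  have hga : a ≤ f (f a) := (hmaps (hmaps haab)).1
  have hSne : S.Nonempty := by
    have h0 : (0:ℝ) ∈ Set.Icc (f (f p) - p) (f (f a) - a) := ⟨by linarith, by linarith⟩
    obtain ⟨x, hx, hx0⟩ := intermediate_value_Icc' hap hgcont h0
    exact ⟨x, hx, by simpa using sub_eq_zero.mp (by simpa using hx0)⟩
  -- r = greatest fixed point of f∘f in [a,p]
  have hrS : sSup S ∈ S := hScompact.sSup_mem hSne
  set r := sSup S with hr
  have hrap : r ∈ Set.Icc a p := hrS.1
  have hgr : f (f r) = r := by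
    have : f (f r) - r = 0 := hrS.2
    linarith
  have hrab : r ∈ Set.Icc a b := hIap hrap
  have hfr : f r = r := hcon r hrab hgr
  have hrp : r < p := by
    rcases lt_or_eq_of_le hrap.2 with h | h
    · exact h
    · rw [h] at hgr; linarith
  -- IVT: ∃ t ∈ [r,p] with f t = p
  have hIrp : Set.Icc r p ⊆ Set.Icc a b := Set.Icc_subset_Icc hrab.1 hpab.2
  have hpmem : p ∈ Set.Icc (f r) (f p) := by rw [hfr, hfp]; exact ⟨hrp.le, hpd.le⟩
  obtain ⟨t, htrp, hft⟩ := intermediate_value_Icc hrp.le (hf.mono hIrp) hpmem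
  have htr : r < t := by
    rcases lt_or_eq_of_le htrp.1 with h | h
    · exact h
    · rw [← h] at hft; rw [hfr] at hft; linarith
  have htp : t ≤ p := htrp.2
  -- f (f t) = f p = d > p ≥ t, while f (f p) < p : IVT gives fixed point of f∘f in [t,p]
  have hgt : t ≤ f (f t) := by rw [hft, hfp]; linarith
  have hItp' : Set.Icc t p ⊆ Set.Icc a p := Set.Icc_subset_Icc (le_of_lt (lt_of_le_of_lt hrab.1 htr)) le_rfl
  have h0 : (0:ℝ) ∈ Set.Icc (f (f p) - p) (f (f t) - t) := ⟨by linarith, by linarith⟩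
  obtain ⟨s, hstp, hs0⟩ := intermediate_value_Icc' htp (hgcont.mono hItp') h0
  have hsS : s ∈ S := ⟨hItp' hstp, by simpa using hs0⟩
  have : s ≤ r := le_csSup hScompact.bddAbove hsS
  have : t ≤ s := hstp.1
  linarith
end

section
/- Let f : I → I be a continuous map on a compact interval. If f has a periodic point of least period m with m > 2, then f has a periodic point of least period 2. -/
open Set

private lemma ivt_fix_dec (f : ℝ → ℝ) {s t : ℝ} (hst : s ≤ t)
    (hfc : ContinuousOn f (Set.Icc s t)) (h1 : s ≤ f s) (h2 : f t ≤ t) :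
    ∃ r ∈ Set.Icc s t, f r = r := by
  have hc : ContinuousOn (fun x => f x - x) (Set.Icc s t) := hfc.sub continuousOn_id
  have h0 : (0:ℝ) ∈ Set.Icc (f t - t) (f s - s) := ⟨by linarith, by linarith⟩
  obtain ⟨r, hr, hr0⟩ := intermediate_value_Icc' hst hc h0
  exact ⟨r, hr, by simpa using sub_eq_zero.mp hr0⟩

private lemma ivt_fix_inc (f : ℝ → ℝ) {s t : ℝ} (hst : s ≤ t)
    (hfc : ContinuousOn f (Set.Icc s t)) (h1 : f s ≤ s) (h2 : t ≤ f t) :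
    ∃ r ∈ Set.Icc s t, f r = r := by
  have hc : ContinuousOn (fun x => f x - x) (Set.Icc s t) := hfc.sub continuousOn_id
  have h0 : (0:ℝ) ∈ Set.Icc (f s - s) (f t - t) := ⟨by linarith, by linarith⟩
  obtain ⟨r, hr, hr0⟩ := intermediate_value_Icc hst hc h0
  exact ⟨r, hr, by simpa using sub_eq_zero.mp hr0⟩

private lemma closed_sep (φ : ℝ → ℝ) {s t : ℝ} (hφ : ContinuousOn φ (Set.Icc s t))
    (P : Set ℝ) (hP : IsClosed P) : IsClosed {x | x ∈ Set.Icc s t ∧ φ x ∈ P} := by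
  have : {x | x ∈ Set.Icc s t ∧ φ x ∈ P} = Set.Icc s t ∩ φ ⁻¹' P := rfl
  rw [this]
  exact hφ.preimage_isClosed_of_isClosed isClosed_Icc hP

/-- If f has a periodic point of least period m > 2, then f has a periodic
point of least period 2. -/
theorem stmt_3 (a b : ℝ) (hab : a ≤ b) (f : ℝ → ℝ)
    (hf : ContinuousOn f (Set.Icc a b))
    (hmaps : Set.MapsTo f (Set.Icc a b) (Set.Icc a b))
    (m : ℕ) (hm : 2 < m)
    (hx : ∃ x ∈ Set.Icc a b, f^[m] x = x ∧ ∀ i, 0 < i → i < m → f^[i] x ≠ x) :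
    ∃ y ∈ Set.Icc a b, f (f y) = y ∧ f y ≠ y := by
  classical
  obtain ⟨x, hxI, hxm, hxne⟩ := hx
  -- The orbit as a finset
  set O : Finset ℝ := (Finset.range m).image (fun i => f^[i] x) with hO
  have hxO : x ∈ O := by
    refine Finset.mem_image.mpr ⟨0, Finset.mem_range.mpr (by omega), rfl⟩
  have hO_mem : ∀ c ∈ O, c ∈ Set.Icc a b := by
    intro c hc
    obtain ⟨i, _, rfl⟩ := Finset.mem_image.mp hc
    exact (hmaps.iterate i) hxI
  have hO_f : ∀ c ∈ O, f c ∈ O := by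
    intro c hc
    obtain ⟨i, hi, rfl⟩ := Finset.mem_image.mp hc
    have hi' : i < m := Finset.mem_range.mp hi
    have : f (f^[i] x) = f^[i+1] x := (Function.iterate_succ_apply' f i x).symm
    rw [this]
    rcases eq_or_lt_of_le (Nat.succ_le_of_lt hi') with h | h
    · have h' : i + 1 = m := h
      rw [h', hxm]; exact hxO
    · exact Finset.mem_image.mpr ⟨i+1, Finset.mem_range.mpr h, rfl⟩
  have hO_nfix : ∀ c ∈ O, f c ≠ c := by
    intro c hc hfc
    obtain ⟨i, hi, rfl⟩ := Finset.mem_image.mp hc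
    have hi' : i < m := Finset.mem_range.mp hi
    have h1 : f^[m - i] (f^[i] x) = f^[i] x := Function.iterate_fixed hfc (m - i)
    have h2 : f^[m - i] (f^[i] x) = f^[m] x := by
      rw [← Function.iterate_add_apply]
      congr 1
      omega
    have hcx : f^[i] x = x := by rw [← h1, h2, hxm]
    rw [hcx] at hfc
    exact hxne 1 (by omega) (by omega) (by simpa using hfc)
  have hOne : O.Nonempty := ⟨x, hxO⟩
  -- u : max orbit point with f u > u
  set A : Finset ℝ := O.filter (fun c => c < f c) with hA
  have hAne : A.Nonempty := by
    set c₀ := O.min' hOne with hc₀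
    have hc₀O : c₀ ∈ O := O.min'_mem hOne
    have h1 : c₀ ≤ f c₀ := O.min'_le (f c₀) (hO_f c₀ hc₀O)
    have h2 : c₀ < f c₀ := lt_of_le_of_ne h1 (Ne.symm (hO_nfix c₀ hc₀O))
    exact ⟨c₀, Finset.mem_filter.mpr ⟨hc₀O, h2⟩⟩
  set u := A.max' hAne with hu_def
  have huA : u ∈ A := A.max'_mem hAne
  have huO : u ∈ O := (Finset.mem_filter.mp huA).1
  have hufu : u < f u := (Finset.mem_filter.mp huA).2
  -- v : least orbit point above u
  set B : Finset ℝ := O.filter (fun c => u < c) with hB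
  have hBne : B.Nonempty := ⟨f u, Finset.mem_filter.mpr ⟨hO_f u huO, hufu⟩⟩
  set v := B.min' hBne with hv_def
  have hvB : v ∈ B := B.min'_mem hBne
  have hvO : v ∈ O := (Finset.mem_filter.mp hvB).1
  have huv : u < v := (Finset.mem_filter.mp hvB).2
  have hv_le_fu : v ≤ f u := B.min'_le (f u) (Finset.mem_filter.mpr ⟨hO_f u huO, hufu⟩)
  have hfv_lt : f v < v := by
    rcases lt_trichotomy (f v) v with h | h | h
    · exact h
    · exact absurd h (hO_nfix v hvO)
    · have : v ∈ A := Finset.mem_filter.mpr ⟨hvO, h⟩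
      exact absurd (A.le_max' v this) (not_le.mpr huv)
  have hfv_le : f v ≤ u := by
    by_contra h
    push_neg at h
    have : f v ∈ B := Finset.mem_filter.mpr ⟨hO_f v hvO, h⟩
    exact absurd (B.min'_le (f v) this) (not_le.mpr hfv_lt)
  have huI : u ∈ Set.Icc a b := hO_mem u huO
  have hvI : v ∈ Set.Icc a b := hO_mem v hvO
  -- fixed point p in (u, v)
  obtain ⟨p, hpIcc, hpfix⟩ := ivt_fix_dec f huv.le
    (hf.mono (Set.Icc_subset_Icc huI.1 hvI.2)) hufu.le hfv_lt.le
  have hup : u < p := by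
    rcases eq_or_lt_of_le hpIcc.1 with h | h
    · exfalso; rw [← h] at hpfix; exact absurd hpfix (ne_of_gt hufu)
    · exact h
  have hpv : p < v := by
    rcases eq_or_lt_of_le hpIcc.2 with h | h
    · exfalso; rw [h] at hpfix; exact absurd hpfix (ne_of_lt hfv_lt)
    · exact h
  have hpI : p ∈ Set.Icc a b := ⟨le_trans huI.1 hpIcc.1, le_trans hpIcc.2 hvI.2⟩
  -- d : least point in [p,v] with f d ≤ u ; then f d = u
  set S₁ : Set ℝ := {t | t ∈ Set.Icc p v ∧ f t ∈ Set.Iic u} with hS₁def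
  have hS₁c : IsClosed S₁ :=
    closed_sep f (hf.mono (Set.Icc_subset_Icc hpI.1 hvI.2)) _ isClosed_Iic
  have hvS₁ : v ∈ S₁ := ⟨⟨hpv.le, le_refl v⟩, hfv_le⟩
  have hS₁bdd : BddBelow S₁ := ⟨p, fun t ht => ht.1.1⟩
  set d := sInf S₁ with hd_def
  have hdS₁ : d ∈ S₁ := hS₁c.csInf_mem ⟨v, hvS₁⟩ hS₁bdd
  have hpd : p < d := by
    rcases eq_or_lt_of_le hdS₁.1.1 with h | h
    · exfalso
      have : f d ≤ u := hdS₁.2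
      rw [← h, hpfix] at this
      exact absurd this (not_le.mpr hup)
    · exact h
  have hdv : d ≤ v := hdS₁.1.2
  have hdI : d ∈ Set.Icc a b := ⟨le_trans hpI.1 hdS₁.1.1, le_trans hdv hvI.2⟩
  have hfd : f d = u := by
    refine le_antisymm hdS₁.2 ?_
    by_contra hlt
    push_neg at hlt
    have hmem : u ∈ Set.Icc (f d) (f p) := ⟨hlt.le, by rw [hpfix]; exact hup.le⟩
    obtain ⟨t, htIcc, hft⟩ := intermediate_value_Icc' hpd.le
      (hf.mono (Set.Icc_subset_Icc hpI.1 hdI.2)) hmem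
    have htS₁ : t ∈ S₁ := ⟨⟨htIcc.1, le_trans htIcc.2 hdv⟩, le_of_eq hft⟩
    have : d ≤ t := csInf_le hS₁bdd htS₁
    have htd : t = d := le_antisymm htIcc.2 this
    rw [htd] at hft
    rw [hft] at hlt
    exact lt_irrefl u hlt
  -- c : greatest point in [u,p] with f c ≥ d ; then f c = d
  set S₂ : Set ℝ := {t | t ∈ Set.Icc u p ∧ f t ∈ Set.Ici d} with hS₂def
  have hS₂c : IsClosed S₂ :=
    closed_sep f (hf.mono (Set.Icc_subset_Icc huI.1 hpI.2)) _ isClosed_Ici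
  have huS₂ : u ∈ S₂ := ⟨⟨le_refl u, hup.le⟩, le_trans hdv hv_le_fu⟩
  have hS₂bdd : BddAbove S₂ := ⟨p, fun t ht => ht.1.2⟩
  set c := sSup S₂ with hc_def
  have hcS₂ : c ∈ S₂ := hS₂c.csSup_mem ⟨u, huS₂⟩ hS₂bdd
  have hcp : c < p := by
    rcases eq_or_lt_of_le hcS₂.1.2 with h | h
    · exfalso
      have : d ≤ f c := hcS₂.2
      rw [h, hpfix] at this
      exact absurd this (not_le.mpr hpd)
    · exact h
  have huc : u ≤ c := hcS₂.1.1
  have hcI : c ∈ Set.Icc a b := ⟨le_trans huI.1 huc, le_trans hcp.le hpI.2⟩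
  have hfc : f c = d := by
    refine le_antisymm ?_ hcS₂.2
    by_contra hlt
    push_neg at hlt
    have hmem : d ∈ Set.Icc (f p) (f c) := ⟨by rw [hpfix]; exact hpd.le, hlt.le⟩
    obtain ⟨t, htIcc, hft⟩ := intermediate_value_Icc' hcp.le
      (hf.mono (Set.Icc_subset_Icc hcI.1 hpI.2)) hmem
    have htS₂ : t ∈ S₂ := ⟨⟨le_trans huc htIcc.1, htIcc.2⟩, ge_of_eq hft⟩
    have : t ≤ c := le_csSup hS₂bdd htS₂
    have htc : t = c := le_antisymm this htIcc.1
    rw [htc] at hft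
    rw [hft] at hlt
    exact lt_irrefl d hlt
  have hcd : c < d := lt_trans hcp hpd
  -- Assume no period-2 point
  by_contra H
  push_neg at H
  have H' : ∀ y ∈ Set.Icc a b, f (f y) = y → f y = y := by
    intro y hy hyy
    by_contra hne
    exact hne (H y hy hyy)
  have hgcont : ContinuousOn (fun t => f (f t)) (Set.Icc a b) := hf.comp hf hmaps
  have hgc : f (f c) = u := by rw [hfc, hfd]
  have hucc : u < c := by
    rcases eq_or_lt_of_le huc with h | h
    · exfalso
      have : f c = c := H' c hcI (by rw [hgc, h])
      rw [hfc] at this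
      exact absurd this (ne_of_gt hcd)
    · exact h
  have hgc_lt : f (f c) < c := by rw [hgc]; exact hucc
  -- z : least fixed point of f in [c, d]
  set Z : Set ℝ := {t | t ∈ Set.Icc c d ∧ (f t - t) ∈ ({0} : Set ℝ)} with hZdef
  have hZc : IsClosed Z :=
    closed_sep (fun t => f t - t)
      ((hf.mono (Set.Icc_subset_Icc hcI.1 hdI.2)).sub continuousOn_id) _ isClosed_singleton
  have hpZ : p ∈ Z := ⟨⟨hcp.le, hpd.le⟩, by simp [hpfix]⟩
  have hZbdd : BddBelow Z := ⟨c, fun t ht => ht.1.1⟩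
  set z := sInf Z with hz_def
  have hzZ : z ∈ Z := hZc.csInf_mem ⟨p, hpZ⟩ hZbdd
  have hfz : f z = z := by have := hzZ.2; simp at this; linarith
  have hzd : z ≤ d := hzZ.1.2
  have hcz : c < z := by
    rcases eq_or_lt_of_le hzZ.1.1 with h | h
    · exfalso; rw [← h] at hfz; rw [hfc] at hfz; exact absurd hfz (ne_of_gt hcd)
    · exact h
  have hzI : z ∈ Set.Icc a b := ⟨le_trans hcI.1 hzZ.1.1, le_trans hzd hdI.2⟩
  -- f > id on [c, z)
  have hlt_fz : ∀ t, c ≤ t → t < z → t < f t := by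
    intro t h1 h2
    have htd : t ≤ d := le_trans h2.le hzd
    have hne : f t ≠ t := by
      intro he
      have : t ∈ Z := ⟨⟨h1, htd⟩, by simp [he]⟩
      exact absurd (csInf_le hZbdd this) (not_le.mpr h2)
    rcases lt_or_gt_of_ne hne with hlt | hgt
    · exfalso
      have hcfc : c ≤ f c := by rw [hfc]; exact hcd.le
      obtain ⟨r, hrIcc, hrfix⟩ := ivt_fix_dec f h1
        (hf.mono (Set.Icc_subset_Icc hcI.1 (le_trans htd hdI.2))) hcfc hlt.le
      have : r ∈ Z := ⟨⟨hrIcc.1, le_trans hrIcc.2 htd⟩, by simp [hrfix]⟩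
      have : z ≤ r := csInf_le hZbdd this
      have : z ≤ t := le_trans this hrIcc.2
      exact absurd this (not_le.mpr h2)
    · exact hgt
  -- w : least point of [c,z] with t ≤ f (f t); show w = z, so f∘f < id on [c,z)
  set W : Set ℝ := {t | t ∈ Set.Icc c z ∧ (f (f t) - t) ∈ Set.Ici (0:ℝ)} with hWdef
  have hWc : IsClosed W :=
    closed_sep (fun t => f (f t) - t)
      ((hgcont.mono (Set.Icc_subset_Icc hcI.1 hzI.2)).sub continuousOn_id) _ isClosed_Ici
  have hzW : z ∈ W := ⟨⟨hcz.le, le_refl z⟩, by simp [hfz]⟩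
  have hWbdd : BddBelow W := ⟨c, fun t ht => ht.1.1⟩
  set w := sInf W with hw_def
  have hwW : w ∈ W := hWc.csInf_mem ⟨z, hzW⟩ hWbdd
  have hwz : w ≤ z := hwW.1.2
  have hcw : c < w := by
    rcases eq_or_lt_of_le hwW.1.1 with h | h
    · exfalso
      have h2 : (0:ℝ) ≤ f (f w) - w := hwW.2
      rw [← h, hgc] at h2
      linarith
    · exact h
  have hwI : w ∈ Set.Icc a b := ⟨le_trans hcI.1 hwW.1.1, le_trans hwz hzI.2⟩
  have hgw : f (f w) = w := by
    have hle : w ≤ f (f w) := by have := hwW.2; simp at this; linarith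
    rcases eq_or_lt_of_le hle with hEq | hLt
    · exact hEq.symm
    · exfalso
      have hgcle : f (f c) ≤ c := hgc_lt.le
      obtain ⟨r, hrIcc, hrfix⟩ := ivt_fix_inc (fun t => f (f t)) hcw.le
        (hgcont.mono (Set.Icc_subset_Icc hcI.1 hwI.2)) hgcle hle
      have hrW : r ∈ W := ⟨⟨hrIcc.1, le_trans hrIcc.2 hwz⟩, by simp [hrfix]⟩
      have : w ≤ r := csInf_le hWbdd hrW
      have hrw : r = w := le_antisymm hrIcc.2 this
      rw [hrw] at hrfix
      rw [hrfix] at hLt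
      exact lt_irrefl w hLt
  have hfw : f w = w := H' w hwI hgw
  have hwzeq : w = z := by
    rcases eq_or_lt_of_le hwz with h | h
    · exact h
    · exfalso
      exact absurd hfw (ne_of_gt (hlt_fz w hcw.le h))
  have hglt1 : ∀ t, c ≤ t → t < z → f (f t) < t := by
    intro t h1 h2
    by_contra hle
    push_neg at hle
    have : t ∈ W := ⟨⟨h1, h2.le⟩, by simp; linarith⟩
    have : w ≤ t := csInf_le hWbdd this
    rw [hwzeq] at this
    exact absurd this (not_le.mpr h2)
  -- y₁ : greatest point of [a,c] with t ≤ f (f t); it is a fixed point of f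
  set Y : Set ℝ := {t | t ∈ Set.Icc a c ∧ (f (f t) - t) ∈ Set.Ici (0:ℝ)} with hYdef
  have hYc : IsClosed Y :=
    closed_sep (fun t => f (f t) - t)
      ((hgcont.mono (Set.Icc_subset_Icc (le_refl a) hcI.2)).sub continuousOn_id) _ isClosed_Ici
  have haY : a ∈ Y := by
    refine ⟨⟨le_refl a, hcI.1⟩, ?_⟩
    have haI : a ∈ Set.Icc a b := ⟨le_refl a, hab⟩
    have : f (f a) ∈ Set.Icc a b := hmaps (hmaps haI)
    simp
    linarith [this.1]
  have hYbdd : BddAbove Y := ⟨c, fun t ht => ht.1.2⟩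
  set y₁ := sSup Y with hy₁_def
  have hy₁Y : y₁ ∈ Y := hYc.csSup_mem ⟨a, haY⟩ hYbdd
  have hy₁c : y₁ < c := by
    rcases eq_or_lt_of_le hy₁Y.1.2 with h | h
    · exfalso
      have h2 : (0:ℝ) ≤ f (f y₁) - y₁ := hy₁Y.2
      rw [h, hgc] at h2
      linarith
    · exact h
  have hy₁I : y₁ ∈ Set.Icc a b := ⟨hy₁Y.1.1, le_trans hy₁c.le hcI.2⟩
  have hgy₁ : f (f y₁) = y₁ := by
    have hle : y₁ ≤ f (f y₁) := by have := hy₁Y.2; simp at this; linarith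
    rcases eq_or_lt_of_le hle with hEq | hLt
    · exact hEq.symm
    · exfalso
      have hgcle : f (f c) ≤ c := hgc_lt.le
      obtain ⟨r, hrIcc, hrfix⟩ := ivt_fix_dec (fun t => f (f t)) hy₁c.le
        (hgcont.mono (Set.Icc_subset_Icc hy₁I.1 hcI.2)) hLt.le hgcle
      have hrY : r ∈ Y := ⟨⟨le_trans hy₁I.1 hrIcc.1, hrIcc.2⟩, by simp [hrfix]⟩
      have : r ≤ y₁ := le_csSup hYbdd hrY
      have hry : r = y₁ := le_antisymm this hrIcc.1
      rw [hry] at hrfix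
      rw [hrfix] at hLt
      exact lt_irrefl y₁ hLt
  have hfy₁ : f y₁ = y₁ := H' y₁ hy₁I hgy₁
  have hglt2 : ∀ t, y₁ < t → t ≤ c → f (f t) < t := by
    intro t h1 h2
    by_contra hle
    push_neg at hle
    have : t ∈ Y := ⟨⟨le_trans hy₁I.1 h1.le, h2⟩, by simp; linarith⟩
    exact absurd (le_csSup hYbdd this) (not_le.mpr h1)
  have hgltAll : ∀ t, y₁ < t → t < z → f (f t) < t := by
    intro t h1 h2
    rcases le_or_gt t c with h | h
    · exact hglt2 t h1 h
    · exact hglt1 t h.le h2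
  -- f > id on (y₁, z)
  have hf_gt : ∀ t, y₁ < t → t < z → t < f t := by
    intro t h1 h2
    have htI : t ∈ Set.Icc a b := ⟨le_trans hy₁I.1 h1.le, le_trans h2.le hzI.2⟩
    have hne : f t ≠ t := by
      intro he
      have : f (f t) = t := by rw [he, he]
      have := hgltAll t h1 h2
      rw [he, he] at this
      exact lt_irrefl t this
    rcases lt_or_gt_of_ne hne with hlt | hgt
    · exfalso
      rcases le_or_gt t c with hc' | hc'
      · have hcfc : c ≤ f c := by rw [hfc]; exact hcd.le
        obtain ⟨r, hrIcc, hrfix⟩ := ivt_fix_inc f hc'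
          (hf.mono (Set.Icc_subset_Icc htI.1 hcI.2)) hlt.le hcfc
        have hgr : f (f r) = r := by rw [hrfix, hrfix]
        have : f (f r) < r := hgltAll r (lt_of_lt_of_le h1 hrIcc.1) (lt_of_le_of_lt hrIcc.2 hcz)
        rw [hgr] at this
        exact lt_irrefl r this
      · exact absurd hlt (not_lt.mpr (hlt_fz t hc'.le h2).le)
    · exact hgt
  -- f ≥ z on (y₁, z)
  have hfge : ∀ t, y₁ < t → t < z → z ≤ f t := by
    intro t h1 h2
    by_contra hlt
    push_neg at hlt
    have h3 : t < f t := hf_gt t h1 h2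
    have h4 : y₁ < f t := lt_trans h1 h3
    have h5 : f t < f (f t) := hf_gt (f t) h4 hlt
    have h6 : f (f t) < t := hgltAll t h1 h2
    linarith
  -- final contradiction by IVT on [y₁, c]
  have hy₁z : y₁ < z := lt_trans hy₁c hcz
  set μ := (y₁ + z)/2 with hμ_def
  have hμ1 : y₁ < μ := by simp [hμ_def]; linarith
  have hμ2 : μ < z := by simp [hμ_def]; linarith
  have hmem : μ ∈ Set.Icc (f y₁) (f c) := by
    constructor
    · rw [hfy₁]; exact hμ1.le
    · rw [hfc]; exact le_trans hμ2.le hzd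
  obtain ⟨t, htIcc, hft⟩ := intermediate_value_Icc hy₁c.le
    (hf.mono (Set.Icc_subset_Icc hy₁I.1 hcI.2)) hmem
  have hty : y₁ < t := by
    rcases eq_or_lt_of_le htIcc.1 with h | h
    · exfalso
      rw [← h, hfy₁] at hft
      linarith
    · exact h
  have htz : t < z := lt_of_le_of_lt htIcc.2 hcz
  have : z ≤ f t := hfge t hty htz
  rw [hft] at this
  linarith
end

section
/- Let f : I → I be continuous on a compact interval, and let J_0, J_1, ..., J_{n-1}, J_n = J_0 be closed subintervals of I with f(J_i) ⊇ J_{i+1} for i = 0, ..., n-1. Then there exists a point y such that f^i(y) ∈ J_i for i = 0, 1, ..., n-1 and f^n(y) = y. -/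
/-!
Pull the cycle back one step at a time: if `f` is continuous on `[a, b]` and `f([a, b]) ⊇ K`
for a closed interval `K`, then some closed subinterval of `[a, b]` is mapped by `f` exactly onto
`K`. Iterating this along `J₀ → J₁ → ⋯ → Jₙ = J₀` yields a closed interval `L ⊆ J₀` whose orbit
follows the itinerary and with `fⁿ(L) = J₀ ⊇ L`, so `fⁿ` has a fixed point in `L` by the
intermediate value theorem.
-/

open Set Function OrderDual

section

variable {α δ : Type*} [ConditionallyCompleteLinearOrder α] [TopologicalSpace α]
  [OrderTopology α] [DenselyOrdered α] [LinearOrder δ] [TopologicalSpace δ]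
  [OrderClosedTopology δ] {f : α → δ} {a b : α} {p q : δ}

theorem ContinuousOn.exists_image_Icc_eq_of_apply_eq (hf : ContinuousOn f (Icc a b))
    (hab : a ≤ b) (hpq : p ≤ q) (ha : f a = p) (hb : f b = q) :
    ∃ c d, Icc c d ⊆ Icc a b ∧ f '' Icc c d = Icc p q := by
  -- `c` is the last point of `[a, b]` where `f = p`, and `d` the first point of `[c, b]`
  -- where `f = q`; by the intermediate value theorem `f` stays between `p` and `q` on `[c, d]`.
  obtain ⟨c, ⟨hc, hfc⟩, hc_max⟩ := (isCompact_Icc.of_isClosed_subset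
    (hf.preimage_isClosed_of_isClosed isClosed_Icc isClosed_singleton) inter_subset_left :
      IsCompact (Icc a b ∩ f ⁻¹' {p})).exists_isGreatest ⟨a, left_mem_Icc.2 hab, ha⟩
  have hfc' : ContinuousOn f (Icc c b) := hf.mono (Icc_subset_Icc hc.1 le_rfl)
  obtain ⟨d, ⟨hd, hfd⟩, hd_min⟩ := (isCompact_Icc.of_isClosed_subset
    (hfc'.preimage_isClosed_of_isClosed isClosed_Icc isClosed_singleton) inter_subset_left :
      IsCompact (Icc c b ∩ f ⁻¹' {q})).exists_isLeast ⟨b, right_mem_Icc.2 hc.2, hb⟩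
  simp only [mem_preimage, mem_singleton_iff] at hfc hfd
  have hcd_ab : Icc c d ⊆ Icc a b := Icc_subset_Icc hc.1 hd.2
  refine ⟨c, d, hcd_ab, Subset.antisymm ?_ ?_⟩
  · rintro _ ⟨x, hx, rfl⟩
    constructor
    · refine not_lt.1 fun hx_lt => ?_
      obtain ⟨z, hz, hfz⟩ := intermediate_value_Icc hx.2
        (hf.mono ((Icc_subset_Icc_left hx.1).trans hcd_ab)) ⟨hx_lt.le, hfd ▸ hpq⟩
      have hxc : x = c :=
        le_antisymm (hz.1.trans (hc_max ⟨hcd_ab ⟨hx.1.trans hz.1, hz.2⟩, hfz⟩)) hx.1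
      exact hx_lt.ne (hxc ▸ hfc)
    · refine not_lt.1 fun hx_gt => ?_
      obtain ⟨z, hz, hfz⟩ := intermediate_value_Icc hx.1
        (hf.mono ((Icc_subset_Icc_right hx.2).trans hcd_ab)) ⟨hfc ▸ hpq, hx_gt.le⟩
      have hxd : x = d :=
        le_antisymm hx.2 ((hd_min ⟨⟨hz.1, hz.2.trans (hx.2.trans hd.2)⟩, hfz⟩).trans hz.2)
      exact hx_gt.ne' (hxd ▸ hfd)
  · simpa only [hfc, hfd] using intermediate_value_Icc hd.1 (hf.mono hcd_ab)

theorem ContinuousOn.exists_image_Icc_eq_of_Icc_subset_image (hf : ContinuousOn f (Icc a b))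
    (hpq : p ≤ q) (h : Icc p q ⊆ f '' Icc a b) :
    ∃ c d, Icc c d ⊆ Icc a b ∧ f '' Icc c d = Icc p q := by
  obtain ⟨u, hu, hfu⟩ := h (left_mem_Icc.2 hpq)
  obtain ⟨v, hv, hfv⟩ := h (right_mem_Icc.2 hpq)
  rcases le_total u v with huv | hvu
  · obtain ⟨c, d, hcd, himage⟩ :=
      (hf.mono (Icc_subset_Icc hu.1 hv.2)).exists_image_Icc_eq_of_apply_eq huv hpq hfu hfv
    exact ⟨c, d, hcd.trans (Icc_subset_Icc hu.1 hv.2), himage⟩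
  · -- `f` runs from `q` down to `p` on `[v, u]`: reverse the order of the codomain.
    have hf' : ContinuousOn (toDual ∘ f) (Icc v u) :=
      continuous_toDual.comp_continuousOn (hf.mono (Icc_subset_Icc hv.1 hu.2))
    obtain ⟨c, d, hcd, himage⟩ := hf'.exists_image_Icc_eq_of_apply_eq hvu
      (toDual_le_toDual.2 hpq) (congrArg toDual hfv) (congrArg toDual hfu)
    refine ⟨c, d, hcd.trans (Icc_subset_Icc hv.1 hu.2), ?_⟩
    rw [image_comp, Icc_toDual] at himage
    simpa [image_image] using congrArg (image ofDual) himage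

end

theorem ContinuousOn.iterate_of_mapsTo {α : Type*} [TopologicalSpace α] {f : α → α}
    {s : Set α} {t : ℕ → Set α} {m : ℕ} (hf : ∀ j < m, ContinuousOn f (t j))
    (hmaps : ∀ j < m, MapsTo f^[j] s (t j)) : ContinuousOn f^[m] s := by
  induction m with
  | zero => exact continuousOn_id
  | succ m ih =>
    rw [iterate_succ']
    exact (hf m m.lt_succ_self).comp (ih (fun j hj => hf j (by omega))
      (fun j hj => hmaps j (by omega))) (hmaps m m.lt_succ_self)

section

variable {α : Type*} [ConditionallyCompleteLinearOrder α] [TopologicalSpace α]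
  [OrderTopology α] [DenselyOrdered α]

theorem exists_Icc_iterate_mapsTo_of_Icc_subset_image {f : α → α} {p q : ℕ → α} {m : ℕ}
    (hpq : ∀ i ≤ m, p i ≤ q i) (hf : ∀ i < m, ContinuousOn f (Icc (p i) (q i)))
    (hcover : ∀ i < m, Icc (p (i + 1)) (q (i + 1)) ⊆ f '' Icc (p i) (q i)) :
    ∃ c d, Icc c d ⊆ Icc (p 0) (q 0) ∧ (∀ i ≤ m, MapsTo f^[i] (Icc c d) (Icc (p i) (q i))) ∧
      f^[m] '' Icc c d = Icc (p m) (q m) := by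
  induction m with
  | zero =>
    refine ⟨p 0, q 0, subset_rfl, fun i hi => ?_, image_id _⟩
    obtain rfl : i = 0 := Nat.le_zero.1 hi
    exact mapsTo_id _
  | succ m ih =>
    obtain ⟨c, d, hcd, hmaps, himage⟩ := ih (fun i hi => hpq i (by omega))
      (fun i hi => hf i (by omega)) (fun i hi => hcover i (by omega))
    have hcont : ContinuousOn f^[m + 1] (Icc c d) :=
      .iterate_of_mapsTo hf (fun j hj => hmaps j (by omega))
    have hsurj : Icc (p (m + 1)) (q (m + 1)) ⊆ f^[m + 1] '' Icc c d := by
      rw [iterate_succ', image_comp, himage]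
      exact hcover m m.lt_succ_self
    obtain ⟨c', d', hcd', himage'⟩ :=
      hcont.exists_image_Icc_eq_of_Icc_subset_image (hpq _ le_rfl) hsurj
    refine ⟨c', d', hcd'.trans hcd, fun i hi => ?_, himage'⟩
    rcases hi.lt_or_eq with hi | rfl
    · exact (hmaps i (by omega)).mono_left hcd'
    · exact himage' ▸ mapsTo_image _ _

end

theorem stmt_4_general (a b : ℝ) (f : ℝ → ℝ)
    (hf : ContinuousOn f (Set.Icc a b))
    (n : ℕ) (p q : ℕ → ℝ)
    (hpq : ∀ i ≤ n, p i ≤ q i)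
    (hsub : ∀ i ≤ n, Set.Icc (p i) (q i) ⊆ Set.Icc a b)
    (hclosep : p n = p 0) (hcloseq : q n = q 0)
    (hcover : ∀ i < n, Set.Icc (p (i + 1)) (q (i + 1)) ⊆ f '' Set.Icc (p i) (q i)) :
    ∃ y, (∀ i < n, f^[i] y ∈ Set.Icc (p i) (q i)) ∧ f^[n] y = y := by
  have hfJ : ∀ i < n, ContinuousOn f (Icc (p i) (q i)) := fun i hi => hf.mono (hsub i hi.le)
  obtain ⟨c, d, hcd, hmaps, himage⟩ := exists_Icc_iterate_mapsTo_of_Icc_subset_image hpq hfJ hcover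
  rw [hclosep, hcloseq] at himage
  have hle : c ≤ d := nonempty_Icc.1 (himage ▸ nonempty_Icc.2 (hpq 0 n.zero_le)).of_image
  have hcont : ContinuousOn f^[n] (Icc c d) :=
    .iterate_of_mapsTo hfJ (fun i hi => hmaps i hi.le)
  obtain ⟨y, hy, hfix⟩ := exists_mem_Icc_isFixedPt_of_surjOn hcont hle (by rwa [SurjOn, himage])
  exact ⟨y, fun i hi => hmaps i hi.le hy, hfix⟩

/-- If J_0 J_1 ⋯ J_{n-1} J_0 is a cycle of closed subintervals of I
(f(J_i) ⊇ J_{i+1}), then there is a point y with f^i(y) ∈ J_i for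
i = 0, …, n-1 and f^n(y) = y. -/
theorem stmt_4 (a b : ℝ) (hab : a ≤ b) (f : ℝ → ℝ)
    (hf : ContinuousOn f (Set.Icc a b))
    (hmaps : Set.MapsTo f (Set.Icc a b) (Set.Icc a b))
    (n : ℕ) (hn : 0 < n) (p q : ℕ → ℝ)
    (hpq : ∀ i ≤ n, p i ≤ q i)
    (hsub : ∀ i ≤ n, Set.Icc (p i) (q i) ⊆ Set.Icc a b)
    (hclosep : p n = p 0) (hcloseq : q n = q 0)
    (hcover : ∀ i < n, Set.Icc (p (i + 1)) (q (i + 1)) ⊆ f '' Set.Icc (p i) (q i)) :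
    ∃ y, (∀ i < n, f^[i] y ∈ Set.Icc (p i) (q i)) ∧ f^[n] y = y :=
  stmt_4_general a b f hf n p q hpq hsub hclosep hcloseq hcover
end

section
/- Let f : I → I be continuous on a compact interval. If f has a periodic point of least period 3, then f has periodic points of every least period n ≥ 1. -/
/-!
Write the 3-cycle as `p ↦ q ↦ r ↦ p` with `q` strictly between `p` and `r`, and let
`L = [[p, q]]`, `R = [[r, q]]`. By the intermediate value theorem `f '' R ⊇ L ∪ R` and
`f '' L ⊇ R`. Whenever a closed interval `J` lies in the image of a closed interval `I`, some
closed subinterval of `I` is mapped onto `J`; pulling back along the itinerary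
`R → ⋯ → R → L → R` of length `n` gives a closed interval that `f^[n]` maps onto `R`, which
contains it, hence a fixed point `y` of `f^[n]` following that itinerary. If `y` had a smaller
period its whole orbit would stay in `R`, so `f^[n-1] y ∈ L ∩ R = {q}` and `p = f^[2] q ∈ R`,
which is false.
-/

open Set OrderDual Function

section IntervalCovering

variable {α δ : Type*} [ConditionallyCompleteLinearOrder α] [TopologicalSpace α] [OrderTopology α]
  [DenselyOrdered α] [LinearOrder δ] [TopologicalSpace δ] [OrderClosedTopology δ]
  {g : α → δ} {a b : α}

theorem ContinuousOn.exists_mem_Icc_eq_left_forall_le (hab : a ≤ b)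
    (hg : ContinuousOn g (Icc a b)) (hgab : g a ≤ g b) :
    ∃ u ∈ Icc a b, g u = g a ∧ ∀ z ∈ Icc u b, g a ≤ g z := by
  set S := Icc a b ∩ g ⁻¹' {g a}
  have hSb : BddAbove S := bddAbove_Icc.mono inter_subset_left
  have hu : sSup S ∈ S :=
    (hg.preimage_isClosed_of_isClosed isClosed_Icc isClosed_singleton).csSup_mem
      ⟨a, left_mem_Icc.2 hab, rfl⟩ hSb
  refine ⟨sSup S, hu.1, hu.2, fun z hz => not_lt.1 fun hlt => hlt.ne ?_⟩
  obtain ⟨w, hw, hgw⟩ := intermediate_value_Icc hz.2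
    (hg.mono (Icc_subset_Icc_left (hu.1.1.trans hz.1))) ⟨hlt.le, hgab⟩
  have hwS : w ≤ sSup S := le_csSup hSb ⟨⟨hu.1.1.trans (hz.1.trans hw.1), hw.2⟩, hgw⟩
  have hzu : z = sSup S := le_antisymm (hw.1.trans hwS) hz.1
  rw [hzu, hu.2]

theorem ContinuousOn.exists_mem_Icc_eq_right_forall_le (hab : a ≤ b)
    (hg : ContinuousOn g (Icc a b)) (hgab : g a ≤ g b) :
    ∃ v ∈ Icc a b, g v = g b ∧ ∀ z ∈ Icc a v, g z ≤ g b := by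
  obtain ⟨v, hv, hgv, hle⟩ := ContinuousOn.exists_mem_Icc_eq_left_forall_le (α := αᵒᵈ)
    (δ := δᵒᵈ) (g := toDual ∘ g ∘ ofDual) (a := toDual b) (b := toDual a) hab
    (by rw [Icc_toDual]; exact hg) hgab
  exact ⟨ofDual v, ⟨hv.2, hv.1⟩, hgv, fun z hz => hle (toDual z) ⟨hz.2, hz.1⟩⟩

theorem ContinuousOn.exists_Icc_image_eq_Icc (hab : a ≤ b)
    (hg : ContinuousOn g (Icc a b)) (hgab : g a ≤ g b) :
    ∃ u v, a ≤ u ∧ u ≤ v ∧ v ≤ b ∧ g '' Icc u v = Icc (g a) (g b) := by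
  obtain ⟨u, hu, hgu, hge⟩ := hg.exists_mem_Icc_eq_left_forall_le hab hgab
  obtain ⟨v, hv, hgv, hle⟩ :=
    (hg.mono (Icc_subset_Icc_left hu.1)).exists_mem_Icc_eq_right_forall_le hu.2 (hgu ▸ hgab)
  have hmaps : MapsTo g (Icc u v) (Icc (g a) (g b)) := fun z hz =>
    ⟨hge z ⟨hz.1, hz.2.trans hv.2⟩, hle z hz⟩
  refine ⟨u, v, hu.1, hv.1, hv.2, hmaps.image_subset.antisymm ?_⟩
  simpa [hgu, hgv] using intermediate_value_Icc hv.1 (hg.mono (Icc_subset_Icc hu.1 hv.2))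

theorem ContinuousOn.exists_Icc_image_eq_Icc_of_ge (hab : a ≤ b)
    (hg : ContinuousOn g (Icc a b)) (hgab : g b ≤ g a) :
    ∃ u v, a ≤ u ∧ u ≤ v ∧ v ≤ b ∧ g '' Icc u v = Icc (g b) (g a) := by
  obtain ⟨u, v, hu, huv, hv, himg⟩ := ContinuousOn.exists_Icc_image_eq_Icc (α := αᵒᵈ)
    (g := g ∘ ofDual) (a := toDual b) (b := toDual a) hab (by rw [Icc_toDual]; exact hg) hgab
  refine ⟨ofDual v, ofDual u, hv, huv, hu, ?_⟩
  have hIcc : Icc u v = ofDual ⁻¹' Icc (ofDual v) (ofDual u) :=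
    Icc_toDual (a := ofDual u) (b := ofDual v)
  rw [image_comp, hIcc, ofDual.image_preimage] at himg
  exact himg

theorem ContinuousOn.exists_Icc_image_eq_uIcc (hab : a ≤ b) (hg : ContinuousOn g (Icc a b)) :
    ∃ u v, a ≤ u ∧ u ≤ v ∧ v ≤ b ∧ g '' Icc u v = uIcc (g a) (g b) := by
  rcases le_total (g a) (g b) with hgab | hgba
  · rw [uIcc_of_le hgab]
    exact hg.exists_Icc_image_eq_Icc hab hgab
  · rw [uIcc_of_ge hgba]
    exact hg.exists_Icc_image_eq_Icc_of_ge hab hgba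

theorem ContinuousOn.exists_uIcc_subset_image_eq {c d : δ} (hg : ContinuousOn g (uIcc a b))
    (hsurj : SurjOn g (uIcc a b) (uIcc c d)) :
    ∃ u v, uIcc u v ⊆ uIcc a b ∧ g '' uIcc u v = uIcc c d := by
  obtain ⟨x, hx, rfl⟩ := hsurj left_mem_uIcc
  obtain ⟨y, hy, rfl⟩ := hsurj right_mem_uIcc
  suffices ∃ u v, uIcc u v ⊆ uIcc x y ∧ g '' uIcc u v = uIcc (g x) (g y) by
    obtain ⟨u, v, hsub, himg⟩ := this
    exact ⟨u, v, hsub.trans (uIcc_subset_uIcc hx hy), himg⟩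
  replace hg := hg.mono (uIcc_subset_uIcc hx hy)
  clear hsurj hx hy
  wlog hxy : x ≤ y generalizing x y
  · simpa only [uIcc_comm] using this y x (uIcc_comm x y ▸ hg) (le_of_not_ge hxy)
  rw [uIcc_of_le hxy] at hg ⊢
  obtain ⟨u, v, hu, huv, hv, himg⟩ := hg.exists_Icc_image_eq_uIcc hxy
  exact ⟨u, v, uIcc_of_le huv ▸ Icc_subset_Icc hu hv, uIcc_of_le huv ▸ himg⟩

end IntervalCovering

theorem Function.IsPeriodicPt.minimalPeriod_eq_of_iterate_mem {β : Type*} {f : β → β} {y q : β}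
    {L R : Set β} {m : ℕ} (hper : IsPeriodicPt f (m + 2) y) (hR : ∀ k ≤ m, f^[k] y ∈ R)
    (hL : f^[m + 1] y ∈ L) (hLR : L ∩ R ⊆ {q}) (hq : f^[2] q ∉ R) :
    minimalPeriod f y = m + 2 := by
  refine le_antisymm (hper.minimalPeriod_le (by omega)) (not_lt.1 fun hlt => hq ?_)
  have hpos := hper.minimalPeriod_pos (by omega)
  -- a shorter period confines the whole orbit to the iterates `0, …, m`, which lie in `R`
  have horbit (k : ℕ) : f^[k] y ∈ R :=
    iterate_mod_minimalPeriod_eq (f := f) ▸ hR _ (by have := Nat.mod_lt k hpos; omega)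
  have hmid : f^[m + 1] y = q := hLR ⟨hL, horbit (m + 1)⟩
  simpa only [← hmid, ← iterate_add_apply] using horbit (2 + (m + 1))

theorem mem_uIoo_or_mem_uIoo_or_mem_uIoo {α : Type*} [LinearOrder α] {a b c : α} (hab : a ≠ b)
    (hbc : b ≠ c) (hca : c ≠ a) : b ∈ uIoo a c ∨ c ∈ uIoo b a ∨ a ∈ uIoo c b := by
  simp only [uIoo, mem_Ioo, inf_lt_iff, lt_sup_iff]
  grind

theorem uIcc_inter_uIcc_subset_singleton {α : Type*} [LinearOrder α] {p q r : α}
    (hq : q ∈ uIoo p r) : uIcc p q ∩ uIcc r q ⊆ {q} := by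
  simp only [uIoo, mem_Ioo, inf_lt_iff, lt_sup_iff] at hq
  intro x hx
  simp only [mem_inter_iff, mem_uIcc] at hx
  grind

section IntervalMaps

variable {α : Type*} [ConditionallyCompleteLinearOrder α] [TopologicalSpace α] [OrderTopology α]
  [DenselyOrdered α] {f : α → α} {s : Set α}

theorem exists_uIcc_iterate_mapsTo_of_surjOn (hf : ContinuousOn f s) (hfs : MapsTo f s s)
    {l r : ℕ → α} (hs : uIcc (l 0) (r 0) ⊆ s) :
    ∀ n, (∀ k < n, SurjOn f (uIcc (l k) (r k)) (uIcc (l (k + 1)) (r (k + 1)))) →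
      ∃ u v, uIcc u v ⊆ uIcc (l 0) (r 0) ∧
        (∀ k ≤ n, MapsTo f^[k] (uIcc u v) (uIcc (l k) (r k))) ∧
        f^[n] '' uIcc u v = uIcc (l n) (r n)
  | 0, _ => ⟨l 0, r 0, subset_rfl, fun k hk => by simp [Nat.le_zero.1 hk, mapsTo_id], image_id _⟩
  | n + 1, hsurj => by
    obtain ⟨u, v, hsub, hmaps, himg⟩ :=
      exists_uIcc_iterate_mapsTo_of_surjOn hf hfs hs n fun k hk => hsurj k (by omega)
    have hcover : SurjOn f^[n + 1] (uIcc u v) (uIcc (l (n + 1)) (r (n + 1))) := by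
      rw [SurjOn, iterate_succ', image_comp, himg]
      exact hsurj n n.lt_succ_self
    obtain ⟨u', v', hsub', himg'⟩ :=
      ((hf.iterate hfs (n + 1)).mono (hsub.trans hs)).exists_uIcc_subset_image_eq hcover
    refine ⟨u', v', hsub'.trans hsub, fun k hk => ?_, himg'⟩
    rcases hk.lt_or_eq with hk | rfl
    · exact (hmaps k (by omega)).mono_left hsub'
    · exact himg' ▸ mapsTo_image _ _

theorem exists_isPeriodicPt_of_surjOn (hf : ContinuousOn f s) (hfs : MapsTo f s s)
    {l r : ℕ → α} (hs : uIcc (l 0) (r 0) ⊆ s) {n : ℕ} (hl : l n = l 0) (hr : r n = r 0)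
    (hsurj : ∀ k < n, SurjOn f (uIcc (l k) (r k)) (uIcc (l (k + 1)) (r (k + 1)))) :
    ∃ y, IsPeriodicPt f n y ∧ ∀ k ≤ n, f^[k] y ∈ uIcc (l k) (r k) := by
  obtain ⟨u, v, hsub, hmaps, himg⟩ := exists_uIcc_iterate_mapsTo_of_surjOn hf hfs hs n hsurj
  rw [hl, hr] at himg
  obtain ⟨y, hy, hfix⟩ := exists_mem_uIcc_isFixedPt_of_surjOn
    ((hf.iterate hfs n).mono (hsub.trans hs)) (by rwa [SurjOn, himg])
  exact ⟨y, hfix, fun k hk => hmaps k hk hy⟩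

theorem exists_minimalPeriod_eq_of_three_cycle (hf : ContinuousOn f s) (hfs : MapsTo f s s)
    (hs : s.OrdConnected) {p q r : α} (hp : p ∈ s) (hr : r ∈ s) (hq : q ∈ uIoo p r)
    (hpq : f p = q) (hqr : f q = r) (hrp : f r = p) {n : ℕ} (hn : 0 < n) :
    ∃ y ∈ s, minimalPeriod f y = n := by
  have hq' : q ∈ uIcc p r := uIoo_subset_uIcc_self hq
  have hLpr : uIcc p q ⊆ uIcc p r := uIcc_subset_uIcc left_mem_uIcc hq'
  have hRpr : uIcc r q ⊆ uIcc p r := uIcc_subset_uIcc right_mem_uIcc hq'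
  have hcont : ContinuousOn f (uIcc p r) := hf.mono (hs.uIcc_subset hp hr)
  have hR : uIcc p r ⊆ f '' uIcc r q := by
    simpa only [hrp, hqr] using intermediate_value_uIcc (hcont.mono hRpr)
  have hRR : SurjOn f (uIcc r q) (uIcc r q) := hRpr.trans hR
  have hRL : SurjOn f (uIcc r q) (uIcc p q) := hLpr.trans hR
  have hLR : SurjOn f (uIcc p q) (uIcc r q) := by
    rw [SurjOn]
    simpa only [hpq, hqr, uIcc_comm q r] using intermediate_value_uIcc (hcont.mono hLpr)
  obtain ⟨m, rfl⟩ | ⟨m, rfl⟩ : n = 1 ∨ ∃ m, n = m + 2 := by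
    rcases n with _ | _ | m <;> simp_all
  · obtain ⟨y, hy, hfix⟩ := exists_mem_uIcc_isFixedPt_of_surjOn (hcont.mono hRpr) hRR
    exact ⟨y, hs.uIcc_subset hp hr (hRpr hy), minimalPeriod_eq_one_iff_isFixedPt.2 hfix⟩
  -- `uIcc (l k) q` is `R`, except at step `m + 1` where it is `L`
  set l : ℕ → α := fun k => if k = m + 1 then p else r
  have hRs : uIcc r q ⊆ s := hRpr.trans (hs.uIcc_subset hp hr)
  obtain ⟨y, hper, hy⟩ := exists_isPeriodicPt_of_surjOn (l := l) (r := fun _ => q) (n := m + 2)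
    hf hfs (by simpa [l] using hRs) (by simp [l]) rfl fun k hk => by
      simp only [l]
      split_ifs <;> omega
  have hpR : f^[2] q ∉ uIcc r q := by
    rw [show f^[2] q = p by simp [hqr, hrp]]
    intro hpR
    exact left_notMem_uIoo (uIcc_inter_uIcc_subset_singleton hq ⟨left_mem_uIcc, hpR⟩ ▸ hq)
  refine ⟨y, hRs (by simpa [l] using hy 0 (by omega)),
    hper.minimalPeriod_eq_of_iterate_mem (fun k hk => ?_)
      (by simpa [l] using hy (m + 1) (by omega)) (uIcc_inter_uIcc_subset_singleton hq) hpR⟩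
  simpa [l, show k ≠ m + 1 by omega] using hy k (by omega)

theorem exists_minimalPeriod_eq_of_minimalPeriod_eq_three (hf : ContinuousOn f s)
    (hfs : MapsTo f s s) (hs : s.OrdConnected) {x : α} (hx : x ∈ s)
    (h3 : minimalPeriod f x = 3) {n : ℕ} (hn : 0 < n) : ∃ y ∈ s, minimalPeriod f y = n := by
  have hne (i j : ℕ) (hi : i < 3) (hj : j < 3) (hij : i ≠ j) : f^[i] x ≠ f^[j] x :=
    fun h => hij (iterate_injOn_Iio_minimalPeriod (h3 ▸ hi) (h3 ▸ hj) h)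
  have hcycle : f^[3] x = x := h3 ▸ iterate_minimalPeriod
  rcases mem_uIoo_or_mem_uIoo_or_mem_uIoo (hne 0 1 (by omega) (by omega) (by omega))
    (hne 1 2 (by omega) (by omega) (by omega)) (hne 2 0 (by omega) (by omega) (by omega))
    with h | h | h
  · exact exists_minimalPeriod_eq_of_three_cycle hf hfs hs hx (hfs (hfs hx)) h rfl rfl hcycle hn
  · exact exists_minimalPeriod_eq_of_three_cycle hf hfs hs (hfs hx) hx h rfl hcycle rfl hn
  · exact exists_minimalPeriod_eq_of_three_cycle hf hfs hs (hfs (hfs hx)) (hfs hx) h hcycle rfl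
      rfl hn

end IntervalMaps

theorem stmt_5_general (a b : ℝ) (f : ℝ → ℝ)
    (hf : ContinuousOn f (Set.Icc a b))
    (hmaps : Set.MapsTo f (Set.Icc a b) (Set.Icc a b))
    (hx : ∃ x ∈ Set.Icc a b, f^[3] x = x ∧ ∀ i, 0 < i → i < 3 → f^[i] x ≠ x) :
    ∀ n : ℕ, 1 ≤ n →
      ∃ y ∈ Set.Icc a b, f^[n] y = y ∧ ∀ i, 0 < i → i < n → f^[i] y ≠ y := by
  obtain ⟨x, hx, hx3, hxi⟩ := hx
  have h3 : minimalPeriod f x = 3 := minimalPeriod_eq_prime hx3 (hxi 1 one_pos (by norm_num))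
  intro n hn
  obtain ⟨y, hy, hyn⟩ :=
    exists_minimalPeriod_eq_of_minimalPeriod_eq_three hf hmaps ordConnected_Icc hx h3 hn
  exact ⟨y, hy, hyn ▸ iterate_minimalPeriod, fun i hi hin =>
    not_isPeriodicPt_of_pos_of_lt_minimalPeriod hi.ne' (hyn ▸ hin)⟩

/-- If f has a periodic point of least period 3, then f has periodic points
of every least period n ≥ 1. -/
theorem stmt_5 (a b : ℝ) (hab : a ≤ b) (f : ℝ → ℝ)
    (hf : ContinuousOn f (Set.Icc a b))
    (hmaps : Set.MapsTo f (Set.Icc a b) (Set.Icc a b))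
    (hx : ∃ x ∈ Set.Icc a b, f^[3] x = x ∧ ∀ i, 0 < i → i < 3 → f^[i] x ≠ x) :
    ∀ n : ℕ, 1 ≤ n →
      ∃ y ∈ Set.Icc a b, f^[n] y = y ∧ ∀ i, 0 < i → i < n → f^[i] y ≠ y :=
  stmt_5_general a b f hf hmaps hx
end

section
/- Let f : I → I be continuous on a compact interval. If f has a periodic point of odd least period m ≥ 3, then f has a periodic point of least period n for every integer n ≥ m + 1. -/
open Set
open scoped Classical

lemma sub_cover_aux (g : ℝ → ℝ) (u v c d : ℝ)
    (hg : ContinuousOn g (Icc u v)) (hcd : c ≤ d)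
    (s t : ℝ) (hs : s ∈ Icc u v) (ht : t ∈ Icc u v) (hst : s ≤ t)
    (hgs : g s = c) (hgt : g t = d) :
    ∃ u' v', u ≤ u' ∧ u' ≤ v' ∧ v' ≤ v ∧ g '' Icc u' v' = Icc c d := by
  have hIcc_sub : Icc s t ⊆ Icc u v := Icc_subset_Icc hs.1 ht.2
  have hgst : ContinuousOn g (Icc s t) := hg.mono hIcc_sub
  set K₁ : Set ℝ := Icc s t ∩ g ⁻¹' {c} with hK₁
  have hK₁c : IsClosed K₁ :=
    hgst.preimage_isClosed_of_isClosed isClosed_Icc isClosed_singleton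
  have hK₁comp : IsCompact K₁ :=
    isCompact_Icc.of_isClosed_subset hK₁c inter_subset_left
  have hK₁ne : K₁.Nonempty := ⟨s, ⟨le_refl s, hst⟩, hgs⟩
  set s' := sSup K₁ with hs'def
  have hs'mem : s' ∈ K₁ := hK₁comp.sSup_mem hK₁ne
  have hgs' : g s' = c := hs'mem.2
  have hs'st : s' ∈ Icc s t := hs'mem.1
  set K₂ : Set ℝ := Icc s' t ∩ g ⁻¹' {d} with hK₂
  have hsub2 : Icc s' t ⊆ Icc s t := Icc_subset_Icc hs'st.1 le_rfl
  have hK₂c : IsClosed K₂ :=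
    (hgst.mono hsub2).preimage_isClosed_of_isClosed isClosed_Icc isClosed_singleton
  have hK₂comp : IsCompact K₂ :=
    isCompact_Icc.of_isClosed_subset hK₂c inter_subset_left
  have hK₂ne : K₂.Nonempty := ⟨t, ⟨hs'st.2, le_refl t⟩, hgt⟩
  set t' := sInf K₂ with ht'def
  have ht'mem : t' ∈ K₂ := hK₂comp.sInf_mem hK₂ne
  have hgt' : g t' = d := ht'mem.2
  have ht'st : t' ∈ Icc s' t := ht'mem.1
  have hsub3 : Icc s' t' ⊆ Icc s t := Icc_subset_Icc hs'st.1 ht'st.2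
  have hgcont3 : ContinuousOn g (Icc s' t') := hgst.mono hsub3
  refine ⟨s', t', hs.1.trans hs'st.1, ht'st.1, ht'st.2.trans ht.2, ?_⟩
  apply Subset.antisymm
  · rintro _ ⟨z, hz, rfl⟩
    by_contra hout
    rcases not_and_or.mp (fun h : c ≤ g z ∧ g z ≤ d => hout ⟨h.1, h.2⟩) with h | h
    · push_neg at h
      have hsub4 : Icc z t' ⊆ Icc s' t' := Icc_subset_Icc hz.1 le_rfl
      have hmem : c ∈ Icc (g z) (g t') := ⟨h.le, by rw [hgt']; exact hcd⟩
      obtain ⟨w, hw, hgw⟩ := intermediate_value_Icc hz.2 (hgcont3.mono hsub4) hmem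
      have hwK₁ : w ∈ K₁ :=
        ⟨⟨hs'st.1.trans (hz.1.trans hw.1), (hw.2.trans ht'st.2)⟩, hgw⟩
      have : w ≤ s' := le_csSup hK₁comp.bddAbove hwK₁
      have hzw : z = w := le_antisymm hw.1 (this.trans hz.1)
      rw [hzw, hgw] at h; exact lt_irrefl c h
    · push_neg at h
      have hsub4 : Icc s' z ⊆ Icc s' t' := Icc_subset_Icc le_rfl hz.2
      have hmem : d ∈ Icc (g s') (g z) := ⟨by rw [hgs']; exact hcd, h.le⟩
      obtain ⟨w, hw, hgw⟩ := intermediate_value_Icc hz.1 (hgcont3.mono hsub4) hmem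
      have hwK₂ : w ∈ K₂ := ⟨⟨hw.1, (hw.2.trans hz.2).trans ht'st.2⟩, hgw⟩
      have : t' ≤ w := csInf_le hK₂comp.bddBelow hwK₂
      have hzw : z = w := le_antisymm (hz.2.trans' (le_refl z) |>.trans' le_rfl |>.trans
        (le_refl t') |> fun _ => (le_trans (le_refl z) hz.2).trans this) hw.2
      rw [hzw, hgw] at h; exact lt_irrefl d h
  · have := intermediate_value_Icc ht'st.1 hgcont3
    rw [hgs', hgt'] at this
    exact this

lemma sub_cover (g : ℝ → ℝ) (u v c d : ℝ) (huv : u ≤ v)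
    (hg : ContinuousOn g (Icc u v)) (hcd : c ≤ d)
    (hsub : Icc c d ⊆ g '' Icc u v) :
    ∃ u' v', u ≤ u' ∧ u' ≤ v' ∧ v' ≤ v ∧ g '' Icc u' v' = Icc c d := by
  obtain ⟨s, hs, hgs⟩ := hsub (left_mem_Icc.mpr hcd)
  obtain ⟨t, ht, hgt⟩ := hsub (right_mem_Icc.mpr hcd)
  rcases le_total s t with hst | hts
  · exact sub_cover_aux g u v c d hg hcd s t hs ht hst hgs hgt
  · -- reflect: h z = g (u+v-z)
    set h : ℝ → ℝ := fun z => g (u + v - z) with hh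
    have hrefl : ∀ z, z ∈ Icc u v → u + v - z ∈ Icc u v := by
      intro z hz; constructor <;> [linarith [hz.2]; linarith [hz.1]]
    have hcont : ContinuousOn h (Icc u v) := by
      apply hg.comp (by fun_prop) hrefl
    have hs2 : u + v - s ∈ Icc u v := hrefl s hs
    have ht2 : u + v - t ∈ Icc u v := hrefl t ht
    have horder : u + v - s ≤ u + v - t := by linarith
    have h1 : h (u + v - s) = c := by simp [hh, hgs]
    have h2 : h (u + v - t) = d := by simp [hh, hgt]
    obtain ⟨u', v', h1', h2', h3', h4'⟩ :=
      sub_cover_aux h u v c d hcont hcd _ _ hs2 ht2 horder h1 h2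
    refine ⟨u + v - v', u + v - u', by linarith, by linarith, by linarith, ?_⟩
    rw [← h4']
    ext y
    simp only [mem_image, hh]
    constructor
    · rintro ⟨z, hz, rfl⟩
      exact ⟨u + v - z, ⟨by linarith [hz.2], by linarith [hz.1]⟩, by ring_nf⟩
    · rintro ⟨z, hz, rfl⟩
      refine ⟨u + v - z, ⟨by linarith [hz.2], by linarith [hz.1]⟩, by ring_nf⟩

lemma iter_cont (f : ℝ → ℝ) (a b : ℝ) (hf : ContinuousOn f (Icc a b))
    (hmaps : MapsTo f (Icc a b) (Icc a b)) :
    ∀ k, ContinuousOn (f^[k]) (Icc a b) := by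
  intro k
  induction k with
  | zero => simpa using continuousOn_id
  | succ k ih =>
    rw [Function.iterate_succ]
    exact ih.comp hf hmaps

lemma loop_lemma (f : ℝ → ℝ) (a b : ℝ) (hf : ContinuousOn f (Icc a b))
    (hmaps : MapsTo f (Icc a b) (Icc a b))
    (n : ℕ) (hn : 0 < n) (D : ℕ → ℝ × ℝ)
    (hD : ∀ j, j ≤ n → (D j).1 ≤ (D j).2 ∧ Icc (D j).1 (D j).2 ⊆ Icc a b)
    (hcov : ∀ j, j < n → Icc (D (j+1)).1 (D (j+1)).2 ⊆ f '' Icc (D j).1 (D j).2)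
    (hclose : D n = D 0) :
    ∃ y ∈ Icc (D 0).1 (D 0).2, f^[n] y = y ∧ ∀ j, j ≤ n → f^[j] y ∈ Icc (D j).1 (D j).2 := by
  -- nested interval construction
  have key : ∀ j, j ≤ n → ∃ α β, α ≤ β ∧ Icc α β ⊆ Icc (D 0).1 (D 0).2 ∧
      f^[j] '' Icc α β = Icc (D j).1 (D j).2 ∧
      ∀ i, i ≤ j → f^[i] '' Icc α β ⊆ Icc (D i).1 (D i).2 := by
    intro j
    induction j with
    | zero =>
      intro _
      refine ⟨(D 0).1, (D 0).2, (hD 0 (Nat.zero_le n)).1, Subset.rfl, by simp, ?_⟩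
      intro i hi; interval_cases i; simp
    | succ j ih =>
      intro hj
      obtain ⟨α, β, hαβ, hsub0, himg, hall⟩ := ih (le_of_lt (Nat.lt_of_succ_le hj))
      have hsubab : Icc α β ⊆ Icc a b := hsub0.trans (hD 0 (Nat.zero_le n)).2
      have hcontj : ContinuousOn (f^[j+1]) (Icc α β) :=
        (iter_cont f a b hf hmaps (j+1)).mono hsubab
      have himg1 : Icc (D (j+1)).1 (D (j+1)).2 ⊆ f^[j+1] '' Icc α β := by
        have : f^[j+1] '' Icc α β = f '' (f^[j] '' Icc α β) := by
          rw [Function.iterate_succ', Set.image_comp]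
        rw [this, himg]
        exact hcov j (Nat.lt_of_succ_le hj)
      obtain ⟨α', β', h1, h2, h3, h4⟩ :=
        sub_cover (f^[j+1]) α β (D (j+1)).1 (D (j+1)).2 hαβ hcontj
          (hD (j+1) hj).1 himg1
      have hsub' : Icc α' β' ⊆ Icc α β := Icc_subset_Icc h1 h3
      refine ⟨α', β', h2, hsub'.trans hsub0, h4, ?_⟩
      intro i hi
      rcases Nat.lt_succ_iff_lt_or_eq.mp (Nat.lt_succ_of_le hi) with hlt | heq
      · exact (Set.image_mono hsub').trans (hall i (Nat.lt_succ_iff.mp hlt))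
      · rw [heq, h4]
  obtain ⟨α, β, hαβ, hsub0, himg, hall⟩ := key n le_rfl
  rw [hclose] at himg
  -- find fixed point of f^[n] in [α,β]
  have hsubab : Icc α β ⊆ Icc a b := hsub0.trans (hD 0 (Nat.zero_le n)).2
  have hcontn : ContinuousOn (f^[n]) (Icc α β) :=
    (iter_cont f a b hf hmaps n).mono hsubab
  obtain ⟨s, hs, hgs⟩ : ∃ s ∈ Icc α β, f^[n] s = (D 0).1 := by
    have : (D 0).1 ∈ f^[n] '' Icc α β := by rw [himg]; exact left_mem_Icc.mpr (hD 0 (Nat.zero_le n)).1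
    obtain ⟨s, hs, h⟩ := this; exact ⟨s, hs, h⟩
  obtain ⟨t, ht, hgt⟩ : ∃ t ∈ Icc α β, f^[n] t = (D 0).2 := by
    have : (D 0).2 ∈ f^[n] '' Icc α β := by rw [himg]; exact right_mem_Icc.mpr (hD 0 (Nat.zero_le n)).1
    obtain ⟨t, ht, h⟩ := this; exact ⟨t, ht, h⟩
  have hcont2 : ContinuousOn (fun z => f^[n] z - z) (Icc α β) := hcontn.sub continuousOn_id
  have huIcc : uIcc s t ⊆ Icc α β := uIcc_subset_Icc hs ht
  have hzero : (0:ℝ) ∈ uIcc (f^[n] s - s) (f^[n] t - t) := by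
    have h1 : f^[n] s - s ≤ 0 := by
      have := hsub0 hs; rw [hgs]; linarith [this.1]
    have h2 : 0 ≤ f^[n] t - t := by
      have := hsub0 ht; rw [hgt]; linarith [this.2]
    rcases le_total (f^[n] s - s) (f^[n] t - t) with h | h
    · rw [uIcc_of_le h]; exact ⟨h1, h2⟩
    · rw [uIcc_of_ge h]; exact ⟨h.trans h1, h2.trans h⟩
  obtain ⟨y, hy, hy0⟩ := intermediate_value_uIcc (hcont2.mono huIcc) hzero
  have hyab : y ∈ Icc α β := huIcc hy
  have hfix : f^[n] y = y := by
    have : f^[n] y - y = 0 := hy0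
    linarith
  refine ⟨y, hsub0 hyab, hfix, ?_⟩
  intro j hj
  exact hall j hj ⟨y, hyab, rfl⟩


lemma crossing (f : ℝ → ℝ) (P : Finset ℝ) (hfP : ∀ z ∈ P, f z ∈ P)
    (z₀ z₁ : ℝ) (hz₀P : z₀ ∈ P) (hz₁P : z₁ ∈ P) (u v : ℝ) (huv : u < v)
    (hgap : ∀ z ∈ P, z ≤ u ∨ v ≤ z) (h0 : f z₀ ≤ u) (h1 : v ≤ f z₁) :
    ∃ w ∈ P, ∃ w' ∈ P, w < w' ∧ (∀ z ∈ P, ¬(w < z ∧ z < w')) ∧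
      min z₀ z₁ ≤ w ∧ w' ≤ max z₀ z₁ ∧ min (f w) (f w') ≤ u ∧ v ≤ max (f w) (f w') := by
  have hne : z₀ ≠ z₁ := by
    intro h; rw [h] at h0; linarith
  rcases lt_or_gt_of_ne hne with hlt | hgt
  · -- z₀ < z₁
    set T := P.filter (fun z => z₀ ≤ z ∧ z ≤ z₁ ∧ f z ≤ u) with hT
    have hTne : T.Nonempty := ⟨z₀, by simp [hT, hz₀P, le_of_lt hlt, h0]⟩
    set w := T.max' hTne with hw
    have hwT : w ∈ T := T.max'_mem hTne
    simp only [hT, Finset.mem_filter] at hwT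
    obtain ⟨hwP, hwz₀, hwz₁, hwfu⟩ := hwT
    have hwlt : w < z₁ := by
      rcases lt_or_eq_of_le hwz₁ with h | h
      · exact h
      · exfalso; rw [h] at hwfu; linarith
    set S := P.filter (fun z => w < z ∧ z ≤ z₁) with hS
    have hSne : S.Nonempty := ⟨z₁, by simp [hS, hz₁P, hwlt]⟩
    set w' := S.min' hSne with hw'
    have hw'S : w' ∈ S := S.min'_mem hSne
    simp only [hS, Finset.mem_filter] at hw'S
    obtain ⟨hw'P, hww', hw'z₁⟩ := hw'S
    have hadj : ∀ z ∈ P, ¬(w < z ∧ z < w') := by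
      rintro z hzP ⟨h2, h3⟩
      have : z ∈ S := by simp [hS, hzP, h2, le_of_lt (h3.trans_le hw'z₁)]
      exact absurd (S.min'_le z this) (not_le.mpr h3)
    have hfw' : v ≤ f w' := by
      have hnf : ¬ f w' ≤ u := by
        intro hfu
        have : w' ∈ T := by
          simp [hT, hw'P, (hwz₀.trans (le_of_lt hww')), hw'z₁, hfu]
        exact absurd (T.le_max' w' this) (not_le.mpr hww')
      rcases hgap (f w') (hfP w' hw'P) with h | h
      · exact absurd h hnf
      · exact h
    refine ⟨w, hwP, w', hw'P, hww', hadj, ?_, ?_, ?_, ?_⟩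
    · exact (min_le_left z₀ z₁).trans hwz₀
    · exact hw'z₁.trans (le_max_right z₀ z₁)
    · exact (min_le_left _ _).trans hwfu
    · exact hfw'.trans (le_max_right _ _)
  · -- z₁ < z₀
    set T := P.filter (fun z => z₁ ≤ z ∧ z ≤ z₀ ∧ f z ≤ u) with hT
    have hTne : T.Nonempty := ⟨z₀, by simp [hT, hz₀P, le_of_lt hgt, h0]⟩
    set w := T.min' hTne with hw
    have hwT : w ∈ T := T.min'_mem hTne
    simp only [hT, Finset.mem_filter] at hwT
    obtain ⟨hwP, hwz₁, hwz₀, hwfu⟩ := hwT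
    have hwgt : z₁ < w := by
      rcases lt_or_eq_of_le hwz₁ with h | h
      · exact h
      · exfalso; rw [← h] at hwfu; linarith
    set S := P.filter (fun z => z₁ ≤ z ∧ z < w) with hS
    have hSne : S.Nonempty := ⟨z₁, by simp [hS, hz₁P, hwgt]⟩
    set w' := S.max' hSne with hw'
    have hw'S : w' ∈ S := S.max'_mem hSne
    simp only [hS, Finset.mem_filter] at hw'S
    obtain ⟨hw'P, hw'z₁, hw'w⟩ := hw'S
    have hadj : ∀ z ∈ P, ¬(w' < z ∧ z < w) := by
      rintro z hzP ⟨h2, h3⟩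
      have : z ∈ S := by simp [hS, hzP, h3, (hw'z₁.trans (le_of_lt h2))]
      exact absurd (S.le_max' z this) (not_le.mpr h2)
    have hfw' : v ≤ f w' := by
      have hnf : ¬ f w' ≤ u := by
        intro hfu
        have : w' ∈ T := by
          simp [hT, hw'P, hw'z₁, ((le_of_lt hw'w).trans hwz₀), hfu]
        exact absurd (T.min'_le w' this) (not_le.mpr hw'w)
      rcases hgap (f w') (hfP w' hw'P) with h | h
      · exact absurd h hnf
      · exact h
    refine ⟨w', hw'P, w, hwP, hw'w, hadj, ?_, ?_, ?_, ?_⟩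
    · exact (min_le_right z₀ z₁).trans hw'z₁
    · exact hwz₀.trans (le_max_left z₀ z₁)
    · exact (min_le_right _ _).trans hwfu
    · exact hfw'.trans (le_max_left _ _)


/-- If f has a periodic point of odd least period m ≥ 3, then f has a periodic
point of least period n for every n ≥ m + 1. -/
theorem stmt_6 (a b : ℝ) (hab : a ≤ b) (f : ℝ → ℝ)
    (hf : ContinuousOn f (Set.Icc a b))
    (hmaps : Set.MapsTo f (Set.Icc a b) (Set.Icc a b))
    (m : ℕ) (hm : 3 ≤ m) (hodd : Odd m)
    (hx : ∃ x ∈ Set.Icc a b, f^[m] x = x ∧ ∀ i, 0 < i → i < m → f^[i] x ≠ x) :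
    ∀ n : ℕ, m + 1 ≤ n →
      ∃ y ∈ Set.Icc a b, f^[n] y = y ∧ ∀ i, 0 < i → i < n → f^[i] y ≠ y := by
  obtain ⟨x, hxab, hxm, hxleast⟩ := hx
  have hm0 : 0 < m := by omega
  -- the orbit
  set P : Finset ℝ := (Finset.range m).image (fun i => f^[i] x) with hPdef
  have hmemP : ∀ z, z ∈ P ↔ ∃ i, i < m ∧ f^[i] x = z := by
    intro z; simp [hPdef, Finset.mem_image, Finset.mem_range]
  have horb : ∀ i, f^[i] x = f^[i % m] x := by
    intro i
    conv_lhs => rw [show i = m * (i / m) + i % m from (Nat.div_add_mod i m).symm ▸ rfl]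
    rw [Nat.add_comm, Function.iterate_add_apply]
    congr 1
    induction (i / m) with
    | zero => simp
    | succ k ih => rw [Nat.mul_succ, Function.iterate_add_apply, hxm, ih]
  have hiterP : ∀ i, f^[i] x ∈ P := by
    intro i
    rw [horb i, hmemP]
    exact ⟨i % m, Nat.mod_lt i hm0, rfl⟩
  have hPx : x ∈ P := by simpa using hiterP 0
  have hPab : ∀ z ∈ P, z ∈ Icc a b := by
    intro z hz
    obtain ⟨i, _, rfl⟩ := (hmemP z).mp hz
    exact hmaps.iterate i hxab
  have hfP : ∀ z ∈ P, f z ∈ P := by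
    intro z hz
    obtain ⟨i, _, rfl⟩ := (hmemP z).mp hz
    rw [← Function.iterate_succ_apply' f i x]
    exact hiterP (i+1)
  have hfPiter : ∀ k, ∀ z ∈ P, f^[k] z ∈ P := by
    intro k
    induction k with
    | zero => simp
    | succ k ih =>
      intro z hz
      rw [Function.iterate_succ_apply' f k z]
      exact hfP _ (ih z hz)
  have hPm : ∀ z ∈ P, f^[m] z = z := by
    intro z hz
    obtain ⟨i, _, rfl⟩ := (hmemP z).mp hz
    rw [← Function.iterate_add_apply, Nat.add_comm, Function.iterate_add_apply, hxm]
  have hinj : ∀ z ∈ P, ∀ z' ∈ P, f z = f z' → z = z' := by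
    intro z hz z' hz' hff
    have h1 : f^[m-1] (f z) = f^[m-1] (f z') := by rw [hff]
    rw [← Function.iterate_succ_apply, ← Function.iterate_succ_apply] at h1
    rw [show (m-1).succ = m by omega] at h1
    rwa [hPm z hz, hPm z' hz'] at h1
  have hfix : ∀ z ∈ P, ∀ k, f^[k] z = z → f^[k] x = x := by
    intro z hz k hzk
    obtain ⟨i, him, rfl⟩ := (hmemP z).mp hz
    have e1 : f^[m - i + k + i] x = f^[m - i] (f^[k] (f^[i] x)) := by
      rw [Function.iterate_add_apply, Function.iterate_add_apply]
    rw [hzk] at e1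
    have e2 : f^[m - i] (f^[i] x) = x := by
      rw [← Function.iterate_add_apply, show m - i + i = m by omega, hxm]
    have e3 : f^[m - i + k + i] x = f^[k] x := by
      rw [show m - i + k + i = k + m by omega, Function.iterate_add_apply, hxm]
    rw [← e3, e1, e2]
  have hno1 : ∀ z ∈ P, f z ≠ z := by
    intro z hz h
    have := hfix z hz 1 (by simpa using h)
    exact hxleast 1 one_pos (by omega) (by simpa using this)
  have hno2 : ∀ z ∈ P, f^[2] z ≠ z := by
    intro z hz h
    exact hxleast 2 two_pos (by omega) (hfix z hz 2 h)
  have hcard : P.card = m := by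
    rw [hPdef]
    rw [Finset.card_image_of_injOn, Finset.card_range]
    intro i hi j hj hij
    simp only [Finset.mem_coe, Finset.mem_range] at hi hj
    by_contra hne
    have hij' : f^[i] x = f^[j] x := hij
    rcases Nat.lt_or_ge i j with h | h
    · have : f^[m - j] (f^[j] x) = f^[m - j] (f^[i] x) := by rw [hij']
      rw [← Function.iterate_add_apply, show m - j + j = m by omega, hxm,
        ← Function.iterate_add_apply] at this
      exact hxleast (m - j + i) (by omega) (by omega) this.symm
    · have hlt : j < i := by omega
      have : f^[m - i] (f^[i] x) = f^[m - i] (f^[j] x) := by rw [hij']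
      rw [← Function.iterate_add_apply, show m - i + i = m by omega, hxm,
        ← Function.iterate_add_apply] at this
      exact hxleast (m - i + j) (by omega) (by omega) this.symm
  have htrans : ∀ w ∈ P, ∀ z ∈ P, ∃ i, f^[i] w = z := by
    intro w hw z hz
    obtain ⟨iw, hiw, rfl⟩ := (hmemP w).mp hw
    obtain ⟨iz, hiz, rfl⟩ := (hmemP z).mp hz
    refine ⟨(m - iw) + iz, ?_⟩
    rw [← Function.iterate_add_apply, show m - iw + iz + iw = iz + m by omega,
      Function.iterate_add_apply, hxm]
  -- p and q
  have hPne : P.Nonempty := ⟨x, hPx⟩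
  have hup_ne : (P.filter fun z => z < f z).Nonempty := by
    refine ⟨P.min' hPne, ?_⟩
    rw [Finset.mem_filter]
    refine ⟨P.min'_mem hPne, ?_⟩
    have h1 := P.min'_le _ (hfP _ (P.min'_mem hPne))
    have h2 := hno1 _ (P.min'_mem hPne)
    exact lt_of_le_of_ne h1 (Ne.symm h2)
  set p := (P.filter fun z => z < f z).max' hup_ne with hpdef
  have hpmem := (P.filter fun z => z < f z).max'_mem hup_ne
  rw [Finset.mem_filter] at hpmem
  obtain ⟨hpP, hpf⟩ := hpmem
  have hq_ne : (P.filter fun z => p < z).Nonempty := by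
    exact ⟨f p, by rw [Finset.mem_filter]; exact ⟨hfP p hpP, hpf⟩⟩
  set q := (P.filter fun z => p < z).min' hq_ne with hqdef
  have hqmem := (P.filter fun z => p < z).min'_mem hq_ne
  rw [Finset.mem_filter] at hqmem
  obtain ⟨hqP, hpq⟩ := hqmem
  have hfpq : q ≤ f p := by
    apply Finset.min'_le
    rw [Finset.mem_filter]
    exact ⟨hfP p hpP, hpf⟩
  have hadj_pq : ∀ z ∈ P, ¬(p < z ∧ z < q) := by
    rintro z hz ⟨h1, h2⟩
    have : z ∈ P.filter fun z => p < z := by rw [Finset.mem_filter]; exact ⟨hz, h1⟩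
    exact absurd (Finset.min'_le _ z this) (not_le.mpr h2)
  have hfq : f q ≤ p := by
    have h1 : ¬ q < f q := by
      intro h
      have : q ∈ P.filter fun z => z < f z := by rw [Finset.mem_filter]; exact ⟨hqP, h⟩
      exact absurd (Finset.le_max' _ q this) (not_le.mpr hpq)
    have h2 : f q < q := lt_of_le_of_ne (not_lt.mp h1) (hno1 q hqP)
    by_contra h3
    exact hadj_pq (f q) (hfP q hqP) ⟨not_le.mp h3, h2⟩
  have hside : ∀ z ∈ P, z ≤ p ∨ q ≤ z := by
    intro z hz
    by_contra h
    push_neg at h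
    exact hadj_pq z hz h
  -- parity: some point stays on its side
  have hsame : ∃ c ∈ P, (c ≤ p ∧ f c ≤ p) ∨ (q ≤ c ∧ q ≤ f c) := by
    by_contra hcon
    push_neg at hcon
    have hflip : ∀ c ∈ P, (c ≤ p → q ≤ f c) ∧ (q ≤ c → f c ≤ p) := by
      intro c hc
      obtain ⟨h1, h2⟩ := hcon c hc
      constructor
      · intro hle
        rcases hside (f c) (hfP c hc) with h | h
        · exact absurd (h1 hle) (not_lt.mpr h)
        · exact h
      · intro hge
        rcases hside (f c) (hfP c hc) with h | h
        · exact h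
        · exact absurd (h2 hge) (not_lt.mpr h)
    set Pl := P.filter (fun z => z ≤ p) with hPl
    set Pr := P.filter (fun z => ¬ z ≤ p) with hPr
    have hcards : Pl.card + Pr.card = m := by
      rw [hPl, hPr, Finset.card_filter_add_card_filter_not, hcard]
    have hPlr : ∀ z ∈ Pl, f z ∈ Pr := by
      intro z hz
      rw [hPl, Finset.mem_filter] at hz
      have := (hflip z hz.1).1 hz.2
      rw [hPr, Finset.mem_filter]
      exact ⟨hfP z hz.1, by intro h; linarith⟩
    have hPrl : ∀ z ∈ Pr, f z ∈ Pl := by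
      intro z hz
      rw [hPr, Finset.mem_filter] at hz
      have hzq : q ≤ z := by
        rcases hside z hz.1 with h | h
        · exact absurd h hz.2
        · exact h
      have := (hflip z hz.1).2 hzq
      rw [hPl, Finset.mem_filter]
      exact ⟨hfP z hz.1, this⟩
    have hinjl : Set.InjOn f Pl := by
      intro z hz z' hz' hzz
      rw [Finset.mem_coe, hPl, Finset.mem_filter] at hz hz'
      exact hinj z hz.1 z' hz'.1 hzz
    have hinjr : Set.InjOn f Pr := by
      intro z hz z' hz' hzz
      rw [Finset.mem_coe, hPr, Finset.mem_filter] at hz hz'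
      exact hinj z hz.1 z' hz'.1 hzz
    have h1 : Pl.card ≤ Pr.card := Finset.card_le_card_of_injOn f hPlr hinjl
    have h2 : Pr.card ≤ Pl.card := Finset.card_le_card_of_injOn f hPrl hinjr
    have : Pl.card = Pr.card := le_antisymm h1 h2
    rw [Nat.odd_iff] at hodd
    omega
  -- construct the crossing edge E = (wE, wE')
  have hE : ∃ wE ∈ P, ∃ wE' ∈ P, wE < wE' ∧ (∀ z ∈ P, ¬(wE < z ∧ z < wE')) ∧
      ¬(wE = p ∧ wE' = q) ∧ min (f wE) (f wE') ≤ p ∧ q ≤ max (f wE) (f wE') := by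
    obtain ⟨c, hcP, hc⟩ := hsame
    rcases hc with ⟨hc1, hc2⟩ | ⟨hc1, hc2⟩
    · obtain ⟨w, hwP, w', hw'P, h1, h2, h3, h4, h5, h6⟩ :=
        crossing f P hfP c p hcP hpP p q hpq hside hc2 hfpq
      refine ⟨w, hwP, w', hw'P, h1, h2, ?_, h5, h6⟩
      rintro ⟨rfl, rfl⟩
      rw [max_eq_right hc1] at h4
      linarith
    · obtain ⟨w, hwP, w', hw'P, h1, h2, h3, h4, h5, h6⟩ :=
        crossing f P hfP q c hqP hcP p q hpq hside hfq hc2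
      refine ⟨w, hwP, w', hw'P, h1, h2, ?_, h5, h6⟩
      rintro ⟨rfl, rfl⟩
      rw [min_eq_left hc1] at h3
      linarith
  obtain ⟨wE, hwEP, wE', hwE'P, hElt, hEadj, hEne, hEcov1, hEcov2⟩ := hE
  -- the growing sets Q k
  set Q : ℕ → Finset ℝ := fun k => Nat.rec (P.filter (fun z => p ≤ z ∧ z ≤ q))
    (fun _ Qk => P.filter (fun z => (∃ w ∈ Qk, f w ≤ z) ∧ ∃ w ∈ Qk, z ≤ f w)) k with hQdef
  have hQ0 : ∀ z, z ∈ Q 0 ↔ z ∈ P ∧ p ≤ z ∧ z ≤ q := by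
    intro z; rw [hQdef]; simp [Finset.mem_filter]
  have hQs : ∀ k z, z ∈ Q (k+1) ↔ z ∈ P ∧ (∃ w ∈ Q k, f w ≤ z) ∧ ∃ w ∈ Q k, z ≤ f w := by
    intro k z; rw [hQdef]; simp [Finset.mem_filter]
  have hQP : ∀ k, Q k ⊆ P := by
    intro k
    cases k with
    | zero => intro z hz; exact ((hQ0 z).mp hz).1
    | succ k => intro z hz; exact ((hQs k z).mp hz).1
  have hpQ0 : p ∈ Q 0 := (hQ0 p).mpr ⟨hpP, le_rfl, le_of_lt hpq⟩
  have hqQ0 : q ∈ Q 0 := (hQ0 q).mpr ⟨hqP, le_of_lt hpq, le_rfl⟩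
  have hQmono : ∀ k, Q k ⊆ Q (k+1) := by
    intro k
    induction k with
    | zero =>
      intro z hz
      obtain ⟨hzP, h1, h2⟩ := (hQ0 z).mp hz
      exact (hQs 0 z).mpr ⟨hzP, ⟨q, hqQ0, hfq.trans h1⟩, ⟨p, hpQ0, h2.trans hfpq⟩⟩
    | succ k ih =>
      intro z hz
      obtain ⟨hzP, ⟨w₁, hw₁, hle₁⟩, ⟨w₂, hw₂, hle₂⟩⟩ := (hQs k z).mp hz
      exact (hQs (k+1) z).mpr ⟨hzP, ⟨w₁, ih hw₁, hle₁⟩, ⟨w₂, ih hw₂, hle₂⟩⟩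
  have hQle : ∀ k l, k ≤ l → Q k ⊆ Q l := by
    intro k l hkl
    obtain ⟨d, rfl⟩ := Nat.exists_eq_add_of_le hkl
    clear hkl
    induction d with
    | zero => exact Finset.Subset.refl _
    | succ d ih => exact ih.trans (hQmono (k+d))
  have hpQ : ∀ k, p ∈ Q k := fun k => hQle 0 k (Nat.zero_le k) hpQ0
  have hqQ : ∀ k, q ∈ Q k := fun k => hQle 0 k (Nat.zero_le k) hqQ0
  have hQint : ∀ k, ∀ z ∈ P, ∀ w₁ ∈ Q k, ∀ w₂ ∈ Q k, w₁ ≤ z → z ≤ w₂ → z ∈ Q k := by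
    intro k
    cases k with
    | zero =>
      intro z hz w₁ hw₁ w₂ hw₂ h1 h2
      obtain ⟨_, hp1, _⟩ := (hQ0 w₁).mp hw₁
      obtain ⟨_, _, hq2⟩ := (hQ0 w₂).mp hw₂
      exact (hQ0 z).mpr ⟨hz, hp1.trans h1, h2.trans hq2⟩
    | succ k =>
      intro z hz w₁ hw₁ w₂ hw₂ h1 h2
      obtain ⟨_, ⟨wl, hwl, hlel⟩, _⟩ := (hQs k w₁).mp hw₁
      obtain ⟨_, _, ⟨wu, hwu, hleu⟩⟩ := (hQs k w₂).mp hw₂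
      exact (hQs k z).mpr ⟨hz, ⟨wl, hwl, hlel.trans h1⟩, ⟨wu, hwu, h2.trans hleu⟩⟩
  have hQgrow : ∀ k, Q k = P ∨ k + 2 ≤ (Q k).card := by
    intro k
    induction k with
    | zero =>
      right
      have : ({p, q} : Finset ℝ) ⊆ Q 0 := by
        intro z hz
        rcases Finset.mem_insert.mp hz with rfl | hz
        · exact hpQ0
        · rw [Finset.mem_singleton.mp hz]; exact hqQ0
      calc 0 + 2 = ({p, q} : Finset ℝ).card := by
             rw [Finset.card_insert_of_notMem (Finset.notMem_singleton.mpr (ne_of_lt hpq)), Finset.card_singleton]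
           _ ≤ (Q 0).card := Finset.card_le_card this
    | succ k ih =>
      rcases ih with heq | hcard'
      · left
        apply Finset.Subset.antisymm (hQP (k+1))
        rw [← heq]; exact hQmono k
      · by_cases heq : Q (k+1) = Q k
        · -- Q k is f-invariant, hence equals P
          left
          have hclosed : ∀ z ∈ Q k, f z ∈ Q k := by
            intro z hz
            rw [← heq]
            exact (hQs k (f z)).mpr ⟨hfP z (hQP k hz), ⟨z, hz, le_rfl⟩, ⟨z, hz, le_rfl⟩⟩
          have hallP : ∀ z ∈ P, z ∈ Q k := by
            intro z hz
            obtain ⟨i, hi⟩ := htrans p hpP z hz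
            rw [← hi]
            clear hi
            induction i with
            | zero => simpa using hpQ k
            | succ i ih2 =>
              rw [Function.iterate_succ_apply']
              exact hclosed _ ih2
          rw [heq]
          exact Finset.Subset.antisymm (hQP k) (fun z hz => hallP z hz)
        · right
          have hss : Q k ⊂ Q (k+1) := Finset.ssubset_iff_subset_ne.mpr ⟨hQmono k, Ne.symm heq⟩
          have := Finset.card_lt_card hss
          omega
  have hQall : Q (m-2) = P := by
    rcases hQgrow (m-2) with h | h
    · exact h
    · apply Finset.eq_of_subset_of_card_le (hQP (m-2))
      rw [hcard]; omega
  -- adjacency and covering predicates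
  set adjp : ℝ × ℝ → Prop := fun e => e.1 ∈ P ∧ e.2 ∈ P ∧ e.1 < e.2 ∧
    ∀ z ∈ P, ¬(e.1 < z ∧ z < e.2) with hadjp
  set cov : ℝ × ℝ → ℝ × ℝ → Prop := fun e e' =>
    min (f e.1) (f e.2) ≤ e'.1 ∧ e'.2 ≤ max (f e.1) (f e.2) with hcov
  have hadjpq' : adjp (p, q) := ⟨hpP, hqP, hpq, hadj_pq⟩
  -- path lemma
  have hpath : ∀ k, ∀ u' v', u' ∈ Q k → v' ∈ Q k → adjp (u', v') →
      ∃ C : ℕ → ℝ × ℝ, C 0 = (p, q) ∧ C k = (u', v') ∧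
        (∀ j, j ≤ k → adjp (C j)) ∧ ∀ j, j < k → cov (C j) (C (j+1)) := by
    intro k
    induction k with
    | zero =>
      intro u' v' hu hv hadj'
      obtain ⟨huP, hvP, hlt, hgap'⟩ := hadj'
      obtain ⟨_, hpu, huq⟩ := (hQ0 u').mp hu
      obtain ⟨_, hpv, hvq⟩ := (hQ0 v').mp hv
      have hu'c : u' = p ∨ u' = q := by
        rcases hside u' huP with h | h
        · exact Or.inl (le_antisymm h hpu)
        · exact Or.inr (le_antisymm huq h)
      have hv'c : v' = p ∨ v' = q := by
        rcases hside v' hvP with h | h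
        · exact Or.inl (le_antisymm h hpv)
        · exact Or.inr (le_antisymm hvq h)
      have hup : u' = p ∧ v' = q := by
        rcases hu'c with h|h <;> rcases hv'c with h'|h' <;> subst h <;> subst h' <;>
          first | exact ⟨rfl, rfl⟩ | exact absurd hlt (lt_irrefl _) | linarith
      refine ⟨fun _ => (p, q), rfl, by rw [hup.1, hup.2], fun j _ => hadjpq',
        fun j hj => absurd hj (Nat.not_lt_zero j)⟩
    | succ k ih =>
      intro u' v' hu hv hadj'
      obtain ⟨huP, hvP, hlt, hgap'⟩ := hadj'
      obtain ⟨_, ⟨w₁, hw₁Q, hw₁le⟩, _⟩ := (hQs k u').mp hu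
      obtain ⟨_, _, ⟨w₂, hw₂Q, hw₂ge⟩⟩ := (hQs k v').mp hv
      obtain ⟨w, hwP, w', hw'P, h1, h2, h3, h4, h5, h6⟩ :=
        crossing f P hfP w₁ w₂ (hQP k hw₁Q) (hQP k hw₂Q) u' v' hlt
          (fun z hz => by
            by_cases hzu : z ≤ u'
            · exact Or.inl hzu
            · right
              by_contra hzv
              exact hgap' z hz ⟨not_le.mp hzu, not_le.mp hzv⟩) hw₁le hw₂ge
      -- w, w' ∈ Q k via interval property
      have hminQ : min w₁ w₂ ∈ Q k := by
        rcases le_total w₁ w₂ with h | h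
        · rw [min_eq_left h]; exact hw₁Q
        · rw [min_eq_right h]; exact hw₂Q
      have hmaxQ : max w₁ w₂ ∈ Q k := by
        rcases le_total w₁ w₂ with h | h
        · rw [max_eq_right h]; exact hw₂Q
        · rw [max_eq_left h]; exact hw₁Q
      have hwQ : w ∈ Q k := hQint k w hwP _ hminQ _ hmaxQ h3 (h1.le.trans h4)
      have hw'Q : w' ∈ Q k := hQint k w' hw'P _ hminQ _ hmaxQ (h3.trans h1.le) h4
      obtain ⟨C, hC0, hCk, hCadj, hCcov⟩ := ih w w' hwQ hw'Q ⟨hwP, hw'P, h1, h2⟩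
      refine ⟨fun j => if j ≤ k then C j else (u', v'), ?_, ?_, ?_, ?_⟩
      · simp only [Nat.zero_le, if_pos]; exact hC0
      · have hnk : ¬ (k+1 ≤ k) := by omega
        simp only [hnk, if_neg, if_false]
      · intro j hj
        by_cases h : j ≤ k
        · simp only [h, if_pos]; exact hCadj j h
        · simp only [h, if_neg, if_false]; exact ⟨huP, hvP, hlt, hgap'⟩
      · intro j hj
        rcases Nat.lt_succ_iff_lt_or_eq.mp hj with h | h
        · have h1' : j ≤ k := le_of_lt h
          have h2' : j + 1 ≤ k := h
          simp only [h1', h2', if_pos]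
          exact hCcov j h
        · subst h
          have h1' : j ≤ j := le_rfl
          simp only [if_pos h1', Nat.not_succ_le_self, if_neg]
          rw [hCk]
          exact ⟨h5, h6⟩
  -- minimal path from I to E
  have hEQ : wE ∈ Q (m-2) := by rw [hQall]; exact hwEP
  have hE'Q : wE' ∈ Q (m-2) := by rw [hQall]; exact hwE'P
  set pred : ℕ → Prop := fun k => ∃ C : ℕ → ℝ × ℝ, C 0 = (p,q) ∧ C k = (wE, wE') ∧
    (∀ j, j ≤ k → adjp (C j)) ∧ (∀ j, j < k → cov (C j) (C (j+1))) with hpreddef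
  have hpred : pred (m-2) := hpath (m-2) wE wE' hEQ hE'Q ⟨hwEP, hwE'P, hElt, hEadj⟩
  have hexists : ∃ k, pred k := ⟨m-2, hpred⟩
  set k₀ := Nat.find hexists with hk₀def
  have hk₀spec : pred k₀ := Nat.find_spec hexists
  have hk₀le : k₀ ≤ m - 2 := Nat.find_min' hexists hpred
  obtain ⟨C, hC0, hCk, hCadj, hCcov⟩ := hk₀spec
  have hEnepair : (wE, wE') ≠ (p, q) := by
    intro h
    exact hEne ⟨congrArg Prod.fst h, congrArg Prod.snd h⟩
  have hk₀pos : 0 < k₀ := by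
    rcases Nat.eq_zero_or_pos k₀ with h | h
    · exfalso; rw [h] at hCk; exact hEnepair (hCk.symm.trans hC0)
    · exact h
  have hmid : ∀ j, 0 < j → j ≤ k₀ → C j ≠ (p, q) := by
    intro j hj0 hjk hCj
    rcases eq_or_lt_of_le hjk with h | h
    · rw [h, hCk] at hCj; exact hEnepair hCj
    · refine Nat.find_min hexists (show k₀ - j < k₀ by omega)
        ⟨fun i => C (i + j), ?_, ?_, ?_, ?_⟩
      · show C (0 + j) = (p, q)
        rwa [Nat.zero_add]
      · show C (k₀ - j + j) = (wE, wE')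
        rwa [Nat.sub_add_cancel hjk]
      · intro i hi; exact hCadj (i + j) (by omega)
      · intro i hi
        show cov (C (i + j)) (C (i + 1 + j))
        have e : i + 1 + j = (i + j) + 1 := by omega
        rw [e]
        exact hCcov (i + j) (by omega)
  -- now fix n
  intro n hn
  set s := n - (k₀ + 1) with hsdef
  have hs2 : 2 ≤ s := by omega
  have hsn : s + k₀ + 1 = n := by omega
  set D : ℕ → ℝ × ℝ := fun j => if j ≤ s then (p, q) else if j < n then C (j - s) else (p, q)
    with hDdef
  have hD0 : D 0 = (p, q) := by simp [hDdef]
  have hDn : D n = (p, q) := by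
    have h1 : ¬ n ≤ s := by omega
    simp [hDdef, h1]
  have hDeq : ∀ j, s ≤ j → j < n → D j = C (j - s) := by
    intro j h1 h2
    rcases eq_or_lt_of_le h1 with h | h
    · rw [hDdef]
      simp only [← h, le_refl, if_pos, Nat.sub_self]
      exact hC0.symm
    · have h3 : ¬ j ≤ s := by omega
      simp [hDdef, h3, h2]
  have hDadj : ∀ j, j ≤ n → adjp (D j) := by
    intro j hj
    by_cases h1 : j ≤ s
    · have : D j = (p, q) := by simp [hDdef, h1]
      rw [this]; exact hadjpq'
    · by_cases h2 : j < n
      · rw [hDeq j (by omega) h2]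
        exact hCadj (j - s) (by omega)
      · have h3 : j = n := by omega
        rw [h3, hDn]; exact hadjpq'
  have hsubab : ∀ e : ℝ × ℝ, adjp e → Icc e.1 e.2 ⊆ Icc a b := by
    intro e he z hz
    have h1 := hPab e.1 he.1
    have h2 := hPab e.2 he.2.1
    exact ⟨h1.1.trans hz.1, hz.2.trans h2.2⟩
  have hcovimg : ∀ e e' : ℝ × ℝ, adjp e → cov e e' → Icc e'.1 e'.2 ⊆ f '' Icc e.1 e.2 := by
    intro e e' he hc
    have hIcc : Icc e'.1 e'.2 ⊆ uIcc (f e.1) (f e.2) := by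
      rw [← Set.Icc_min_max]
      exact Icc_subset_Icc hc.1 hc.2
    have hcont : ContinuousOn f (uIcc e.1 e.2) := by
      rw [uIcc_of_le he.2.2.1.le]
      exact hf.mono (hsubab e he)
    have him : uIcc (f e.1) (f e.2) ⊆ f '' uIcc e.1 e.2 := intermediate_value_uIcc hcont
    intro z hz
    have := him (hIcc hz)
    rwa [uIcc_of_le he.2.2.1.le] at this
  have hDcov : ∀ j, j < n → Icc (D (j+1)).1 (D (j+1)).2 ⊆ f '' Icc (D j).1 (D j).2 := by
    intro j hj
    by_cases h1 : j + 1 ≤ s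
    · have h0 : j ≤ s := by omega
      have e1 : D j = (p, q) := by simp [hDdef, h0]
      have e2 : D (j+1) = (p, q) := by simp [hDdef, h1]
      rw [e1, e2]
      exact hcovimg _ _ hadjpq' ⟨(min_le_right _ _).trans hfq, hfpq.trans (le_max_left _ _)⟩
    · have hsj : s ≤ j := by omega
      have e1 : D j = C (j - s) := hDeq j hsj hj
      by_cases h2 : j + 1 < n
      · have e2 : D (j+1) = C (j + 1 - s) := hDeq (j+1) (by omega) h2
        rw [e1, e2, show j + 1 - s = (j - s) + 1 by omega]
        exact hcovimg _ _ (hCadj (j-s) (by omega)) (hCcov (j-s) (by omega))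
      · have hjn : j + 1 = n := by omega
        have e2 : D (j+1) = (p, q) := by rw [hjn, hDn]
        have hjk : j - s = k₀ := by omega
        rw [e1, e2, hjk, hCk]
        exact hcovimg _ _ ⟨hwEP, hwE'P, hElt, hEadj⟩ ⟨hEcov1, hEcov2⟩
  obtain ⟨y, hy0, hyfix, hitin⟩ := loop_lemma f a b hf hmaps n (by omega) D
      (fun j hj => ⟨(hDadj j hj).2.2.1.le, hsubab _ (hDadj j hj)⟩) hDcov (hDn.trans hD0.symm)
  rw [hD0] at hy0
  refine ⟨y, hsubab _ hadjpq' hy0, hyfix, ?_⟩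
  intro i hi0 hin hiy
  -- least period d of y
  set dpred : ℕ → Prop := fun k => 0 < k ∧ f^[k] y = y with hdpreddef
  have hdex : ∃ k, dpred k := ⟨i, hi0, hiy⟩
  set d := Nat.find hdex with hddef
  obtain ⟨hd0, hdfix⟩ : 0 < d ∧ f^[d] y = y := Nat.find_spec hdex
  have hdle : d ≤ i := Nat.find_min' hdex ⟨hi0, hiy⟩
  have hdmul : ∀ j, f^[j * d] y = y := by
    intro j
    induction j with
    | zero => simp
    | succ j ih => rw [Nat.succ_mul, Function.iterate_add_apply, hdfix, ih]
  have hddvd : d ∣ n := by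
    have h1 : f^[n % d] y = y := by
      have h2 : f^[n % d] (f^[(n/d) * d] y) = f^[n] y := by
        rw [← Function.iterate_add_apply]
        congr 1
        exact Nat.mod_add_div' n d
      rw [hdmul (n/d)] at h2
      rw [h2, hyfix]
    rcases Nat.eq_zero_or_pos (n % d) with h | h
    · exact Nat.dvd_of_mod_eq_zero h
    · exact absurd (Nat.find_min' hdex ⟨h, h1⟩) (not_le.mpr (Nat.mod_lt n hd0))
  have hdn : d < n := lt_of_le_of_lt hdle hin
  have hPI : ∀ z ∈ P, z ∈ Icc p q → z = p ∨ z = q := by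
    intro z hz hzI
    rcases hside z hz with h | h
    · exact Or.inl (le_antisymm h hzI.1)
    · exact Or.inr (le_antisymm hzI.2 h)
  have hyP : y ∉ P := by
    intro hyP
    have hD1 : D 1 = (p, q) := by simp [hDdef, show 1 ≤ s by omega]
    have hD2 : D 2 = (p, q) := by simp [hDdef, hs2]
    have h1 : f^[1] y ∈ Icc p q := by have := hitin 1 (by omega); rwa [hD1] at this
    have h2 : f^[2] y ∈ Icc p q := by have := hitin 2 (by omega); rwa [hD2] at this
    have hy1 : y = p ∨ y = q := hPI y hyP hy0
    have hfyP : f y ∈ P := hfP y hyP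
    have hfy1 : f y = p ∨ f y = q := hPI _ hfyP (by simpa using h1)
    have hffP : f (f y) ∈ P := hfP _ hfyP
    have hff : f (f y) = p ∨ f (f y) = q := by
      apply hPI _ hffP
      have e : f^[2] y = f (f y) := by
        rw [show (2:ℕ) = 1 + 1 from rfl, Function.iterate_add_apply]
        simp
      rwa [e] at h2
    have hne1 : f y ≠ y := hno1 y hyP
    have hne2 : f (f y) ≠ f y := hno1 (f y) hfyP
    have h3 : f (f y) = y := by
      rcases hy1 with h|h <;> rcases hfy1 with h'|h' <;> rcases hff with h''|h'' <;>
        first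
          | (exfalso; exact hne1 (h'.trans h.symm))
          | (exfalso; exact hne2 (h''.trans h'.symm))
          | (rw [h'', h])
    apply hno2 y hyP
    rw [show (2:ℕ) = 1 + 1 from rfl, Function.iterate_add_apply]
    simpa using h3
  have hjP : ∀ j, j ≤ n → f^[j] y ∈ P → False := by
    intro j hj hmem
    have h1 : f^[n - j] (f^[j] y) = y := by
      rw [← Function.iterate_add_apply, show n - j + j = n by omega, hyfix]
    exact hyP (h1 ▸ hfPiter (n-j) _ hmem)
  have hinter : ∀ e : ℝ × ℝ, adjp e → e ≠ (p, q) →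
      ∀ z, z ∈ Icc e.1 e.2 → z ∈ Icc p q → z ∈ P := by
    intro e he hnepq z hz1 hz2
    obtain ⟨huP, hvP, huv, hgap'⟩ := he
    by_contra hzP
    have hzu : e.1 < z := lt_of_le_of_ne hz1.1 (fun h => hzP (by rw [← h]; exact huP))
    have hzv : z < e.2 := lt_of_le_of_ne hz1.2 (fun h => hzP (by rw [h]; exact hvP))
    have hzp : p < z := lt_of_le_of_ne hz2.1 (fun h => hzP (by rw [← h]; exact hpP))
    have hzq : z < q := lt_of_le_of_ne hz2.2 (fun h => hzP (by rw [h]; exact hqP))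
    have h1 : p ≤ e.1 := by
      by_contra h
      exact hgap' p hpP ⟨not_le.mp h, hzp.trans hzv⟩
    have h2 : e.2 ≤ q := by
      by_contra h
      exact hgap' q hqP ⟨hzu.trans hzq, not_le.mp h⟩
    have h3 : e.1 ≤ p := by
      by_contra h
      exact hadj_pq e.1 huP ⟨not_le.mp h, hzu.trans hzq⟩
    have h4 : q ≤ e.2 := by
      by_contra h
      exact hadj_pq e.2 hvP ⟨hzp.trans hzv, not_le.mp h⟩
    exact hnepq (Prod.ext (le_antisymm h3 h1) (le_antisymm h2 h4))
  rcases le_or_gt d k₀ with hcase | hcase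
  · -- d small: a multiple of d lands in the C-block
    set t := d * ((n-1)/d) with htdef
    have hmod := Nat.div_add_mod (n-1) d
    have hmlt : (n-1) % d < d := Nat.mod_lt _ hd0
    have ht1 : t ≤ n - 1 := by omega
    have ht2 : n - d ≤ t := by omega
    have hst : s < t := by omega
    have htn : t < n := by omega
    have hfty : f^[t] y = y := by rw [htdef, Nat.mul_comm]; exact hdmul _
    have hCt : D t = C (t - s) := hDeq t (by omega) htn
    have hyI : y ∈ Icc (C (t-s)).1 (C (t-s)).2 := by
      have := hitin t (by omega)
      rw [hCt] at this
      rwa [hfty] at this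
    have htk : t - s ≤ k₀ := by omega
    exact hyP (hinter (C (t-s)) (hCadj _ htk) (hmid (t-s) (by omega) htk) y hyI hy0)
  · -- d large
    have h2d : 2 * d ≤ n := by
      obtain ⟨e, he⟩ := hddvd
      have he2 : 2 ≤ e := by
        rcases Nat.lt_or_ge e 2 with h | h
        · interval_cases e <;> omega
        · exact h
      have : d * 2 ≤ d * e := Nat.mul_le_mul_left d he2
      omega
    set t := n - 1 - d with htdef
    have hts : t ≤ s := by omega
    have heq2 : f^[n-1] y = f^[t] y := by
      have h5 : f^[t + d] y = f^[t] (f^[d] y) := Function.iterate_add_apply f t d y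
      rw [hdfix] at h5
      rw [show n - 1 = t + d by omega]
      exact h5
    have hDt : D t = (p, q) := by simp [hDdef, hts]
    have h1 : f^[n-1] y ∈ Icc p q := by
      have := hitin t (by omega)
      rw [hDt] at this
      rw [heq2]
      exact this
    have hDn1 : D (n-1) = (wE, wE') := by
      rw [hDeq (n-1) (by omega) (by omega), show n - 1 - s = k₀ by omega, hCk]
    have h2 : f^[n-1] y ∈ Icc wE wE' := by
      have := hitin (n-1) (by omega)
      rwa [hDn1] at this
    exact hjP (n-1) (by omega)
      (hinter (wE, wE') ⟨hwEP, hwE'P, hElt, hEadj⟩ hEnepair _ h2 h1)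
end

section
/- Let f : I → I be continuous on a compact interval. If there is no x with f(f(x)) = x and f(x) ≠ x (i.e., f has no period-2 point), then for every pair c < d in I one cannot have both d ≤ f(c) and f(d) ≤ c. -/
open Set

private lemma stmt9_ivt_ge {f : ℝ → ℝ} {x y v : ℝ} (hxy : x ≤ y)
    (hf : ContinuousOn f (Set.Icc x y)) (h1 : f y ≤ v) (h2 : v ≤ f x) :
    ∃ t ∈ Set.Icc x y, f t = v := by
  obtain ⟨t, ht, h⟩ := intermediate_value_Icc' hxy hf ⟨h1, h2⟩
  exact ⟨t, ht, h⟩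

private lemma stmt9_ivt_le {f : ℝ → ℝ} {x y v : ℝ} (hxy : x ≤ y)
    (hf : ContinuousOn f (Set.Icc x y)) (h1 : f x ≤ v) (h2 : v ≤ f y) :
    ∃ t ∈ Set.Icc x y, f t = v := by
  obtain ⟨t, ht, h⟩ := intermediate_value_Icc hxy hf ⟨h1, h2⟩
  exact ⟨t, ht, h⟩

private lemma stmt9_exists_max {f : ℝ → ℝ} {x y v : ℝ}
    (hf : ContinuousOn f (Set.Icc x y)) (hne : ∃ t ∈ Set.Icc x y, f t = v) :
    ∃ p ∈ Set.Icc x y, f p = v ∧ ∀ t ∈ Set.Icc x y, f t = v → t ≤ p := by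
  have hcl : IsClosed (Set.Icc x y ∩ f ⁻¹' {v}) :=
    hf.preimage_isClosed_of_isClosed isClosed_Icc isClosed_singleton
  have hcp : IsCompact (Set.Icc x y ∩ f ⁻¹' {v}) :=
    isCompact_Icc.of_isClosed_subset hcl inter_subset_left
  obtain ⟨t, ht, hft⟩ := hne
  obtain ⟨p, hp, hmax⟩ := hcp.exists_isGreatest ⟨t, ht, hft⟩
  exact ⟨p, hp.1, hp.2, fun u hu hfu => hmax ⟨hu, hfu⟩⟩

private lemma stmt9_exists_min {f : ℝ → ℝ} {x y v : ℝ}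
    (hf : ContinuousOn f (Set.Icc x y)) (hne : ∃ t ∈ Set.Icc x y, f t = v) :
    ∃ p ∈ Set.Icc x y, f p = v ∧ ∀ t ∈ Set.Icc x y, f t = v → p ≤ t := by
  have hcl : IsClosed (Set.Icc x y ∩ f ⁻¹' {v}) :=
    hf.preimage_isClosed_of_isClosed isClosed_Icc isClosed_singleton
  have hcp : IsCompact (Set.Icc x y ∩ f ⁻¹' {v}) :=
    isCompact_Icc.of_isClosed_subset hcl inter_subset_left
  obtain ⟨t, ht, hft⟩ := hne
  obtain ⟨p, hp, hmin⟩ := hcp.exists_isLeast ⟨t, ht, hft⟩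
  exact ⟨p, hp.1, hp.2, fun u hu hfu => hmin ⟨hu, hfu⟩⟩

/-- Core lemma 1: with a crossing pair `c < z < d` around a fixed point `z`
and no period-2 points, every point of `(z,d)` maps strictly below `z`. -/
private lemma stmt9_core1 (a b : ℝ) (f : ℝ → ℝ)
    (hf : ContinuousOn f (Set.Icc a b))
    (hmaps : Set.MapsTo f (Set.Icc a b) (Set.Icc a b))
    (hno2 : ∀ x ∈ Set.Icc a b, f (f x) = x → f x = x)
    (c z d : ℝ) (hac : a ≤ c) (hcz : c < z) (hzd : z < d) (hdb : d ≤ b)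
    (hfz : f z = z) (hfc : d ≤ f c) (hfd : f d ≤ c) :
    ∀ s ∈ Set.Ioo z d, f s < z := by
  have hzb : z ≤ b := le_trans hzd.le hdb
  have haz : a ≤ z := le_trans hac hcz.le
  have cont : ∀ x y : ℝ, a ≤ x → y ≤ b → ContinuousOn f (Set.Icc x y) := fun x y hx hy =>
    hf.mono (Icc_subset_Icc hx hy)
  have contG : ∀ x y : ℝ, a ≤ x → y ≤ b →
      ContinuousOn (fun t => f (f t) - t) (Set.Icc x y) := fun x y hx hy =>
    ((hf.comp hf hmaps).sub continuousOn_id).mono (Icc_subset_Icc hx hy)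
  -- p : largest point of [c,z] with f p = d
  obtain ⟨p, hpmem, hfp, hpmax⟩ :=
    stmt9_exists_max (cont c z hac hzb)
      (stmt9_ivt_ge hcz.le (cont c z hac hzb) (by rw [hfz]; exact hzd.le) hfc)
  have hpz : p < z := by
    rcases lt_or_eq_of_le hpmem.2 with h | h
    · exact h
    · exfalso; rw [h, hfz] at hfp; exact hzd.ne hfp
  have hap : a ≤ p := le_trans hac hpmem.1
  -- f < d on (p, z]
  have hfltd : ∀ t, p < t → t ≤ z → f t < d := by
    intro t hpt htz
    by_contra hge
    push_neg at hge
    obtain ⟨t₁, ht₁, hft₁⟩ :=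
      stmt9_ivt_ge htz (cont t z (le_trans hap hpt.le) hzb) (by rw [hfz]; exact hzd.le) hge
    have : t₁ ≤ p := hpmax t₁ ⟨le_trans hpmem.1 (le_trans hpt.le ht₁.1), ht₁.2⟩ hft₁
    linarith [ht₁.1]
  -- q : smallest point of [p,z] with f q = z
  obtain ⟨q, hqmem, hfq, hqmin⟩ :=
    stmt9_exists_min (cont p z hap hzb) ⟨z, ⟨hpz.le, le_refl z⟩, hfz⟩
  have hpq : p < q := by
    rcases lt_or_eq_of_le hqmem.1 with h | h
    · exact h
    · exfalso; rw [← h, hfp] at hfq; exact hzd.ne' hfq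
  -- f > z on [p, q)
  have hfgtz : ∀ t, p ≤ t → t < q → z < f t := by
    intro t hpt htq
    by_contra hle
    push_neg at hle
    obtain ⟨t₁, ht₁, hft₁⟩ :=
      stmt9_ivt_ge hpt (cont p t hap (le_trans (le_trans htq.le hqmem.2) hzb)) hle
        (by rw [hfp]; exact hzd.le)
    have : q ≤ t₁ := hqmin t₁ ⟨ht₁.1, le_trans ht₁.2 (le_trans htq.le hqmem.2)⟩ hft₁
    linarith [ht₁.2]
  -- q = z (otherwise we find a period-2 point)
  have hqz : q = z := by
    by_contra hne
    have hqltz : q < z := lt_of_le_of_ne hqmem.2 hne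
    obtain ⟨x, hx, hGx⟩ := stmt9_ivt_le hpq.le (contG p q hap (le_trans hqltz.le hzb))
      (by show f (f p) - p ≤ 0; rw [hfp]; linarith [hpmem.1])
      (by show (0:ℝ) ≤ f (f q) - q; rw [hfq, hfz]; linarith)
    have hffx : f (f x) = x := by
      have : f (f x) - x = 0 := hGx
      linarith
    have hxq : x < q := by
      rcases lt_or_eq_of_le hx.2 with h | h
      · exact h
      · exfalso
        have : f (f q) - q = 0 := by rw [← h]; exact hGx
        rw [hfq, hfz] at this
        linarith
    have hfxz : z < f x := hfgtz x hx.1 hxq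
    have hxI : x ∈ Set.Icc a b := ⟨le_trans hap hx.1, le_trans hx.2 (le_trans hqltz.le hzb)⟩
    have := hno2 x hxI hffx
    linarith [hqltz, hx.2]
  -- hence f > z on [p, z)
  have hfgtz' : ∀ t, p ≤ t → t < z → z < f t := fun t h1 h2 => hfgtz t h1 (by rw [hqz]; exact h2)
  -- f(f t) < t on [p, z)
  have hc1 : ∀ t, p ≤ t → t < z → f (f t) < t := by
    intro t hpt htz
    by_contra hge
    push_neg at hge
    obtain ⟨x, hx, hGx⟩ := stmt9_ivt_le hpt (contG p t hap (le_trans htz.le hzb))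
      (by show f (f p) - p ≤ 0; rw [hfp]; linarith [hpmem.1])
      (by show (0:ℝ) ≤ f (f t) - t; linarith)
    have hffx : f (f x) = x := by
      have : f (f x) - x = 0 := hGx
      linarith
    have hxz : x < z := lt_of_le_of_lt hx.2 htz
    have hfxz : z < f x := hfgtz' x hx.1 hxz
    have hxI : x ∈ Set.Icc a b := ⟨le_trans hap hx.1, le_trans hxz.le hzb⟩
    have := hno2 x hxI hffx
    linarith
  -- conclusion
  intro s hs
  obtain ⟨t, ht, hft⟩ := stmt9_ivt_ge (v := s) hpz.le (cont p z hap hzb)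
    (by rw [hfz]; exact hs.1.le) (by rw [hfp]; exact hs.2.le)
  have htz : t < z := by
    rcases lt_or_eq_of_le ht.2 with h | h
    · exact h
    · exfalso; rw [h, hfz] at hft; exact hs.1.ne hft
  have : f (f t) < t := hc1 t ht.1 htz
  rw [hft] at this
  linarith

/-- Core lemma 2: additionally, `f (f s) > s` on `(z,d)`. -/
private lemma stmt9_core2 (a b : ℝ) (f : ℝ → ℝ)
    (hf : ContinuousOn f (Set.Icc a b))
    (hmaps : Set.MapsTo f (Set.Icc a b) (Set.Icc a b))
    (hno2 : ∀ x ∈ Set.Icc a b, f (f x) = x → f x = x)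
    (c z d : ℝ) (hac : a ≤ c) (hcz : c < z) (hzd : z < d) (hdb : d ≤ b)
    (hfz : f z = z) (hfc : d ≤ f c) (hfd : f d ≤ c)
    (hA : ∀ s ∈ Set.Ioo z d, f s < z) :
    ∀ s ∈ Set.Ioo z d, s < f (f s) := by
  have hzb : z ≤ b := le_trans hzd.le hdb
  have haz : a ≤ z := le_trans hac hcz.le
  have cont : ∀ x y : ℝ, a ≤ x → y ≤ b → ContinuousOn f (Set.Icc x y) := fun x y hx hy =>
    hf.mono (Icc_subset_Icc hx hy)
  have contG : ∀ x y : ℝ, a ≤ x → y ≤ b →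
      ContinuousOn (fun t => f (f t) - t) (Set.Icc x y) := fun x y hx hy =>
    ((hf.comp hf hmaps).sub continuousOn_id).mono (Icc_subset_Icc hx hy)
  -- P : smallest point of [z,d] with f P = c
  obtain ⟨P, hPmem, hfP, hPmin⟩ :=
    stmt9_exists_min (cont z d haz hdb)
      (stmt9_ivt_ge hzd.le (cont z d haz hdb) hfd (by rw [hfz]; exact hcz.le))
  have hzP : z < P := by
    rcases lt_or_eq_of_le hPmem.1 with h | h
    · exact h
    · exfalso; rw [← h, hfz] at hfP; exact hcz.ne' hfP
  have hPb : P ≤ b := le_trans hPmem.2 hdb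
  -- f > c on [z, P)
  have hfgtc : ∀ t, z ≤ t → t < P → c < f t := by
    intro t hzt htP
    by_contra hle
    push_neg at hle
    obtain ⟨t₁, ht₁, hft₁⟩ :=
      stmt9_ivt_ge hzt (cont z t haz (le_trans (le_trans htP.le hPmem.2) hdb)) hle
        (by rw [hfz]; exact hcz.le)
    have : P ≤ t₁ := hPmin t₁ ⟨ht₁.1, le_trans ht₁.2 (le_trans htP.le hPmem.2)⟩ hft₁
    linarith [ht₁.2]
  -- Q : largest point of [z,P] with f Q = z
  obtain ⟨Q, hQmem, hfQ, hQmax⟩ :=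
    stmt9_exists_max (cont z P haz hPb) ⟨z, ⟨le_refl z, hzP.le⟩, hfz⟩
  have hQP : Q < P := by
    rcases lt_or_eq_of_le hQmem.2 with h | h
    · exact h
    · exfalso; rw [h, hfP] at hfQ; exact hcz.ne hfQ
  -- f < z on (Q, P]
  have hfltz : ∀ t, Q < t → t ≤ P → f t < z := by
    intro t hQt htP
    by_contra hge
    push_neg at hge
    obtain ⟨t₁, ht₁, hft₁⟩ :=
      stmt9_ivt_ge htP (cont t P (le_trans haz (le_trans hQmem.1 hQt.le)) hPb)
        (by rw [hfP]; exact hcz.le) hge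
    have : t₁ ≤ Q := hQmax t₁ ⟨le_trans hQmem.1 (le_trans hQt.le ht₁.1), ht₁.2⟩ hft₁
    linarith [ht₁.1]
  -- Q = z
  have hQz : Q = z := by
    by_contra hne
    have hzQ : z < Q := lt_of_le_of_ne hQmem.1 (Ne.symm hne)
    obtain ⟨x, hx, hGx⟩ := stmt9_ivt_le hQP.le (contG Q P (le_trans haz hQmem.1) hPb)
      (by show f (f Q) - Q ≤ 0; rw [hfQ, hfz]; linarith)
      (by show (0:ℝ) ≤ f (f P) - P; rw [hfP]; linarith [hPmem.2])
    have hffx : f (f x) = x := by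
      have : f (f x) - x = 0 := hGx
      linarith
    have hQx : Q < x := by
      rcases lt_or_eq_of_le hx.1 with h | h
      · exact h
      · exfalso
        have : f (f Q) - Q = 0 := by rw [h]; exact hGx
        rw [hfQ, hfz] at this
        linarith
    have hfxz : f x < z := hfltz x hQx hx.2
    have hxI : x ∈ Set.Icc a b := ⟨le_trans haz (le_trans hQmem.1 hx.1), le_trans hx.2 hPb⟩
    have := hno2 x hxI hffx
    linarith [hQmem.1, hQx]
  -- f < z on (z, P]
  have hfltz' : ∀ t, z < t → t ≤ P → f t < z := fun t h1 h2 => hfltz t (by rw [hQz]; exact h1) h2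
  -- t < f (f t) on (z, P]
  have hc2 : ∀ t, z < t → t ≤ P → t < f (f t) := by
    intro t hzt htP
    by_contra hle
    push_neg at hle
    obtain ⟨x, hx, hGx⟩ := stmt9_ivt_le htP (contG t P (le_trans haz hzt.le) hPb)
      (by show f (f t) - t ≤ 0; linarith)
      (by show (0:ℝ) ≤ f (f P) - P; rw [hfP]; linarith [hPmem.2])
    have hffx : f (f x) = x := by
      have : f (f x) - x = 0 := hGx
      linarith
    have hzx : z < x := lt_of_lt_of_le hzt hx.1
    have hfxz : f x < z := hfltz' x hzx hx.2
    have hxI : x ∈ Set.Icc a b := ⟨le_trans haz hzx.le, le_trans hx.2 hPb⟩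
    have := hno2 x hxI hffx
    linarith
  -- conclusion
  intro s hs
  rcases le_or_gt s P with h | h
  · exact hc2 s hs.1 h
  · by_contra hle
    push_neg at hle
    obtain ⟨x, hx, hGx⟩ := stmt9_ivt_ge h.le (contG P s (le_trans haz hzP.le)
        (le_trans hs.2.le hdb))
      (by show f (f s) - s ≤ 0; linarith)
      (by show (0:ℝ) ≤ f (f P) - P; rw [hfP]; linarith [hPmem.2])
    have hffx : f (f x) = x := by
      have : f (f x) - x = 0 := hGx
      linarith
    have hxIoo : x ∈ Set.Ioo z d := ⟨lt_of_lt_of_le hzP (hx.1), lt_of_le_of_lt hx.2 hs.2⟩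
    have hfxz : f x < z := hA x hxIoo
    have hxI : x ∈ Set.Icc a b := ⟨le_trans haz hxIoo.1.le, le_trans hxIoo.2.le hdb⟩
    have := hno2 x hxI hffx
    linarith [hxIoo.1]

/-- Mirror of core lemma 1: every point of `(c,z)` maps strictly above `z`. -/
private lemma stmt9_core1' (a b : ℝ) (f : ℝ → ℝ)
    (hf : ContinuousOn f (Set.Icc a b))
    (hmaps : Set.MapsTo f (Set.Icc a b) (Set.Icc a b))
    (hno2 : ∀ x ∈ Set.Icc a b, f (f x) = x → f x = x)
    (c z d : ℝ) (hac : a ≤ c) (hcz : c < z) (hzd : z < d) (hdb : d ≤ b)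
    (hfz : f z = z) (hfc : d ≤ f c) (hfd : f d ≤ c) :
    ∀ s ∈ Set.Ioo c z, z < f s := by
  have h1 : Set.MapsTo (fun x : ℝ => -x) (Set.Icc (-b) (-a)) (Set.Icc a b) := by
    intro x hx
    refine ⟨?_, ?_⟩
    · show a ≤ -x; linarith [hx.2]
    · show -x ≤ b; linarith [hx.1]
  have hg : ContinuousOn (fun x => -f (-x)) (Set.Icc (-b) (-a)) :=
    (hf.comp (continuous_neg.continuousOn) h1).neg
  have hmaps' : Set.MapsTo (fun x => -f (-x)) (Set.Icc (-b) (-a)) (Set.Icc (-b) (-a)) := by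
    intro x hx
    have h2 := hmaps (h1 hx)
    exact ⟨by simp only; linarith [h2.2], by simp only; linarith [h2.1]⟩
  have hno2' : ∀ y ∈ Set.Icc (-b) (-a),
      (fun x => -f (-x)) ((fun x => -f (-x)) y) = y → (fun x => -f (-x)) y = y := by
    intro y hy h
    simp only [neg_neg] at h ⊢
    have hy' : f (f (-y)) = -y := by linarith
    have := hno2 (-y) (h1 hy) hy'
    linarith
  have H := stmt9_core1 (-b) (-a) (fun x => -f (-x)) hg hmaps' hno2' (-d) (-z) (-c)
    (by linarith) (by linarith) (by linarith) (by linarith)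
    (by simp only [neg_neg]; rw [hfz]) (by simp only [neg_neg]; linarith)
    (by simp only [neg_neg]; linarith)
  intro s hs
  have := H (-s) ⟨by linarith [hs.2], by linarith [hs.1]⟩
  simp only [neg_neg] at this
  linarith

/-- Mirror of core lemma 2: `f (f s) < s` on `(c,z)`. -/
private lemma stmt9_core2' (a b : ℝ) (f : ℝ → ℝ)
    (hf : ContinuousOn f (Set.Icc a b))
    (hmaps : Set.MapsTo f (Set.Icc a b) (Set.Icc a b))
    (hno2 : ∀ x ∈ Set.Icc a b, f (f x) = x → f x = x)
    (c z d : ℝ) (hac : a ≤ c) (hcz : c < z) (hzd : z < d) (hdb : d ≤ b)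
    (hfz : f z = z) (hfc : d ≤ f c) (hfd : f d ≤ c)
    (hA' : ∀ s ∈ Set.Ioo c z, z < f s) :
    ∀ s ∈ Set.Ioo c z, f (f s) < s := by
  have h1 : Set.MapsTo (fun x : ℝ => -x) (Set.Icc (-b) (-a)) (Set.Icc a b) := by
    intro x hx
    refine ⟨?_, ?_⟩
    · show a ≤ -x; linarith [hx.2]
    · show -x ≤ b; linarith [hx.1]
  have hg : ContinuousOn (fun x => -f (-x)) (Set.Icc (-b) (-a)) :=
    (hf.comp (continuous_neg.continuousOn) h1).neg
  have hmaps' : Set.MapsTo (fun x => -f (-x)) (Set.Icc (-b) (-a)) (Set.Icc (-b) (-a)) := by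
    intro x hx
    have h2 := hmaps (h1 hx)
    exact ⟨by simp only; linarith [h2.2], by simp only; linarith [h2.1]⟩
  have hno2' : ∀ y ∈ Set.Icc (-b) (-a),
      (fun x => -f (-x)) ((fun x => -f (-x)) y) = y → (fun x => -f (-x)) y = y := by
    intro y hy h
    simp only [neg_neg] at h ⊢
    have hy' : f (f (-y)) = -y := by linarith
    have := hno2 (-y) (h1 hy) hy'
    linarith
  have hAmir : ∀ s ∈ Set.Ioo (-z) (-c), (fun x => -f (-x)) s < -z := by
    intro s hs
    have := hA' (-s) ⟨by linarith [hs.2], by linarith [hs.1]⟩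
    simp only [neg_neg]
    linarith
  have H := stmt9_core2 (-b) (-a) (fun x => -f (-x)) hg hmaps' hno2' (-d) (-z) (-c)
    (by linarith) (by linarith) (by linarith) (by linarith)
    (by simp only [neg_neg]; rw [hfz]) (by simp only [neg_neg]; linarith)
    (by simp only [neg_neg]; linarith) hAmir
  intro s hs
  have := H (-s) ⟨by linarith [hs.2], by linarith [hs.1]⟩
  simp only [neg_neg] at this
  linarith

/-- If f has no period-2 point, then there is no pair c < d in I with
d ≤ f(c) and f(d) ≤ c. -/
theorem stmt_9 (a b : ℝ) (hab : a ≤ b) (f : ℝ → ℝ)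
    (hf : ContinuousOn f (Set.Icc a b))
    (hmaps : Set.MapsTo f (Set.Icc a b) (Set.Icc a b))
    (hno2 : ¬∃ x ∈ Set.Icc a b, f (f x) = x ∧ f x ≠ x) :
    ∀ c ∈ Set.Icc a b, ∀ d ∈ Set.Icc a b, c < d → ¬(d ≤ f c ∧ f d ≤ c) := by
  intro c₀ hc₀ d₀ hd₀ hlt hpair
  obtain ⟨h1, h2⟩ := hpair
  have hno2' : ∀ x ∈ Set.Icc a b, f (f x) = x → f x = x := by
    intro x hx h
    by_contra hne
    exact hno2 ⟨x, hx, h, hne⟩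
  -- find a fixed point z strictly between c₀ and d₀
  have hFc : ContinuousOn (fun t => f t - t) (Set.Icc c₀ d₀) :=
    ((hf.mono (Icc_subset_Icc hc₀.1 hd₀.2)).sub continuousOn_id)
  obtain ⟨z, hz, hFz⟩ := stmt9_ivt_ge (v := (0:ℝ)) hlt.le hFc
    (by show f d₀ - d₀ ≤ 0; linarith) (by show (0:ℝ) ≤ f c₀ - c₀; linarith)
  have hfz : f z = z := by
    have : f z - z = 0 := hFz
    linarith
  have hc₀z : c₀ < z := by
    rcases lt_or_eq_of_le hz.1 with h | h
    · exact h
    · exfalso; rw [← h] at hfz; linarith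
  have hzd₀ : z < d₀ := by
    rcases lt_or_eq_of_le hz.2 with h | h
    · exact h
    · exfalso; rw [h] at hfz; linarith
  have haz : a ≤ z := le_trans hc₀.1 hc₀z.le
  have hzb : z ≤ b := le_trans hzd₀.le hd₀.2
  -- the compact set of crossing pairs around z
  set T : Set (ℝ × ℝ) := Set.Icc a z ×ˢ Set.Icc z b with hT
  have hsubT : ∀ p : ℝ × ℝ, p ∈ T → p.1 ∈ Set.Icc a b ∧ p.2 ∈ Set.Icc a b := by
    intro p hp
    exact ⟨⟨hp.1.1, le_trans hp.1.2 hzb⟩, ⟨le_trans haz hp.2.1, hp.2.2⟩⟩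
  have hfc1 : ContinuousOn (fun p : ℝ × ℝ => f p.1 - p.2) T :=
    (hf.comp continuous_fst.continuousOn (fun p hp => (hsubT p hp).1)).sub
      continuous_snd.continuousOn
  have hfc2 : ContinuousOn (fun p : ℝ × ℝ => p.1 - f p.2) T :=
    continuous_fst.continuousOn.sub
      (hf.comp continuous_snd.continuousOn (fun p hp => (hsubT p hp).2))
  have hTclosed : IsClosed T := isClosed_Icc.prod isClosed_Icc
  set S1 : Set (ℝ × ℝ) := T ∩ (fun p : ℝ × ℝ => f p.1 - p.2) ⁻¹' Set.Ici 0 with hS1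
  have hS1closed : IsClosed S1 := hfc1.preimage_isClosed_of_isClosed hTclosed isClosed_Ici
  set K : Set (ℝ × ℝ) := S1 ∩ (fun p : ℝ × ℝ => p.1 - f p.2) ⁻¹' Set.Ici 0 with hK
  have hKclosed : IsClosed K :=
    (hfc2.mono Set.inter_subset_left).preimage_isClosed_of_isClosed hS1closed isClosed_Ici
  have hKsubT : K ⊆ T := fun p hp => hp.1.1
  have hKcompact : IsCompact K :=
    (isCompact_Icc.prod isCompact_Icc).of_isClosed_subset hKclosed hKsubT
  have hKne : K.Nonempty :=
    ⟨(c₀, d₀), ⟨⟨⟨hc₀.1, hc₀z.le⟩, ⟨hzd₀.le, hd₀.2⟩⟩,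
      show (0:ℝ) ≤ f c₀ - d₀ by linarith⟩, show (0:ℝ) ≤ c₀ - f d₀ by linarith⟩
  -- maximize the second coordinate
  obtain ⟨⟨x₁, d⟩, hx₁d, hdmax⟩ :=
    hKcompact.exists_isMaxOn hKne continuous_snd.continuousOn
  -- then minimize the first coordinate among pairs with this d
  set K' : Set ℝ := {x | (x, d) ∈ K} with hK'
  have hK'closed : IsClosed K' := hKclosed.preimage (Continuous.prodMk_left d)
  have hK'sub : K' ⊆ Set.Icc a z := fun x hx => hx.1.1.1
  have hK'compact : IsCompact K' := isCompact_Icc.of_isClosed_subset hK'closed hK'sub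
  obtain ⟨c, hcK', hcmin⟩ := hK'compact.exists_isLeast ⟨x₁, hx₁d⟩
  -- unpack the properties of the extremal pair (c, d)
  have hcmem : c ∈ Set.Icc a z := hcK'.1.1.1
  have hdmem : d ∈ Set.Icc z b := hcK'.1.1.2
  have hdfc : d ≤ f c := by
    have h3 : (0:ℝ) ≤ f c - d := hcK'.1.2
    linarith
  have hfdc : f d ≤ c := by
    have h3 : (0:ℝ) ≤ c - f d := hcK'.2
    linarith
  have hd₀d : d₀ ≤ d := by
    have h3 : ((c₀, d₀) : ℝ × ℝ) ∈ K :=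
      ⟨⟨⟨⟨hc₀.1, hc₀z.le⟩, ⟨hzd₀.le, hd₀.2⟩⟩,
        show (0:ℝ) ≤ f c₀ - d₀ by linarith⟩, show (0:ℝ) ≤ c₀ - f d₀ by linarith⟩
    exact hdmax h3
  have hzd : z < d := lt_of_lt_of_le hzd₀ hd₀d
  have hcz : c < z := by
    rcases lt_or_eq_of_le hcmem.2 with h | h
    · exact h
    · exfalso; rw [h] at hdfc; rw [hfz] at hdfc; linarith
  have hac : a ≤ c := hcmem.1
  have hdb : d ≤ b := hdmem.2
  -- apply the core lemmas
  have hA : ∀ s ∈ Set.Ioo z d, f s < z :=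
    stmt9_core1 a b f hf hmaps hno2' c z d hac hcz hzd hdb hfz hdfc hfdc
  have hB : ∀ s ∈ Set.Ioo z d, s < f (f s) :=
    stmt9_core2 a b f hf hmaps hno2' c z d hac hcz hzd hdb hfz hdfc hfdc hA
  have hA' : ∀ s ∈ Set.Ioo c z, z < f s :=
    stmt9_core1' a b f hf hmaps hno2' c z d hac hcz hzd hdb hfz hdfc hfdc
  have hB' : ∀ s ∈ Set.Ioo c z, f (f s) < s :=
    stmt9_core2' a b f hf hmaps hno2' c z d hac hcz hzd hdb hfz hdfc hfdc hA'
  have contG : ∀ x y : ℝ, a ≤ x → y ≤ b →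
      ContinuousOn (fun t => f (f t) - t) (Set.Icc x y) := fun x y hx hy =>
    ((hf.comp hf hmaps).sub continuousOn_id).mono (Icc_subset_Icc hx hy)
  -- boundary values: f(f c) ≤ c and d ≤ f(f d)
  have hc2 : f (f c) ≤ c := by
    by_contra hgt
    push_neg at hgt
    have hσ : (c + z) / 2 ∈ Set.Ioo c z := ⟨by linarith, by linarith⟩
    obtain ⟨x, hx, hGx⟩ := stmt9_ivt_ge (v := (0:ℝ)) (by linarith : c ≤ (c + z) / 2)
      (contG c ((c + z) / 2) hac (by linarith))
      (by show f (f ((c + z) / 2)) - (c + z) / 2 ≤ 0; linarith [hB' _ hσ])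
      (by show (0:ℝ) ≤ f (f c) - c; linarith)
    have hffx : f (f x) = x := by
      have : f (f x) - x = 0 := hGx
      linarith
    have hcx : c < x := by
      rcases lt_or_eq_of_le hx.1 with h | h
      · exact h
      · exfalso
        have : f (f c) - c = 0 := by rw [h]; exact hGx
        linarith
    have hxIoo : x ∈ Set.Ioo c z := ⟨hcx, lt_of_le_of_lt hx.2 hσ.2⟩
    have := hno2' x ⟨le_trans hac hx.1, le_trans hxIoo.2.le hzb⟩ hffx
    linarith [hA' x hxIoo, hxIoo.2]
  have hd2 : d ≤ f (f d) := by
    by_contra hgt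
    push_neg at hgt
    have hσ : (z + d) / 2 ∈ Set.Ioo z d := ⟨by linarith, by linarith⟩
    obtain ⟨x, hx, hGx⟩ := stmt9_ivt_ge (v := (0:ℝ)) (by linarith : (z + d) / 2 ≤ d)
      (contG ((z + d) / 2) d (by linarith) hdb)
      (by show f (f d) - d ≤ 0; linarith)
      (by show (0:ℝ) ≤ f (f ((z + d) / 2)) - (z + d) / 2; linarith [hB _ hσ])
    have hffx : f (f x) = x := by
      have : f (f x) - x = 0 := hGx
      linarith
    have hxd : x < d := by
      rcases lt_or_eq_of_le hx.2 with h | h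
      · exact h
      · exfalso
        have : f (f d) - d = 0 := by rw [← h]; exact hGx
        linarith
    have hxIoo : x ∈ Set.Ioo z d := ⟨lt_of_lt_of_le hσ.1 hx.1, hxd⟩
    have := hno2' x ⟨le_trans haz hxIoo.1.le, le_trans hxd.le hdb⟩ hffx
    linarith [hA x hxIoo, hxIoo.1]
  -- maximality forces f c = d and f d = c
  have hfcd : f c = d := by
    have hmem : (c, f c) ∈ K :=
      ⟨⟨⟨hcmem, ⟨le_trans hzd.le hdfc, (hmaps ⟨hac, le_trans hcz.le hzb⟩).2⟩⟩,
        show (0:ℝ) ≤ f c - f c by linarith⟩, show (0:ℝ) ≤ c - f (f c) by linarith⟩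
    have h3 : f c ≤ d := hdmax hmem
    linarith
  have hfdc' : f d = c := by
    have hmem : f d ∈ K' :=
      ⟨⟨⟨⟨(hmaps ⟨le_trans haz hzd.le, hdb⟩).1, le_trans hfdc hcz.le⟩, hdmem⟩,
        show (0:ℝ) ≤ f (f d) - d by linarith⟩, show (0:ℝ) ≤ f d - f d by linarith⟩
    have h3 : c ≤ f d := hcmin hmem
    linarith
  -- period-2 point: contradiction
  have : f (f c) = c := by rw [hfcd, hfdc']
  have := hno2' c ⟨hac, le_trans hcz.le hzb⟩ this
  rw [hfcd] at this
  linarith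
end

section
/- Let f : I → I be continuous on a compact interval. If f has a periodic point of least period 2·m where m ≥ 3 is odd, then f has a periodic point of least period 2·(m+2). -/
open Set Function



/-- Covering lemma: if `h α = c`, `h β = d` with `α ≤ β`, then there is a subinterval
`[u,v] ⊆ [α,β]` with `h u = c`, `h v = d` and `h` mapping `[u,v]` into the hull of `{c,d}`. -/
lemma aux_cover (h : ℝ → ℝ) (α β c d : ℝ) (hαβ : α ≤ β)
    (hc : ContinuousOn h (Set.Icc α β)) (ha : h α = c) (hb : h β = d) :
    ∃ u v, α ≤ u ∧ u ≤ v ∧ v ≤ β ∧ h u = c ∧ h v = d ∧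
      ∀ z ∈ Set.Icc u v, h z ∈ Set.Icc (min c d) (max c d) := by
  classical
  -- B : points of [α,β] where h = d ; v := sInf B
  set B : Set ℝ := {t | t ∈ Set.Icc α β ∧ h t = d} with hB
  have hBc : IsClosed B := hc.preimage_isClosed_of_isClosed isClosed_Icc isClosed_singleton
  have hBne : B.Nonempty := ⟨β, ⟨hαβ, le_rfl⟩, hb⟩
  have hBbdd : BddBelow B := ⟨α, fun t ht => ht.1.1⟩
  set v := sInf B with hv
  have hvB : v ∈ B := hBc.csInf_mem hBne hBbdd
  have hvle : ∀ t ∈ B, v ≤ t := fun t ht => csInf_le hBbdd ht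
  -- A : points of [α,v] where h = c ; u := sSup A
  set A : Set ℝ := {t | t ∈ Set.Icc α v ∧ h t = c} with hA
  have hvIcc : v ∈ Set.Icc α β := hvB.1
  have hAc : IsClosed A := (hc.mono (Set.Icc_subset_Icc le_rfl hvIcc.2)).preimage_isClosed_of_isClosed
    isClosed_Icc isClosed_singleton
  have hAne : A.Nonempty := ⟨α, ⟨le_rfl, hvIcc.1⟩, ha⟩
  have hAbdd : BddAbove A := ⟨v, fun t ht => ht.1.2⟩
  set u := sSup A with hu
  have huA : u ∈ A := hAc.csSup_mem hAne hAbdd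
  have huge : ∀ t ∈ A, t ≤ u := fun t ht => le_csSup hAbdd ht
  refine ⟨u, v, huA.1.1, huA.1.2, hvIcc.2, huA.2, hvB.2, ?_⟩
  intro z hz
  have hzαβ : z ∈ Set.Icc α β := ⟨huA.1.1.trans hz.1, hz.2.trans hvIcc.2⟩
  have huαβ : u ∈ Set.Icc α β := ⟨huA.1.1, huA.1.2.trans hvIcc.2⟩
  by_contra hcon
  rcases not_and_or.mp (Set.mem_Icc.not.mp hcon) with hlt | hlt
  · push_neg at hlt
    -- h z < min c d : find a point of A right of u, or a point of B left of v
    rcases le_or_gt c d with hcd | hcd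
    · -- c ≤ d : c ∈ [h z, h v] on [z,v]
      have : ∃ s ∈ Set.Icc z v, h s = c := by
        have := intermediate_value_Icc hz.2 (hc.mono (Set.Icc_subset_Icc hzαβ.1 hvIcc.2))
        have hmem : c ∈ Set.Icc (h z) (h v) := by
          rw [hvB.2]; constructor
          · exact le_of_lt (lt_of_lt_of_le hlt (min_le_left c d))
          · exact hcd
        rcases this hmem with ⟨s, hs, hs'⟩; exact ⟨s, hs, hs'⟩
      rcases this with ⟨s, hs, hsc⟩
      have hsA : s ∈ A := ⟨⟨hzαβ.1.trans hs.1, hs.2⟩, hsc⟩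
      have : s ≤ u := huge s hsA
      have : z ≤ u := le_trans hs.1 this
      have hzu : z = u := le_antisymm this hz.1
      rw [hzu, huA.2] at hlt
      exact absurd hlt (not_lt.mpr (min_le_left c d))
    · -- d < c : d ∈ [h z, h u] on [u,z]
      have : ∃ s ∈ Set.Icc u z, h s = d := by
        have := intermediate_value_Icc' hz.1 (hc.mono (Set.Icc_subset_Icc huαβ.1 hzαβ.2))
        have hmem : d ∈ Set.Icc (h z) (h u) := by
          rw [huA.2]; constructor
          · exact le_of_lt (lt_of_lt_of_le hlt (min_le_right c d))
          · exact le_of_lt hcd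
        rcases this hmem with ⟨s, hs, hs'⟩; exact ⟨s, hs, hs'⟩
      rcases this with ⟨s, hs, hsd⟩
      have hsB : s ∈ B := ⟨⟨huαβ.1.trans hs.1, hs.2.trans hzαβ.2⟩, hsd⟩
      have : v ≤ s := hvle s hsB
      have : v ≤ z := le_trans this hs.2
      have hzv : z = v := le_antisymm hz.2 this
      rw [hzv, hvB.2] at hlt
      exact absurd hlt (not_lt.mpr (min_le_right c d))
  · push_neg at hlt
    -- h z > max c d
    rcases le_or_gt c d with hcd | hcd
    · -- c ≤ d : d ∈ [h u, h z] on [u,z]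
      have : ∃ s ∈ Set.Icc u z, h s = d := by
        have := intermediate_value_Icc hz.1 (hc.mono (Set.Icc_subset_Icc huαβ.1 hzαβ.2))
        have hmem : d ∈ Set.Icc (h u) (h z) := by
          rw [huA.2]; exact ⟨hcd, le_of_lt (lt_of_le_of_lt (le_max_right c d) hlt)⟩
        rcases this hmem with ⟨s, hs, hs'⟩; exact ⟨s, hs, hs'⟩
      rcases this with ⟨s, hs, hsd⟩
      have hsB : s ∈ B := ⟨⟨huαβ.1.trans hs.1, hs.2.trans hzαβ.2⟩, hsd⟩
      have : v ≤ z := le_trans (hvle s hsB) hs.2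
      have hzv : z = v := le_antisymm hz.2 this
      rw [hzv, hvB.2] at hlt
      exact absurd hlt (not_lt.mpr (le_max_right c d))
    · -- d < c : c ∈ [h v, h z] on [z,v]
      have : ∃ s ∈ Set.Icc z v, h s = c := by
        have := intermediate_value_Icc' hz.2 (hc.mono (Set.Icc_subset_Icc hzαβ.1 hvIcc.2))
        have hmem : c ∈ Set.Icc (h v) (h z) := by
          rw [hvB.2]; exact ⟨le_of_lt hcd, le_of_lt (lt_of_le_of_lt (le_max_left c d) hlt)⟩
        rcases this hmem with ⟨s, hs, hs'⟩; exact ⟨s, hs, hs'⟩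
      rcases this with ⟨s, hs, hsc⟩
      have hsA : s ∈ A := ⟨⟨hzαβ.1.trans hs.1, hs.2⟩, hsc⟩
      have : z ≤ u := le_trans hs.1 (huge s hsA)
      have hzu : z = u := le_antisymm this hz.1
      rw [hzu, huA.2] at hlt
      exact absurd hlt (not_lt.mpr (le_max_left c d))


/-- Chain lemma: follow a chain of interval coverings. -/
lemma chain_follow (h : ℝ → ℝ) (n : ℕ) : ∀ (L R : ℕ → ℝ), (∀ t, L t ≤ R t) →
    (∀ t < n, ContinuousOn h (Set.Icc (L t) (R t)) ∧
      Set.Icc (L (t+1)) (R (t+1)) ⊆ h '' Set.Icc (L t) (R t)) →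
    ∃ u v, L 0 ≤ u ∧ u ≤ v ∧ v ≤ R 0 ∧
      ((h^[n] u = L n ∧ h^[n] v = R n) ∨ (h^[n] u = R n ∧ h^[n] v = L n)) ∧
      (∀ t ≤ n, ∀ z ∈ Set.Icc u v, h^[t] z ∈ Set.Icc (L t) (R t)) ∧
      ContinuousOn (h^[n]) (Set.Icc u v) := by
  induction n with
  | zero =>
    intro L R hLR _
    refine ⟨L 0, R 0, le_rfl, hLR 0, le_rfl, Or.inl ⟨rfl, rfl⟩, ?_, ?_⟩
    · intro t ht z hz; simpa [Nat.le_zero.mp ht] using hz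
    · simpa using continuousOn_id
  | succ n ih =>
    intro L R hLR hcov
    obtain ⟨u₁, v₁, hu₁, huv₁, hv₁, hor, hitin, hcont⟩ :=
      ih (fun t => L (t+1)) (fun t => R (t+1)) (fun t => hLR (t+1))
        (fun t ht => hcov (t+1) (by omega))
    obtain ⟨hc0, hsub0⟩ := hcov 0 (Nat.succ_pos n)
    -- preimages of u₁ and v₁ in [L 0, R 0]
    obtain ⟨α', hα', hα'e⟩ := hsub0 ⟨hu₁, huv₁.trans hv₁⟩
    obtain ⟨β', hβ', hβ'e⟩ := hsub0 ⟨hu₁.trans huv₁, hv₁⟩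
    have hu₁v₁ : u₁ ≤ v₁ := huv₁
    rcases le_total α' β' with hab | hab
    · obtain ⟨u, v, h1, h2, h3, h4, h5, h6⟩ := aux_cover h α' β' u₁ v₁ hab
        (hc0.mono (Set.Icc_subset_Icc hα'.1 hβ'.2)) hα'e hβ'e
      have hmaps : ∀ z ∈ Set.Icc u v, h z ∈ Set.Icc u₁ v₁ := by
        intro z hz
        have := h6 z hz
        rwa [min_eq_left hu₁v₁, max_eq_right hu₁v₁] at this
      refine ⟨u, v, hα'.1.trans h1, h2, h3.trans hβ'.2, ?_, ?_, ?_⟩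
      · -- orientation
        have e1 : h^[n+1] u = h^[n] u₁ := by
          rw [Function.iterate_succ_apply, h4]
        have e2 : h^[n+1] v = h^[n] v₁ := by
          rw [Function.iterate_succ_apply, h5]
        rcases hor with ⟨o1, o2⟩ | ⟨o1, o2⟩
        · exact Or.inl ⟨by rw [e1, o1], by rw [e2, o2]⟩
        · exact Or.inr ⟨by rw [e1, o1], by rw [e2, o2]⟩
      · intro t ht z hz
        match t with
        | 0 =>
          simp only [Function.iterate_zero, id_eq]
          exact ⟨hα'.1.trans (h1.trans hz.1), (hz.2.trans h3).trans hβ'.2⟩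
        | (t+1) =>
          rw [Function.iterate_succ_apply]
          exact hitin t (by omega) (h z) ⟨(hmaps z hz).1, (hmaps z hz).2⟩
      · have : ContinuousOn (h^[n] ∘ h) (Set.Icc u v) := by
          apply hcont.comp (hc0.mono (Set.Icc_subset_Icc (hα'.1.trans h1) (h3.trans hβ'.2)))
          intro z hz; exact hmaps z hz
        exact ContinuousOn.congr this (fun z hz => Function.iterate_succ_apply h n z)
    · obtain ⟨u, v, h1, h2, h3, h4, h5, h6⟩ := aux_cover h β' α' v₁ u₁ hab
        (hc0.mono (Set.Icc_subset_Icc hβ'.1 hα'.2)) hβ'e hα'e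
      have hmaps : ∀ z ∈ Set.Icc u v, h z ∈ Set.Icc u₁ v₁ := by
        intro z hz
        have := h6 z hz
        rwa [min_eq_right hu₁v₁, max_eq_left hu₁v₁] at this
      refine ⟨u, v, hβ'.1.trans h1, h2, h3.trans hα'.2, ?_, ?_, ?_⟩
      · have e1 : h^[n+1] u = h^[n] v₁ := by
          rw [Function.iterate_succ_apply, h4]
        have e2 : h^[n+1] v = h^[n] u₁ := by
          rw [Function.iterate_succ_apply, h5]
        rcases hor with ⟨o1, o2⟩ | ⟨o1, o2⟩
        · exact Or.inr ⟨by rw [e1, o2], by rw [e2, o1]⟩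
        · exact Or.inl ⟨by rw [e1, o2], by rw [e2, o1]⟩
      · intro t ht z hz
        match t with
        | 0 =>
          simp only [Function.iterate_zero, id_eq]
          exact ⟨hβ'.1.trans (h1.trans hz.1), (hz.2.trans h3).trans hα'.2⟩
        | (t+1) =>
          rw [Function.iterate_succ_apply]
          exact hitin t (by omega) (h z) ⟨(hmaps z hz).1, (hmaps z hz).2⟩
      · have : ContinuousOn (h^[n] ∘ h) (Set.Icc u v) := by
          apply hcont.comp (hc0.mono (Set.Icc_subset_Icc (hβ'.1.trans h1) (h3.trans hα'.2)))
          intro z hz; exact hmaps z hz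
        exact ContinuousOn.congr this (fun z hz => Function.iterate_succ_apply h n z)

/-- Loop lemma: a loop of interval coverings has a periodic-ish point following it. -/
lemma loop_follow (h : ℝ → ℝ) (n : ℕ) (hn : 0 < n) (L R : ℕ → ℝ) (hLR : ∀ t, L t ≤ R t)
    (hL0 : L n = L 0) (hR0 : R n = R 0)
    (hcov : ∀ t < n, ContinuousOn h (Set.Icc (L t) (R t)) ∧
      Set.Icc (L (t+1)) (R (t+1)) ⊆ h '' Set.Icc (L t) (R t)) :
    ∃ y ∈ Set.Icc (L 0) (R 0), h^[n] y = y ∧ ∀ t ≤ n, h^[t] y ∈ Set.Icc (L t) (R t) := by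
  obtain ⟨u, v, h1, h2, h3, hor, hitin, hcont⟩ := chain_follow h n L R hLR hcov
  have key : ∃ y ∈ Set.Icc u v, h^[n] y = y := by
    have hgc : ContinuousOn (fun z => h^[n] z - z) (Set.Icc u v) :=
      hcont.sub continuousOn_id
    rcases hor with ⟨o1, o2⟩ | ⟨o1, o2⟩
    · have hgu : h^[n] u - u ≤ 0 := by rw [o1, hL0]; linarith
      have hgv : 0 ≤ h^[n] v - v := by rw [o2, hR0]; linarith
      obtain ⟨y, hy, hy0⟩ := intermediate_value_Icc h2 hgc (Set.mem_Icc.mpr ⟨hgu, hgv⟩)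
      exact ⟨y, hy, by linarith [sub_eq_zero.mp hy0, hy0]⟩
    · have hgu : 0 ≤ h^[n] u - u := by rw [o1, hR0]; linarith
      have hgv : h^[n] v - v ≤ 0 := by rw [o2, hL0]; linarith
      obtain ⟨y, hy, hy0⟩ := intermediate_value_Icc' h2 hgc (Set.mem_Icc.mpr ⟨hgv, hgu⟩)
      exact ⟨y, hy, by linarith [sub_eq_zero.mp hy0, hy0]⟩
  obtain ⟨y, hy, hyn⟩ := key
  refine ⟨y, ⟨h1.trans hy.1, hy.2.trans h3⟩, hyn, fun t ht => hitin t ht y hy⟩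


/-- Covering relation between gap-intervals of the orbit, in index form. -/
def EdgeC (q : ℕ) (π : ℕ → ℕ) (i j : ℕ) : Prop :=
  i + 1 ≤ q - 1 ∧ j + 1 ≤ q - 1 ∧ min (π i) (π (i+1)) ≤ j ∧ j + 1 ≤ max (π i) (π (i+1))

lemma exists_flip (Q : ℕ → Prop) {i j : ℕ} (hij : i ≤ j) (hi : Q i) (hj : ¬ Q j) :
    ∃ u, i ≤ u ∧ u < j ∧ Q u ∧ ¬ Q (u+1) := by
  classical
  have hex : ∃ t, ¬ Q (i + t) := ⟨j - i, by rwa [Nat.add_sub_cancel' hij]⟩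
  set t₀ := Nat.find hex with ht₀
  have hspec : ¬ Q (i + t₀) := Nat.find_spec hex
  have ht₀pos : 0 < t₀ := by
    rcases Nat.eq_zero_or_pos t₀ with h | h
    · exfalso; apply hspec; rw [h, Nat.add_zero]; exact hi
    · exact h
  have hmin : ¬ ¬ Q (i + (t₀ - 1)) := fun hc => Nat.find_min hex (by omega) hc
  have ht₀le : t₀ ≤ j - i := Nat.find_min' hex (by rwa [Nat.add_sub_cancel' hij])
  refine ⟨i + (t₀ - 1), Nat.le_add_right _ _, by omega, not_not.mp hmin, ?_⟩
  have : i + (t₀ - 1) + 1 = i + t₀ := by omega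
  rwa [this]

lemma crossing_s10 (q : ℕ) (π : ℕ → ℕ) (lo hi v i i' : ℕ)
    (h1 : lo ≤ i) (h2 : i ≤ hi) (h1' : lo ≤ i') (h2' : i' ≤ hi)
    (hhi : hi ≤ q - 1) (hv : v + 1 ≤ q - 1)
    (hlow : π i ≤ v) (hhigh : v + 1 ≤ π i') :
    ∃ u, lo ≤ u ∧ u + 1 ≤ hi ∧ EdgeC q π u v := by
  classical
  rcases le_or_gt i i' with hii | hii
  · obtain ⟨u, hu1, hu2, hu3, hu4⟩ := exists_flip (fun t => π t ≤ v) hii hlow (by omega)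
    exact ⟨u, h1.trans hu1, by omega, by omega, hv, le_trans (min_le_left _ _) hu3,
      le_trans (by omega : v + 1 ≤ π (u+1)) (le_max_right _ _)⟩
  · obtain ⟨u, hu1, hu2, hu3, hu4⟩ := exists_flip (fun t => ¬ (π t ≤ v)) hii.le (by omega) (by simpa using hlow)
    have hu3' : v + 1 ≤ π u := by omega
    have hu4' : π (u+1) ≤ v := by omega
    exact ⟨u, h1'.trans hu1, by omega, by omega, hv, le_trans (min_le_right _ _) hu4',
      le_trans hu3' (le_max_left _ _)⟩

/-- Build a periodic loop function from a finite edge-path that wraps around. -/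
lemma mk_loop (q : ℕ) (π : ℕ → ℕ) (τ : ℕ → ℕ) (n : ℕ) (hn : 0 < n)
    (hedges : ∀ t < n, EdgeC q π (τ t) (τ (t+1))) (hwrap : τ n = τ 0) :
    ∃ σ : ℕ → ℕ, (∀ t, σ (t + n) = σ t) ∧ (∀ t, EdgeC q π (σ t) (σ (t+1))) ∧
      (∀ t < n, σ t = τ t) := by
  refine ⟨fun t => τ (t % n), fun t => by simp [Nat.add_mod_right], fun t => ?_,
    fun t ht => by simp [Nat.mod_eq_of_lt ht]⟩
  show EdgeC q π (τ (t % n)) (τ ((t+1) % n))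
  have hr : t % n < n := Nat.mod_lt _ hn
  have e : (t + 1) % n = (t % n + 1) % n := (Nat.mod_add_mod t n 1).symm
  rcases Nat.lt_or_ge (t % n + 1) n with hlt | hge
  · rw [e, Nat.mod_eq_of_lt hlt]; exact hedges _ hr
  · have hEq : t % n + 1 = n := by omega
    rw [e, hEq, Nat.mod_self]
    have := hedges (t % n) hr
    rw [hEq, hwrap] at this
    exact this


/-- A path of covering edges from `s` to `v` of length `n`. -/
def HasPathC (q : ℕ) (π : ℕ → ℕ) (s v n : ℕ) : Prop :=
  ∃ σ : ℕ → ℕ, σ 0 = s ∧ σ n = v ∧ ∀ t < n, EdgeC q π (σ t) (σ (t+1))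

lemma HasPathC.extend {q : ℕ} {π : ℕ → ℕ} {s v n w : ℕ}
    (h : HasPathC q π s v n) (he : EdgeC q π v w) : HasPathC q π s w (n+1) := by
  obtain ⟨σ, h0, hn, hed⟩ := h
  refine ⟨fun t => if t ≤ n then σ t else w, by simp [h0], by simp, fun t ht => ?_⟩
  rcases Nat.lt_or_ge t n with h1 | h1
  · simpa [Nat.le_of_lt h1, Nat.succ_le_of_lt h1] using hed t h1
  · have : t = n := by omega
    subst this
    simpa [hn] using he

/-- The expanding-hull sequence of index intervals. -/
noncomputable def hullSeq (π : ℕ → ℕ) (s : ℕ) : ℕ → ℕ × ℕ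
  | 0 => (s, s+1)
  | k+1 =>
    let p := hullSeq π s k
    (min p.1 (sInf (π '' Set.Icc p.1 p.2)), max p.2 (sSup (π '' Set.Icc p.1 p.2)))

section Hull

variable (q : ℕ) (π : ℕ → ℕ) (s : ℕ) (hq : 3 ≤ q)
  (hπ : ∀ i, i < q → π i < q)
  (hinv : ∀ T : Finset ℕ, T ⊆ Finset.range q → (∀ i ∈ T, π i ∈ T) → T.Nonempty → T = Finset.range q)
  (hs1 : s + 1 ≤ q - 1) (hs2 : s < π s) (hs3 : π (s+1) ≤ s)

include hq hπ hinv hs1 hs2 hs3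
set_option linter.unusedSectionVars false

lemma hullSeq_bounds : ∀ k, (hullSeq π s k).1 ≤ s ∧ s + 1 ≤ (hullSeq π s k).2 ∧
    (hullSeq π s k).2 ≤ q - 1 := by
  intro k
  induction k with
  | zero => exact ⟨le_rfl, le_rfl, hs1⟩
  | succ k ih =>
    obtain ⟨ih1, ih2, ih3⟩ := ih
    refine ⟨le_trans (min_le_left _ _) ih1, le_trans ih2 (le_max_left _ _), ?_⟩
    show max (hullSeq π s k).2 _ ≤ q - 1
    refine max_le ih3 ?_
    apply csSup_le
    · exact (Set.nonempty_Icc.mpr (by omega)).image π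
    · rintro x ⟨i, hi, rfl⟩
      have : i < q := by
        have := hi.2; omega
      have := hπ i this; omega

lemma hullSeq_reach : ∀ k v, (hullSeq π s k).1 ≤ v → v + 1 ≤ (hullSeq π s k).2 →
    ∃ n, HasPathC q π s v n := by
  intro k
  induction k with
  | zero =>
    intro v h1 h2
    have : v = s := by simp [hullSeq] at h1 h2; omega
    exact ⟨0, fun t => s, rfl, this ▸ rfl, by omega⟩
  | succ k ih =>
    intro v h1 h2
    obtain ⟨b1, b2, b3⟩ := hullSeq_bounds q π s hq hπ hinv hs1 hs2 hs3 k
    set lo := (hullSeq π s k).1 with hlo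
    set hi := (hullSeq π s k).2 with hhi
    have hv : v + 1 ≤ q - 1 := by
      have : v + 1 ≤ (hullSeq π s (k+1)).2 := h2
      have hb3 := (hullSeq_bounds q π s hq hπ hinv hs1 hs2 hs3 (k+1)).2.2
      omega
    rcases Nat.lt_or_ge v lo with hvlo | hvlo
    · -- v is strictly left of the old hull
      have hminle : min lo (sInf (π '' Set.Icc lo hi)) ≤ v := h1
      have hsInf : sInf (π '' Set.Icc lo hi) ≤ v := by
        rcases min_le_iff.mp hminle with h | h
        · omega
        · exact h
      have hne : (π '' Set.Icc lo hi).Nonempty := (Set.nonempty_Icc.mpr (by omega)).image π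
      obtain ⟨i, hiIcc, hieq⟩ := Nat.sInf_mem hne
      have hlowi : π i ≤ v := by rw [hieq]; exact hsInf
      -- i' := s : π s ≥ s+1 ≥ v+2
      have hhighs : v + 1 ≤ π s := by omega
      obtain ⟨u, hu1, hu2, hu3⟩ := crossing_s10 q π lo hi v i s hiIcc.1 hiIcc.2
        (by omega) (by omega) b3 hv hlowi hhighs
      obtain ⟨n, hp⟩ := ih u hu1 hu2
      exact ⟨n+1, hp.extend hu3⟩
    · rcases Nat.lt_or_ge hi (v+1) with hvhi | hvhi
      · -- v+1 strictly right of old hull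
        have hmaxge : v + 1 ≤ max hi (sSup (π '' Set.Icc lo hi)) := h2
        have hsSup : v + 1 ≤ sSup (π '' Set.Icc lo hi) := by
          rcases le_max_iff.mp hmaxge with h | h
          · omega
          · exact h
        have hne : (π '' Set.Icc lo hi).Nonempty := (Set.nonempty_Icc.mpr (by omega)).image π
        have hbdd : BddAbove (π '' Set.Icc lo hi) := ((Set.finite_Icc _ _).image π).bddAbove
        obtain ⟨i, hiIcc, hieq⟩ := Nat.sSup_mem hne hbdd
        have hhighi : v + 1 ≤ π i := by rw [hieq]; exact hsSup
        -- i' := s+1 : π (s+1) ≤ s ≤ v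
        have hlows : π (s+1) ≤ v := by omega
        obtain ⟨u, hu1, hu2, hu3⟩ := crossing_s10 q π lo hi v (s+1) i
          (by omega) (by omega) hiIcc.1 hiIcc.2 b3 hv hlows hhighi
        obtain ⟨n, hp⟩ := ih u hu1 hu2
        exact ⟨n+1, hp.extend hu3⟩
      · exact ih v hvlo hvhi

lemma hullSeq_stab : ∃ k, (hullSeq π s k).1 = 0 ∧ (hullSeq π s k).2 = q - 1 := by
  classical
  have hb := hullSeq_bounds q π s hq hπ hinv hs1 hs2 hs3
  have key : ∃ k, hullSeq π s (k+1) = hullSeq π s k := by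
    by_contra hcon
    push_neg at hcon
    have grow : ∀ j, j + 1 ≤ (hullSeq π s j).2 - (hullSeq π s j).1 := by
      intro j
      induction j with
      | zero => simp [hullSeq]
      | succ j ih =>
        have hne := hcon j
        have h1 : (hullSeq π s (j+1)).1 ≤ (hullSeq π s j).1 := min_le_left _ _
        have h2 : (hullSeq π s j).2 ≤ (hullSeq π s (j+1)).2 := le_max_left _ _
        have : (hullSeq π s (j+1)).1 < (hullSeq π s j).1 ∨
            (hullSeq π s j).2 < (hullSeq π s (j+1)).2 := by
          by_contra hc
          push_neg at hc
          apply hne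
          have e1 : (hullSeq π s (j+1)).1 = (hullSeq π s j).1 := le_antisymm h1 hc.1
          have e2 : (hullSeq π s (j+1)).2 = (hullSeq π s j).2 := le_antisymm hc.2 h2
          exact Prod.ext e1 e2
        obtain ⟨c1, c2, c3⟩ := hb j
        omega
    have := grow q
    obtain ⟨c1, c2, c3⟩ := hb q
    omega
  obtain ⟨k, hk⟩ := key
  set lo := (hullSeq π s k).1 with hlo
  set hi := (hullSeq π s k).2 with hhi
  obtain ⟨b1, b2, b3⟩ := hb k
  have hinv' : ∀ i ∈ Finset.Icc lo hi, π i ∈ Finset.Icc lo hi := by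
    intro i hi'
    rw [Finset.mem_Icc] at hi' ⊢
    have hiIcc : i ∈ Set.Icc lo hi := hi'
    have h1 : sInf (π '' Set.Icc lo hi) ≤ π i := Nat.sInf_le ⟨i, hiIcc, rfl⟩
    have h2 : π i ≤ sSup (π '' Set.Icc lo hi) :=
      le_csSup ((Set.finite_Icc _ _).image π).bddAbove ⟨i, hiIcc, rfl⟩
    have e1 : min lo (sInf (π '' Set.Icc lo hi)) = lo := congrArg Prod.fst hk
    have e2 : max hi (sSup (π '' Set.Icc lo hi)) = hi := congrArg Prod.snd hk
    constructor
    · have : lo ≤ sInf (π '' Set.Icc lo hi) := by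
        rcases min_eq_iff.mp e1 with h | h
        · exact h.2
        · omega
      omega
    · have : sSup (π '' Set.Icc lo hi) ≤ hi := by
        rcases max_eq_iff.mp e2 with h | h
        · exact h.2
        · omega
      omega
  have hT := hinv (Finset.Icc lo hi) (fun i hi' => by
      rw [Finset.mem_Icc] at hi'; rw [Finset.mem_range]; omega)
    hinv' ⟨s, Finset.mem_Icc.mpr ⟨b1, by omega⟩⟩
  have h0 : (0 : ℕ) ∈ Finset.Icc lo hi := hT ▸ Finset.mem_range.mpr (by omega)
  have hq1 : q - 1 ∈ Finset.Icc lo hi := hT ▸ Finset.mem_range.mpr (by omega)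
  rw [Finset.mem_Icc] at h0 hq1
  exact ⟨k, by omega, by omega⟩

/-- Every gap-interval index is reachable from s. -/
lemma reach_all : ∀ v, v + 1 ≤ q - 1 → ∃ n, HasPathC q π s v n := by
  intro v hv
  obtain ⟨k, hk1, hk2⟩ := hullSeq_stab q π s hq hπ hinv hs1 hs2 hs3
  exact hullSeq_reach q π s hq hπ hinv hs1 hs2 hs3 k v (by omega) (by omega)

end Hull


section Combo

variable (q : ℕ) (π : ℕ → ℕ) (s : ℕ) (hq : 3 ≤ q) (hoddq : Odd q)
  (hπ : ∀ i, i < q → π i < q)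
  (hπinj : ∀ i, i < q → ∀ j, j < q → π i = π j → i = j)
  (hinv : ∀ T : Finset ℕ, T ⊆ Finset.range q → (∀ i ∈ T, π i ∈ T) → T.Nonempty → T = Finset.range q)
  (hs1 : s + 1 ≤ q - 1) (hs2 : s < π s) (hs3 : π (s+1) ≤ s)

include hq hoddq hπ hπinj hinv hs1 hs2 hs3
set_option linter.unusedSectionVars false

lemma edge_ss : EdgeC q π s s :=
  ⟨hs1, hs1, le_trans (min_le_right _ _) hs3, le_trans (by omega) (le_max_left _ _)⟩

/-- Shorten a path to one with no repeated vertices, hence length ≤ q-2. -/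
lemma path_short (v : ℕ) (hx : ∃ n, HasPathC q π s v n) :
    ∃ n, n + 2 ≤ q ∧ HasPathC q π s v n := by
  classical
  set n₀ := Nat.find hx with hn₀
  obtain ⟨σ, h0, hv, hed⟩ : HasPathC q π s v n₀ := Nat.find_spec hx
  have hinj : ∀ a b, a < b → b ≤ n₀ → σ a ≠ σ b := by
    intro a b hab hb heq
    set d := b - a with hd
    have hd1 : 1 ≤ d := by omega
    have hdn : d ≤ n₀ := by omega
    have hpath' : HasPathC q π s v (n₀ - d) := by
      set σ' : ℕ → ℕ := fun t => if t ≤ a then σ t else σ (t + d) with hσ'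
      have e0 : σ' 0 = s := by simp [hσ', h0]
      have eend : σ' (n₀ - d) = v := by
        by_cases hca : n₀ - d ≤ a
        · have hba : b = n₀ := by omega
          have hea : n₀ - d = a := by omega
          simp only [hσ', hea, le_refl, if_pos]
          rw [heq, hba, hv]
        · simp only [hσ', if_neg hca]
          rw [(by omega : n₀ - d + d = n₀), hv]
      have eedge : ∀ t < n₀ - d, EdgeC q π (σ' t) (σ' (t+1)) := by
        intro t ht
        by_cases h1 : t + 1 ≤ a
        · simp only [hσ', if_pos (by omega : t ≤ a), if_pos h1]
          exact hed t (by omega)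
        · by_cases h2 : t ≤ a
          · have hta : t = a := by omega
            have hblt : b < n₀ := by omega
            simp only [hσ', if_pos h2, if_neg h1]
            rw [hta, heq, (by omega : a + 1 + d = b + 1)]
            exact hed b hblt
          · simp only [hσ', if_neg h2, if_neg (by omega : ¬ t + 1 ≤ a)]
            rw [(by omega : t + 1 + d = t + d + 1)]
            exact hed (t + d) (by omega)
      exact ⟨σ', e0, eend, eedge⟩
    have := Nat.find_min' hx hpath'
    omega
  rcases Nat.eq_zero_or_pos n₀ with h | h
  · exact ⟨0, by omega, σ, h0, by rwa [h] at hv, fun t ht => absurd ht (by omega)⟩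
  · have hlt : ∀ t ≤ n₀, σ t + 1 ≤ q - 1 := by
      intro t ht
      rcases Nat.lt_or_ge t n₀ with h' | h'
      · exact (hed t h').1
      · have htn : t = n₀ := by omega
        rw [htn]
        have := (hed (n₀-1) (by omega)).2.1
        rwa [(by omega : n₀ - 1 + 1 = n₀)] at this
    have hcard : n₀ + 1 ≤ q - 1 := by
      have := Finset.card_le_card_of_injOn σ
        (s := Finset.range (n₀+1)) (t := Finset.range (q-1))
        (fun a ha => by
          rw [Finset.mem_coe, Finset.mem_range] at ha ⊢
          have := hlt a (by omega); omega)
        (fun a ha b hb hab => by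
          simp only [Finset.coe_range, Set.mem_Iio] at ha hb
          rcases Nat.lt_trichotomy a b with h' | h' | h'
          · exact absurd hab (hinj a b h' (by omega))
          · exact h'
          · exact absurd hab.symm (hinj b a h' (by omega)))
      simpa using this
    exact ⟨n₀, by omega, ⟨σ, h0, hv, hed⟩⟩

/-- There is a gap-interval other than J covering J. -/
lemma existsK : ∃ K, K + 1 ≤ q - 1 ∧ K ≠ s ∧ EdgeC q π K s := by
  classical
  by_contra hcon
  push_neg at hcon
  set Q : ℕ → Prop := fun i => π i ≤ s with hQ
  have hstep : ∀ u, u + 1 ≤ q - 1 → u ≠ s → (Q u ↔ Q (u+1)) := by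
    intro u hu hus
    have := hcon u hu hus
    rw [EdgeC] at this
    simp only [hu, hs1, true_and] at this
    rcases not_and_or.mp this with h | h
    · push_neg at h
      simp only [lt_min_iff] at h
      constructor
      · intro h'; omega
      · intro h'; exfalso; omega
    · push_neg at h
      simp only [max_lt_iff] at h
      constructor
      · intro _; omega
      · intro _; omega
  have chain : ∀ (lo hi : ℕ), (∀ u, lo ≤ u → u + 1 ≤ hi → (Q u ↔ Q (u+1))) →
      ∀ d i, lo ≤ i → i + d ≤ hi → (Q (i+d) ↔ Q i) := by
    intro lo hi hst d
    induction d with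
    | zero => intro i _ _; rfl
    | succ d ih =>
      intro i h1 h2
      have e : i + (d+1) = (i+d) + 1 := by omega
      rw [e]
      exact ((hst (i+d) (by omega) (by omega)).symm).trans (ih i h1 (by omega))
  -- on [0, s] : Q i ↔ Q s ; and ¬ Q s
  have hQs : ¬ Q s := by simp only [hQ]; omega
  have hL : ∀ i, i ≤ s → ¬ Q i := by
    intro i hi hQi
    have hst : ∀ u, 0 ≤ u → u + 1 ≤ s → (Q u ↔ Q (u+1)) := fun u _ hu =>
      hstep u (by omega) (by omega)
    have := chain 0 s hst (s - i) i (by omega) (by omega)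
    rw [(by omega : i + (s - i) = s)] at this
    exact hQs (this.mpr hQi)
  by_cases hQs1 : Q (s+1)
  · -- π maps right side into left side, and left side into right side : parity contradiction
    have hR : ∀ i, s + 1 ≤ i → i ≤ q - 1 → Q i := by
      intro i h1 h2
      have hst : ∀ u, s+1 ≤ u → u + 1 ≤ q-1 → (Q u ↔ Q (u+1)) := fun u hu h'u =>
        hstep u h'u (by omega)
      have := chain (s+1) (q-1) hst (i - (s+1)) (s+1) (by omega) (by omega)
      rw [(by omega : s + 1 + (i - (s+1)) = i)] at this
      exact this.mpr hQs1
    have c1 : (Finset.Icc 0 s).card ≤ (Finset.Icc (s+1) (q-1)).card := by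
      apply Finset.card_le_card_of_injOn π
      · intro i hi
        rw [Finset.mem_coe, Finset.mem_Icc] at hi ⊢
        have h1 := hL i hi.2
        have h2 := hπ i (by omega)
        simp only [hQ] at h1
        omega
      · intro a ha b hb hab
        simp only [Finset.coe_Icc, Set.mem_Icc] at ha hb
        exact hπinj a (by omega) b (by omega) hab
    have c2 : (Finset.Icc (s+1) (q-1)).card ≤ (Finset.Icc 0 s).card := by
      apply Finset.card_le_card_of_injOn π
      · intro i hi
        rw [Finset.mem_coe, Finset.mem_Icc] at hi ⊢
        have h1 := hR i hi.1 hi.2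
        simp only [hQ] at h1
        omega
      · intro a ha b hb hab
        simp only [Finset.coe_Icc, Set.mem_Icc] at ha hb
        exact hπinj a (by omega) b (by omega) hab
    rw [Nat.card_Icc, Nat.card_Icc] at c1 c2
    obtain ⟨c, hc⟩ := hoddq
    omega
  · -- right side invariant : contradiction with transitivity
    have hR : ∀ i, s + 1 ≤ i → i ≤ q - 1 → ¬ Q i := by
      intro i h1 h2 hQi
      have hst : ∀ u, s+1 ≤ u → u + 1 ≤ q-1 → (Q u ↔ Q (u+1)) := fun u hu h'u =>
        hstep u h'u (by omega)
      have := chain (s+1) (q-1) hst (i - (s+1)) (s+1) (by omega) (by omega)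
      rw [(by omega : s + 1 + (i - (s+1)) = i)] at this
      exact hQs1 (this.mp hQi)
    have hT := hinv (Finset.Icc (s+1) (q-1))
      (fun i hi => by rw [Finset.mem_Icc] at hi; rw [Finset.mem_range]; omega)
      (fun i hi => by
        rw [Finset.mem_Icc] at hi ⊢
        have h1 := hR i hi.1 hi.2
        have h2 := hπ i (by omega)
        simp only [hQ] at h1
        omega)
      ⟨s+1, Finset.mem_Icc.mpr ⟨le_rfl, hs1⟩⟩
    have : (0 : ℕ) ∈ Finset.Icc (s+1) (q-1) := hT ▸ Finset.mem_range.mpr (by omega)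
    rw [Finset.mem_Icc] at this
    omega

/-- `LoopSpec n` : there is a nonconstant n-periodic edge loop based at s. -/
def LoopSpecC (q : ℕ) (π : ℕ → ℕ) (s n : ℕ) : Prop :=
  ∃ σ : ℕ → ℕ, (∀ t, σ (t + n) = σ t) ∧ (∀ t, EdgeC q π (σ t) (σ (t+1))) ∧
    σ 0 = s ∧ ∃ t < n, σ t ≠ s

lemma loopSpec_exists : ∃ n, 0 < n ∧ n ≤ q - 1 ∧ LoopSpecC q π s n := by
  obtain ⟨K, hK1, hK2, hK3⟩ := existsK q π s hq hoddq hπ hπinj hinv hs1 hs2 hs3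
  obtain ⟨np, hnp, σp, hp0, hpv, hped⟩ := path_short q π s hq hoddq hπ hπinj hinv hs1 hs2 hs3 K
    (reach_all q π s hq hπ hinv hs1 hs2 hs3 K hK1)
  have hnp1 : 1 ≤ np := by
    rcases Nat.eq_zero_or_pos np with h | h
    · exfalso; apply hK2; rw [← hpv, ← hp0, h]
    · exact h
  set τ : ℕ → ℕ := fun t => if t ≤ np then σp t else s with hτ
  have hedges : ∀ t < np + 1, EdgeC q π (τ t) (τ (t+1)) := by
    intro t ht
    rcases Nat.lt_or_ge t np with h | h
    · simp only [hτ, if_pos (by omega : t ≤ np), if_pos (by omega : t + 1 ≤ np)]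
      exact hped t h
    · have htnp : t = np := by omega
      simp only [hτ, htnp, if_pos (le_refl np), if_neg (by omega : ¬ np + 1 ≤ np), hpv]
      exact hK3
  have hwrap : τ (np+1) = τ 0 := by
    simp only [hτ, if_neg (by omega : ¬ np + 1 ≤ np), if_pos (by omega : 0 ≤ np), hp0]
  obtain ⟨σ, hper, hed, hag⟩ := mk_loop q π τ (np+1) (by omega) hedges hwrap
  refine ⟨np + 1, by omega, by omega, σ, hper, hed, ?_, np, by omega, ?_⟩
  · rw [hag 0 (by omega)]; simp [hτ, hp0]
  · rw [hag np (by omega)]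
    simp only [hτ, if_pos (le_refl np), hpv]
    exact hK2

theorem dichotomyC :
    (∃ k, Odd k ∧ 0 < k ∧ k < q ∧ LoopSpecC q π s k)
    ∨ (∀ l, q + 2 ≤ l → ∃ σ : ℕ → ℕ, (∀ t, σ (t + l) = σ t) ∧
        (∀ t, EdgeC q π (σ t) (σ (t+1))) ∧ σ 0 = s ∧ σ 1 = s ∧ σ 2 = s ∧
        ∀ r < l - 1, σ r ≠ σ (l-1)) := by
  classical
  obtain ⟨n₁, hn₁pos, hn₁le, hn₁spec⟩ := loopSpec_exists q π s hq hoddq hπ hπinj hinv hs1 hs2 hs3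
  have hex : ∃ n, 0 < n ∧ LoopSpecC q π s n := ⟨n₁, hn₁pos, hn₁spec⟩
  set N := Nat.find hex with hN
  have hNspec : 0 < N ∧ LoopSpecC q π s N := Nat.find_spec hex
  have hNle : N ≤ q - 1 := le_trans (Nat.find_min' hex ⟨hn₁pos, hn₁spec⟩) hn₁le
  have hN2 : 2 ≤ N := by
    by_contra hc
    have hN1 : N = 1 := by omega
    obtain ⟨σ, hper, hed, h0, t₁, ht₁, ht₁s⟩ := hNspec.2
    rw [hN1] at hper ht₁
    have : t₁ = 0 := by omega
    exact ht₁s (this ▸ h0)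
  have hstut : ∀ n, 0 < n → LoopSpecC q π s n → LoopSpecC q π s (n+1) := by
    rintro n hn ⟨σ, hper, hed, h0, t₁, ht₁, ht₁s⟩
    set τ : ℕ → ℕ := fun t => if t = 0 then s else σ (t-1) with hτ
    have hedges : ∀ t < n + 1, EdgeC q π (τ t) (τ (t+1)) := by
      intro t ht
      rcases Nat.eq_zero_or_pos t with h | h
      · subst h
        simp only [hτ, if_pos rfl, if_neg (Nat.one_ne_zero), Nat.sub_self]
        rw [h0]
        exact edge_ss q π s hq hoddq hπ hπinj hinv hs1 hs2 hs3
      · simp only [hτ, if_neg (by omega : ¬ t = 0), if_neg (by omega : ¬ t + 1 = 0)]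
        rw [(by omega : t + 1 - 1 = (t - 1) + 1)]
        exact hed (t-1)
    have hwrap : τ (n+1) = τ 0 := by
      simp only [hτ, if_neg (Nat.succ_ne_zero n), if_pos rfl, Nat.add_sub_cancel]
      rw [← zero_add n, hper 0, h0]
    obtain ⟨σ', hper', hed', hag⟩ := mk_loop q π τ (n+1) (by omega) hedges hwrap
    refine ⟨σ', hper', hed', by rw [hag 0 (by omega)]; simp [hτ], t₁ + 1, by omega, ?_⟩
    rw [hag (t₁+1) (by omega)]
    simp only [hτ, if_neg (Nat.succ_ne_zero t₁), Nat.add_sub_cancel]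
    exact ht₁s
  by_cases hsmall : N ≤ q - 2
  · left
    by_cases hodN : Odd N
    · exact ⟨N, hodN, hNspec.1, by omega, hNspec.2⟩
    · refine ⟨N+1, ?_, by omega, by omega, hstut N hNspec.1 hNspec.2⟩
      rcases Nat.even_or_odd N with h | h
      · exact h.add_one
      · exact absurd h hodN
  · -- N = q - 1 : the minimal loop is a Stefan cycle
    have hNq : N = q - 1 := by omega
    obtain ⟨ρ, hper, hed, h0, t₁, ht₁, ht₁s⟩ := hNspec.2
    rw [hNq] at hper ht₁
    have hρq : ρ (q-1) = s := by
      have := hper 0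
      rw [zero_add, h0] at this
      exact this
    have ha : ∀ t, 0 < t → t < q - 1 → ρ t ≠ s := by
      intro t₂ h2a h2b heq
      rcases Nat.lt_or_ge t₁ t₂ with hlt | hge
      · obtain ⟨σ', hper', hed', hag⟩ := mk_loop q π ρ t₂ (by omega)
          (fun t _ => hed t) (by rw [heq, h0])
        exact absurd ⟨h2a, σ', hper', hed', by rw [hag 0 (by omega), h0],
          t₁, hlt, by rw [hag t₁ (by omega)]; exact ht₁s⟩ (Nat.find_min hex (by omega))
      · have hne : t₂ ≠ t₁ := fun h => ht₁s (h ▸ heq)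
        have hlt : t₂ < t₁ := by omega
        obtain ⟨σ', hper', hed', hag⟩ := mk_loop q π (fun t => ρ (t₂ + t)) (q-1-t₂)
          (by omega) (fun t _ => by
            rw [(by omega : t₂ + (t + 1) = (t₂ + t) + 1)]
            exact hed (t₂ + t))
          (by rw [(by omega : t₂ + (q - 1 - t₂) = q - 1), hρq, Nat.add_zero, heq])
        refine absurd ⟨by omega, σ', hper', hed', ?_, t₁ - t₂, by omega, ?_⟩
          (Nat.find_min hex (show q - 1 - t₂ < N by omega))
        · rw [hag 0 (by omega)]
          simp only [Nat.add_zero]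
          exact heq
        · rw [hag (t₁ - t₂) (by omega)]
          rw [(by omega : t₂ + (t₁ - t₂) = t₁)]
          exact ht₁s
    have hb : ∀ i j, 1 ≤ i → i < j → j ≤ q - 2 → ρ i ≠ ρ j := by
      intro i j hi hij hj heq
      set τ : ℕ → ℕ := fun t => if t ≤ i then ρ t else ρ (t + (j - i)) with hτ
      set n' := q - 1 - (j - i) with hn'
      have hin' : i < n' := by omega
      have hedges : ∀ t < n', EdgeC q π (τ t) (τ (t+1)) := by
        intro t ht
        by_cases h1 : t + 1 ≤ i
        · simp only [hτ, if_pos (by omega : t ≤ i), if_pos h1]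
          exact hed t
        · by_cases h2 : t ≤ i
          · have hti : t = i := by omega
            simp only [hτ, if_pos h2, if_neg h1]
            rw [hti, heq, (by omega : i + 1 + (j - i) = j + 1)]
            exact hed j
          · simp only [hτ, if_neg h2, if_neg (by omega : ¬ t + 1 ≤ i)]
            rw [(by omega : t + 1 + (j - i) = (t + (j - i)) + 1)]
            exact hed (t + (j - i))
      have hwrap : τ n' = τ 0 := by
        simp only [hτ, if_neg (by omega : ¬ n' ≤ i), if_pos (by omega : (0:ℕ) ≤ i)]
        rw [(by omega : n' + (j - i) = q - 1), hρq, h0]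
      obtain ⟨σ', hper', hed', hag⟩ := mk_loop q π τ n' (by omega) hedges hwrap
      refine absurd ⟨by omega, σ', hper', hed', ?_, i, hin', ?_⟩
        (Nat.find_min hex (show n' < N by omega))
      · rw [hag 0 (by omega)]
        simp only [hτ, if_pos (by omega : (0:ℕ) ≤ i)]
        exact h0
      · rw [hag i (by omega)]
        simp only [hτ, if_pos (le_refl i)]
        exact ha i (by omega) (by omega)
    right
    intro l hl
    set m := l - q + 1 with hm
    have hm3 : 3 ≤ m := by omega
    have hlm : l - m = q - 1 := by omega
    set τ : ℕ → ℕ := fun t => if t ≤ m then s else ρ (t - m) with hτ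
    have hedges : ∀ t < l, EdgeC q π (τ t) (τ (t+1)) := by
      intro t ht
      by_cases h1 : t + 1 ≤ m
      · simp only [hτ, if_pos (by omega : t ≤ m), if_pos h1]
        exact edge_ss q π s hq hoddq hπ hπinj hinv hs1 hs2 hs3
      · by_cases h2 : t ≤ m
        · have htm : t = m := by omega
          simp only [hτ, if_pos h2, if_neg h1]
          rw [(by omega : t + 1 - m = t - m + 1)]
          have : ρ (t - m) = s := by rw [htm, Nat.sub_self, h0]
          rw [← this]
          exact hed (t - m)
        · simp only [hτ, if_neg h2, if_neg (by omega : ¬ t + 1 ≤ m)]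
          rw [(by omega : t + 1 - m = (t - m) + 1)]
          exact hed (t - m)
    have hwrap : τ l = τ 0 := by
      simp only [hτ, if_neg (by omega : ¬ l ≤ m), if_pos (by omega : (0:ℕ) ≤ m)]
      rw [hlm, hρq]
    obtain ⟨σ', hper', hed', hag⟩ := mk_loop q π τ l (by omega) hedges hwrap
    have hlast : σ' (l-1) = ρ (q-2) := by
      rw [hag (l-1) (by omega)]
      simp only [hτ, if_neg (by omega : ¬ l - 1 ≤ m)]
      rw [(by omega : l - 1 - m = q - 2)]
    refine ⟨σ', hper', hed',
      by rw [hag 0 (by omega)]; simp [hτ],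
      by rw [hag 1 (by omega)]; simp only [hτ, if_pos (by omega : 1 ≤ m)],
      by rw [hag 2 (by omega)]; simp only [hτ, if_pos (by omega : 2 ≤ m)], ?_⟩
    intro r hr
    rw [hlast, hag r (by omega)]
    by_cases h1 : r ≤ m
    · simp only [hτ, if_pos h1]
      exact fun h => (ha (q-2) (by omega) (by omega)) h.symm
    · simp only [hτ, if_neg h1]
      have h2 : 1 ≤ r - m := by omega
      have h3 : r - m < q - 2 := by omega
      exact hb (r - m) (q-2) h2 h3 (by omega)

end Combo


/-- Main engine: a point of odd least period q ≥ 3 yields points of least period l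
for every l ≥ q + 2. -/
theorem thmS (a b : ℝ) (h : ℝ → ℝ) (hc : ContinuousOn h (Set.Icc a b))
    (hmaps : Set.MapsTo h (Set.Icc a b) (Set.Icc a b)) :
    ∀ q, 3 ≤ q → Odd q → ∀ x ∈ Set.Icc a b, Function.minimalPeriod h x = q →
    ∀ l, q + 2 ≤ l → ∃ y ∈ Set.Icc a b, Function.minimalPeriod h y = l := by
  intro q
  induction q using Nat.strong_induction_on with
  | _ q ih =>
  intro hq3 hodd x hx hmp l hl
  classical
  have hqpos : 0 < q := by omega
  have hxpp : x ∈ Function.periodicPts h := by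
    rw [← Function.minimalPeriod_pos_iff_mem_periodicPts, hmp]; omega
  have hxper : Function.IsPeriodicPt h q x := by
    rw [← hmp]; exact Function.isPeriodicPt_minimalPeriod h x
  have horb : ∀ i, h^[i] x ∈ Set.Icc a b := fun i => hmaps.iterate i hx
  -- the orbit as a Finset
  set P : Finset ℝ := (Finset.range q).image (fun i => h^[i] x) with hP
  have hiterinj : Set.InjOn (fun i => h^[i] x) (Set.Iio q) := by
    rw [← hmp]; exact Function.iterate_injOn_Iio_minimalPeriod
  have hPcard : P.card = q := by
    rw [hP, Finset.card_image_of_injOn, Finset.card_range]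
    intro i hi' j hj' hij
    exact hiterinj (by simpa using hi') (by simpa using hj') hij
  set e := P.orderIsoOfFin hPcard with he
  set E : ℕ → ℝ := fun i => if hi : i < q then (e ⟨i, hi⟩ : ℝ) else 0 with hE
  have hEP : ∀ i, i < q → E i ∈ P := by
    intro i hi
    simp only [hE, dif_pos hi]
    exact (e ⟨i, hi⟩).2
  have hEltE : ∀ i j, i < j → j < q → E i < E j := by
    intro i j hij hj
    simp only [hE, dif_pos (by omega : i < q), dif_pos hj]
    have : (⟨i, by omega⟩ : Fin q) < ⟨j, hj⟩ := by
      simp [Fin.lt_def]; omega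
    exact Subtype.coe_lt_coe.mpr (e.strictMono this)
  have hEle : ∀ i j, i ≤ j → j < q → E i ≤ E j := by
    intro i j hij hj
    rcases eq_or_lt_of_le hij with hh | hh
    · exact le_of_eq (by rw [hh])
    · exact le_of_lt (hEltE i j hh hj)
  have hEinj : ∀ i j, i < q → j < q → E i = E j → i = j := by
    intro i j hi hj hij
    rcases Nat.lt_trichotomy i j with hh | hh | hh
    · exact absurd hij (ne_of_lt (hEltE i j hh hj))
    · exact hh
    · exact absurd hij.symm (ne_of_lt (hEltE j i hh hi))
  have hEsurj : ∀ z ∈ P, ∃ i, i < q ∧ E i = z := by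
    intro z hz
    refine ⟨(e.symm ⟨z, hz⟩ : Fin q).1, (e.symm ⟨z, hz⟩ : Fin q).2, ?_⟩
    simp only [hE, dif_pos (e.symm ⟨z, hz⟩ : Fin q).2]
    rw [Fin.eta]
    rw [OrderIso.apply_symm_apply]
  have hPIcc : ∀ z ∈ P, z ∈ Set.Icc a b := by
    intro z hz
    rw [hP, Finset.mem_image] at hz
    obtain ⟨i, _, rfl⟩ := hz
    exact horb i
  have hPinv : ∀ z ∈ P, h z ∈ P := by
    intro z hz
    rw [hP, Finset.mem_image] at hz ⊢
    obtain ⟨i, hi, rfl⟩ := hz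
    rw [Finset.mem_range] at hi
    rcases Nat.lt_or_ge (i+1) q with h' | h'
    · exact ⟨i+1, Finset.mem_range.mpr h', Function.iterate_succ_apply' h i x⟩
    · refine ⟨0, Finset.mem_range.mpr hqpos, ?_⟩
      rw [Function.iterate_zero, id_eq, ← Function.iterate_succ_apply' h i x,
        (show i.succ = q by omega)]
      exact hxper.symm
  have hPmp : ∀ z ∈ P, Function.minimalPeriod h z = q := by
    intro z hz
    rw [hP, Finset.mem_image] at hz
    obtain ⟨i, _, rfl⟩ := hz
    rw [Function.minimalPeriod_apply_iterate hxpp, hmp]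
  have hPNoSmall : ∀ z ∈ P, ∀ k, 0 < k → k < q → h^[k] z ≠ z := by
    intro z hz k hk1 hk2 heq
    have := Function.IsPeriodicPt.minimalPeriod_le hk1 heq
    rw [hPmp z hz] at this
    omega
  have hPhinj : ∀ z ∈ P, ∀ w ∈ P, h z = h w → z = w := by
    intro z hz w hw heq
    rw [hP, Finset.mem_image] at hz hw
    obtain ⟨i, hi, rfl⟩ := hz
    obtain ⟨j, hj, rfl⟩ := hw
    rw [Finset.mem_range] at hi hj
    rw [← Function.iterate_succ_apply' h i x, ← Function.iterate_succ_apply' h j x] at heq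
    have key : ∀ c : ℕ, c < q → h^[c] x = h^[q-1] (h^[c+1] x) := by
      intro c hc
      rw [← Function.iterate_add_apply, (by omega : q - 1 + (c+1) = c + q),
        Function.iterate_add_apply, hxper]
    rw [key i hi, key j hj, heq]
  -- the permutation on indices
  have hPinvE : ∀ i, i < q → h (E i) ∈ P := fun i hi => hPinv _ (hEP i hi)
  set π : ℕ → ℕ := fun i => if hi : i < q then
      ((e.symm ⟨h (E i), hPinvE i hi⟩ : Fin q) : ℕ) else 0 with hπd
  have hπlt : ∀ i, i < q → π i < q := by
    intro i hi
    simp only [hπd, dif_pos hi]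
    exact (e.symm ⟨h (E i), hPinvE i hi⟩).2
  have hπE : ∀ i, i < q → E (π i) = h (E i) := by
    intro i hi
    simp only [hπd, dif_pos hi]
    have h2 := (e.symm ⟨h (E i), hPinvE i hi⟩).2
    simp only [hE, dif_pos h2]
    rw [dif_pos h2, Fin.eta, OrderIso.apply_symm_apply]
  have hπinj : ∀ i, i < q → ∀ j, j < q → π i = π j → i = j := by
    intro i hi j hj hij
    have : h (E i) = h (E j) := by
      rw [← hπE i hi, ← hπE j hj, hij]
    exact hEinj i j hi hj (hPhinj _ (hEP i hi) _ (hEP j hj) this)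
  have hπne : ∀ i, i < q → π i ≠ i := by
    intro i hi heq
    have hfix : h (E i) = E i := by rw [← hπE i hi, heq]
    have h1 : Function.IsPeriodicPt h 1 (E i) := by
      simp [Function.IsPeriodicPt, Function.IsFixedPt, hfix]
    have := Function.IsPeriodicPt.minimalPeriod_le one_pos h1
    rw [hPmp _ (hEP i hi)] at this
    omega
  have hinvT : ∀ T : Finset ℕ, T ⊆ Finset.range q → (∀ i ∈ T, π i ∈ T) →
      T.Nonempty → T = Finset.range q := by
    intro T hTsub hTinv ⟨i₀, hi₀⟩
    have hi₀q : i₀ < q := Finset.mem_range.mp (hTsub hi₀)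
    have key : ∀ t : ℕ, ∃ i ∈ T, E i = h^[t] (E i₀) := by
      intro t
      induction t with
      | zero => exact ⟨i₀, hi₀, rfl⟩
      | succ t iht =>
        obtain ⟨i, hiT, hiE⟩ := iht
        have hiq : i < q := Finset.mem_range.mp (hTsub hiT)
        exact ⟨π i, hTinv i hiT, by
          rw [hπE i hiq, hiE, Function.iterate_succ_apply' h t (E i₀)]⟩
    refine Finset.Subset.antisymm hTsub (fun j hj => ?_)
    rw [Finset.mem_range] at hj
    -- E j = h^[t] (E i₀) for suitable t
    obtain ⟨c, hc, hcE⟩ : ∃ c, c < q ∧ h^[c] x = E i₀ := by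
      have := hEP i₀ hi₀q
      rw [hP, Finset.mem_image] at this
      obtain ⟨c, hc, hcE⟩ := this
      exact ⟨c, Finset.mem_range.mp hc, hcE⟩
    obtain ⟨d, hd, hdE⟩ : ∃ d, d < q ∧ h^[d] x = E j := by
      have := hEP j hj
      rw [hP, Finset.mem_image] at this
      obtain ⟨d, hd, hdE⟩ := this
      exact ⟨d, Finset.mem_range.mp hd, hdE⟩
    obtain ⟨i, hiT, hiE⟩ := key (q + d - c)
    have : E i = E j := by
      rw [hiE, ← hcE, ← Function.iterate_add_apply, (by omega : q + d - c + c = d + q),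
        Function.iterate_add_apply, hxper, hdE]
    have hiq : i < q := Finset.mem_range.mp (hTsub hiT)
    rwa [← hEinj i j hiq hj this]
  -- the switch index s
  set s : ℕ := Nat.findGreatest (fun i => i < π i) (q-2) with hs
  have hπ0 : 0 < π 0 := by
    have := hπne 0 hqpos
    omega
  have hs2 : s < π s := by
    have := Nat.findGreatest_spec (P := fun i => i < π i) (m := 0) (n := q - 2)
      (by omega) hπ0
    rw [hs]
    exact this
  have hsle : s ≤ q - 2 := Nat.findGreatest_le _
  have hs1 : s + 1 ≤ q - 1 := by omega
  have hsabove : ∀ i, s < i → i < q → π i < i := by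
    intro i hi hiq
    rcases Nat.lt_or_ge i (q-1) with h' | h'
    · have h2 : ¬ (i < π i) := by
        apply Nat.findGreatest_is_greatest (P := fun i => i < π i) (n := q - 2)
        · rw [← hs]; exact hi
        · omega
      have hne := hπne i hiq
      omega
    · have : i = q - 1 := by omega
      have hne := hπne i hiq
      have := hπlt i hiq
      omega
  have hs3 : π (s+1) ≤ s := by
    have := hsabove (s+1) (by omega) (by omega)
    omega
  -- edges give coverings
  have hIccab : ∀ i, i + 1 ≤ q - 1 → Set.Icc (E i) (E (i+1)) ⊆ Set.Icc a b := by
    intro i hi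
    have h1 := hPIcc _ (hEP i (by omega))
    have h2 := hPIcc _ (hEP (i+1) (by omega))
    intro z hz
    exact ⟨le_trans h1.1 hz.1, le_trans hz.2 h2.2⟩
  have hcover : ∀ i j, EdgeC q π i j →
      Set.Icc (E j) (E (j+1)) ⊆ h '' Set.Icc (E i) (E (i+1)) := by
    intro i j ⟨hi, hj, hmin, hmax⟩
    have hiq : i < q := by omega
    have hi1q : i + 1 < q := by omega
    have hπiq := hπlt i hiq
    have hπi1q := hπlt (i+1) hi1q
    have hsub : Set.Icc (E j) (E (j+1)) ⊆
        Set.Icc (E (min (π i) (π (i+1)))) (E (max (π i) (π (i+1)))) := by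
      intro z hz
      constructor
      · exact le_trans (hEle _ j hmin (by omega)) hz.1
      · have hmaxq : max (π i) (π (i+1)) < q := by
          rcases max_choice (π i) (π (i+1)) with hh | hh <;> omega
        exact le_trans hz.2 (hEle (j+1) _ hmax hmaxq)
    refine hsub.trans ?_
    have hcont : ContinuousOn h (Set.Icc (E i) (E (i+1))) := hc.mono (hIccab i hi)
    rcases le_total (π i) (π (i+1)) with hh | hh
    · rw [min_eq_left hh, max_eq_right hh, hπE i hiq, hπE (i+1) hi1q]
      exact intermediate_value_Icc (hEle i (i+1) (by omega) hi1q) hcont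
    · rw [min_eq_right hh, max_eq_left hh, hπE i hiq, hπE (i+1) hi1q]
      exact intermediate_value_Icc' (hEle i (i+1) (by omega) hi1q) hcont
  -- follow a loop
  have hALT : ∀ (n : ℕ), 0 < n → ∀ (σ : ℕ → ℕ), (∀ t, σ (t + n) = σ t) →
      (∀ t, EdgeC q π (σ t) (σ (t+1))) →
      ∃ y ∈ Set.Icc (E (σ 0)) (E (σ 0 + 1)), h^[n] y = y ∧
        ∀ t ≤ n, h^[t] y ∈ Set.Icc (E (σ t)) (E (σ t + 1)) := by
    intro n hn σ hper hed
    have hvert : ∀ t, σ t + 1 ≤ q - 1 := fun t => (hed t).1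
    have := loop_follow h n hn (fun t => E (σ t)) (fun t => E (σ t + 1))
      (fun t => hEle (σ t) (σ t + 1) (by omega) (by have := hvert t; omega))
      (by rw [← zero_add n, hper 0])
      (by rw [← zero_add n, hper 0])
      (fun t _ => ⟨hc.mono (hIccab (σ t) (hvert t)), hcover (σ t) (σ (t+1)) (hed t)⟩)
    exact this
  -- distinct gap-intervals meet only in P
  have hIsect : ∀ i j z, i + 1 ≤ q - 1 → j + 1 ≤ q - 1 → i ≠ j →
      z ∈ Set.Icc (E i) (E (i+1)) → z ∈ Set.Icc (E j) (E (j+1)) → z ∈ P := by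
    intro i j z hi hj hij hzi hzj
    rcases Nat.lt_or_ge i j with hh | hh
    · have : z = E j := le_antisymm
        (le_trans hzi.2 (hEle (i+1) j hh (by omega))) hzj.1
      rw [this]; exact hEP j (by omega)
    · have hh' : j < i := by omega
      have : z = E i := le_antisymm
        (le_trans hzj.2 (hEle (j+1) i hh' (by omega))) hzi.1
      rw [this]; exact hEP i (by omega)
  -- points of P in J are E s or E (s+1)
  have hJP : ∀ z ∈ P, z ∈ Set.Icc (E s) (E (s+1)) → z = E s ∨ z = E (s+1) := by
    intro z hz hzJ
    obtain ⟨i, hiq, rfl⟩ := hEsurj z hz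
    rcases Nat.lt_or_ge i (s+1) with hh | hh
    · rcases Nat.lt_or_ge i s with hh' | hh'
      · exact absurd hzJ.1 (not_le.mpr (hEltE i s hh' (by omega)))
      · left; rw [(by omega : i = s)]
    · rcases Nat.lt_or_ge (s+1) i with hh' | hh'
      · exact absurd hzJ.2 (not_le.mpr (hEltE (s+1) i hh' hiq))
      · right; rw [(by omega : i = s + 1)]
    -- apply the combinatorial dichotomy
  rcases dichotomyC q π s hq3 hodd hπlt hπinj hinvT hs1 hs2 hs3 with
    ⟨k, hkodd, hkpos, hklt, σ, hper, hed, hσ0, t₁, ht₁, ht₁s⟩ | hB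
  · -- Branch A : a shorter odd period exists, use induction
    obtain ⟨y, hyJ, hyk, hyit⟩ := hALT k hkpos σ hper hed
    have hyIcc : y ∈ Set.Icc a b := (hIccab (σ 0) (hed 0).1) hyJ
    have hyper : Function.IsPeriodicPt h k y := hyk
    have hynotP : y ∉ P := fun hyP => hPNoSmall y hyP k hkpos hklt hyk
    set d := Function.minimalPeriod h y with hd
    have hdpos : 0 < d := hyper.minimalPeriod_pos hkpos
    have hddvd : d ∣ k := hyper.minimalPeriod_dvd
    have hdne1 : d ≠ 1 := by
      intro h1
      have hfix : h y = y := by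
        have h2 := Function.iterate_minimalPeriod (f := h) (x := y)
        rw [← hd, h1, Function.iterate_one] at h2
        exact h2
      have hall : ∀ t, h^[t] y = y := fun t => Function.iterate_fixed hfix t
      apply hynotP
      apply hIsect (σ t₁) (σ 0) y (hed t₁).1 (hed 0).1 (by rw [hσ0]; exact ht₁s)
      · rw [← hall t₁]; exact hyit t₁ (by omega)
      · rw [← hall 0]; exact hyit 0 (by omega)
    have hdodd : Odd d := by
      rcases Nat.even_or_odd d with hev | hod
      · exfalso
        obtain ⟨c, hc⟩ := hddvd
        have : Even k := hc ▸ hev.mul_right c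
        exact (Nat.not_odd_iff_even.mpr this) hkodd
      · exact hod
    have hd3 : 3 ≤ d := by
      obtain ⟨c, hc⟩ := hdodd
      omega
    have hdlt : d < q := lt_of_le_of_lt (Nat.le_of_dvd hkpos hddvd) hklt
    exact ih d hdlt hd3 hdodd y hyIcc hd.symm l (by omega)
  · -- Branch B : construct a point of least period exactly l
    obtain ⟨σ, hper, hed, hσ0, hσ1, hσ2, hdist⟩ := hB l hl
    have hlpos : 0 < l := by omega
    obtain ⟨y, hyJ, hyl, hyit⟩ := hALT l hlpos σ hper hed
    have hyIcc : y ∈ Set.Icc a b := (hIccab (σ 0) (hed 0).1) hyJ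
    refine ⟨y, hyIcc, ?_⟩
    have hyper : Function.IsPeriodicPt h l y := hyl
    set d := Function.minimalPeriod h y with hd
    have hdpos : 0 < d := hyper.minimalPeriod_pos hlpos
    have hddvd : d ∣ l := hyper.minimalPeriod_dvd
    rcases Nat.lt_or_ge d l with hdl | hdl
    · exfalso
      have hyP : y ∈ P := by
        by_contra hyQ
        obtain ⟨c, hc⟩ := hddvd
        have hc0 : c ≠ 0 := by rintro rfl; omega
        have hc1 : c ≠ 1 := by rintro rfl; rw [Nat.mul_one] at hc; omega
        have hc2 : 2 ≤ c := by omega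
        have h2d : 2 * d ≤ l := by
          calc 2 * d = d * 2 := by ring
          _ ≤ d * c := Nat.mul_le_mul_left d hc2
          _ = l := hc.symm
        set r := (l - 1) % d with hr
        have hrd : r < d := Nat.mod_lt _ hdpos
        have hrl : r < l - 1 := by omega
        have heqit : h^[r] y = h^[l-1] y := by
          rw [hr, hd]
          exact Function.iterate_mod_minimalPeriod_eq
        have hmem1 : h^[l-1] y ∈ Set.Icc (E (σ (l-1))) (E (σ (l-1) + 1)) :=
          hyit (l-1) (by omega)
        have hmem2 : h^[l-1] y ∈ Set.Icc (E (σ r)) (E (σ r + 1)) := by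
          rw [← heqit]; exact hyit r (by omega)
        have hzP : h^[l-1] y ∈ P := hIsect (σ (l-1)) (σ r) _ (hed (l-1)).1 (hed r).1
          (fun hh => (hdist r hrl) hh.symm) hmem1 hmem2
        apply hyQ
        have hstep : h (h^[l-1] y) = y := by
          rw [← Function.iterate_succ_apply' h (l-1) y, (show (l-1).succ = l by omega)]
          exact hyl
        rw [← hstep]
        exact hPinv _ hzP
      -- y is an orbit point : contradiction via invariance of {s, s+1}
      have hmem0 : y ∈ Set.Icc (E s) (E (s+1)) := by
        have h2 := hyit 0 (by omega)
        rwa [Function.iterate_zero, id_eq, hσ0] at h2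
      have hmem1 : h y ∈ Set.Icc (E s) (E (s+1)) := by
        have h2 := hyit 1 (by omega)
        rwa [Function.iterate_one, hσ1] at h2
      have hmem2 : h (h y) ∈ Set.Icc (E s) (E (s+1)) := by
        have h2 := hyit 2 (by omega)
        rw [hσ2] at h2
        exact h2
      have hy1P : h y ∈ P := hPinv y hyP
      have hy2P : h (h y) ∈ P := hPinv _ hy1P
      -- identify the indices
      have hidx : ∀ z ∈ P, z ∈ Set.Icc (E s) (E (s+1)) →
          ∃ i, (i = s ∨ i = s + 1) ∧ z = E i := by
        intro z hz hzJ
        rcases hJP z hz hzJ with hh | hh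
        · exact ⟨s, Or.inl rfl, hh⟩
        · exact ⟨s+1, Or.inr rfl, hh⟩
      obtain ⟨i₀, hi₀, hyE⟩ := hidx y hyP hmem0
      have hi₀q : i₀ < q := by rcases hi₀ with rfl | rfl <;> omega
      obtain ⟨i₁, hi₁, hyE1⟩ := hidx (h y) hy1P hmem1
      have hi₁q : i₁ < q := by rcases hi₁ with rfl | rfl <;> omega
      obtain ⟨i₂, hi₂, hyE2⟩ := hidx (h (h y)) hy2P hmem2
      have hπi₀ : π i₀ = i₁ := by
        apply hEinj _ _ (hπlt i₀ hi₀q) hi₁q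
        rw [hπE i₀ hi₀q, ← hyE, hyE1]
      have hπi₁ : π i₁ = i₂ := by
        have hi₂q : i₂ < q := by rcases hi₂ with rfl | rfl <;> omega
        apply hEinj _ _ (hπlt i₁ hi₁q) hi₂q
        rw [hπE i₁ hi₁q, ← hyE1, hyE2]
      have hps : π s = s + 1 ∧ π (s+1) = s := by
        have hi₂' : i₂ = s ∨ i₂ = s + 1 := hi₂
        rcases hi₀ with h₀ | h₀
        · have h1 : π s = s + 1 := by
            have h3 := hπi₀; rw [h₀] at h3
            rcases hi₁ with h' | h' <;> omega
          have h2 : π (s+1) = s := by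
            have h3 := hπi₁
            have hi₁v : i₁ = s + 1 := by
              have h4 := hπi₀; rw [h₀, h1] at h4; omega
            rw [hi₁v] at h3
            rcases hi₂' with h' | h' <;> omega
          exact ⟨h1, h2⟩
        · have h2 : π (s+1) = s := by
            have h3 := hπi₀; rw [h₀] at h3
            rcases hi₁ with h' | h' <;> omega
          have h1 : π s = s + 1 := by
            have h3 := hπi₁
            have hi₁v : i₁ = s := by
              have h4 := hπi₀; rw [h₀, h2] at h4; omega
            rw [hi₁v] at h3
            rcases hi₂' with h' | h' <;> omega
          exact ⟨h1, h2⟩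
      have hT := hinvT {s, s+1}
        (by intro i hi'
            simp only [Finset.mem_insert, Finset.mem_singleton] at hi'
            rw [Finset.mem_range]
            rcases hi' with rfl | rfl <;> omega)
        (by intro i hi'
            simp only [Finset.mem_insert, Finset.mem_singleton] at hi' ⊢
            rcases hi' with rfl | rfl
            · right; exact hps.1
            · left; exact hps.2)
        ⟨s, by simp⟩
      have hcard2 : ({s, s+1} : Finset ℕ).card = 2 := by
        rw [Finset.card_insert_of_notMem (by simp), Finset.card_singleton]
      rw [hT, Finset.card_range] at hcard2
      omega
    · have : d = l := le_antisymm (Nat.le_of_dvd hlpos hddvd) hdl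
      rw [hd] at this
      exact this


/-- If f has a periodic point of least period 2m with m ≥ 3 odd, then f has
a periodic point of least period 2(m+2). -/
theorem stmt_10 (a b : ℝ) (hab : a ≤ b) (f : ℝ → ℝ)
    (hf : ContinuousOn f (Set.Icc a b))
    (hmaps : Set.MapsTo f (Set.Icc a b) (Set.Icc a b))
    (m : ℕ) (hm : 3 ≤ m) (hodd : Odd m)
    (hx : ∃ x ∈ Set.Icc a b, f^[2 * m] x = x ∧
      ∀ i, 0 < i → i < 2 * m → f^[i] x ≠ x) :
    ∃ y ∈ Set.Icc a b, f^[2 * (m + 2)] y = y ∧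
      ∀ i, 0 < i → i < 2 * (m + 2) → f^[i] y ≠ y := by
  obtain ⟨x, hxI, hxper, hxleast⟩ := hx
  have hper : Function.IsPeriodicPt f (2*m) x := hxper
  have hmpx : Function.minimalPeriod f x = 2*m := by
    have hle := hper.minimalPeriod_le (by omega)
    have hpos := hper.minimalPeriod_pos (by omega)
    rcases Nat.lt_or_ge (Function.minimalPeriod f x) (2*m) with hlt | hge
    · exact absurd Function.iterate_minimalPeriod (hxleast _ hpos hlt)
    · omega
  -- the second iterate
  set g := f^[2] with hg
  have hgc : ContinuousOn g (Set.Icc a b) := by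
    have h2 : ContinuousOn (f ∘ f) (Set.Icc a b) := hf.comp hf hmaps
    exact h2
  have hgm : Set.MapsTo g (Set.Icc a b) (Set.Icc a b) := hmaps.iterate 2
  have hmpg : Function.minimalPeriod g x = m := by
    rw [hg, Function.minimalPeriod_iterate_eq_div_gcd (by omega : (2:ℕ) ≠ 0), hmpx]
    have hgcd : Nat.gcd (2*m) 2 = 2 :=
      Nat.dvd_antisymm (Nat.gcd_dvd_right _ _) (Nat.dvd_gcd ⟨m, rfl⟩ dvd_rfl)
    rw [hgcd]
    omega
  obtain ⟨y, hyI, hy⟩ := thmS a b g hgc hgm m hm hodd x hxI hmpg (m+2) (by omega)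
  have hyperf : Function.IsPeriodicPt f (2*(m+2)) y := by
    show f^[2*(m+2)] y = y
    rw [Function.iterate_mul]
    show g^[m+2] y = y
    rw [← hy]
    exact Function.iterate_minimalPeriod
  set n := Function.minimalPeriod f y with hn
  have hnd : n ∣ 2*(m+2) := hyperf.minimalPeriod_dvd
  have hnpos : 0 < n := hyperf.minimalPeriod_pos (by omega)
  have hgy : Function.minimalPeriod g y = n / Nat.gcd n 2 := by
    rw [hg, Function.minimalPeriod_iterate_eq_div_gcd (by omega : (2:ℕ) ≠ 0), hn]
  rcases Nat.even_or_odd n with hev | hodn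
  · -- n even : n = 2(m+2) and y itself works
    have hgcd : Nat.gcd n 2 = 2 :=
      Nat.dvd_antisymm (Nat.gcd_dvd_right _ _)
        (Nat.dvd_gcd (even_iff_two_dvd.mp hev) dvd_rfl)
    have hdiv : n / 2 = m + 2 := by
      have h2' := hgy
      rw [hy, hgcd] at h2'
      omega
    have h2n : 2 ∣ n := even_iff_two_dvd.mp hev
    have hn2 : n = 2*(m+2) := by omega
    refine ⟨y, hyI, hyperf, ?_⟩
    intro i hi1 hi2 heq
    have hle := Function.IsPeriodicPt.minimalPeriod_le hi1 (heq : Function.IsPeriodicPt f i y)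
    rw [← hn] at hle
    omega
  · -- n odd : n = m+2, apply the engine to f itself
    have hgcd : Nat.gcd n 2 = 1 := by
      have hd := Nat.gcd_dvd_right n 2
      rcases (Nat.dvd_prime Nat.prime_two).mp hd with h1 | h1
      · exact h1
      · exfalso
        have h2 : 2 ∣ n := h1 ▸ Nat.gcd_dvd_left n 2
        obtain ⟨c, hc⟩ := h2
        obtain ⟨c', hc'⟩ := hodn
        omega
    have hnm : n = m + 2 := by
      have h2 := hgy
      rw [hy, hgcd, Nat.div_one] at h2
      omega
    have hmp2odd : Odd (m+2) := by
      obtain ⟨c, hc⟩ := hodd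
      exact ⟨c+1, by omega⟩
    obtain ⟨y', hy'I, hy'⟩ := thmS a b f hf hmaps (m+2) (by omega) hmp2odd y hyI
      (by rw [← hn]; exact hnm) (2*(m+2)) (by omega)
    refine ⟨y', hy'I, ?_, ?_⟩
    · rw [← hy']
      exact Function.iterate_minimalPeriod
    · intro i hi1 hi2 heq
      have hle := Function.IsPeriodicPt.minimalPeriod_le hi1
        (heq : Function.IsPeriodicPt f i y')
      omega
end
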